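/- arXiv:2404.13668 — 9 statements merged into one kernel-verified Lean document; each statement's English description precedes it below -/
import Mathlib

section
/- Let p ∈ (1,∞) and let φ : ℝ → ℝ be nondecreasing with φ(0) = 0 and |φ(t) − φ(s)| ≤ |t − s| for all s, t. Then for all real numbers z₁, z₂ and A := φ(x₁ − x₂) − φ(y₁ − y₂) with z₁ = x₁ − y₁, z₂ = x₂ − y₂ (for any reals x₁,x₂,y₁,y₂), one has |z₁ − A|^p + |z₂ + A|^p ≤ |z₁|^p + |z₂|^p. Equivalently: if a, b, A ∈ ℝ satisfy 0 ≤ A ≤ a − b whenever a ≥ b (and a − b ≤ A ≤ 0 whenever a ≤ b), then |a − A|^p + |b + A|^p ≤ |a|^p + |b|^p. -/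
open Set

lemma aux_convexOn_abs_rpow {p : ℝ} (hp : 1 ≤ p) :
    ConvexOn ℝ univ (fun x : ℝ => |x| ^ p) := by
  refine ⟨convex_univ, fun x _ y _ θ η hθ hη hθη => ?_⟩
  have h1 : |θ • x + η • y| ^ p ≤ (θ * |x| + η * |y|) ^ p := by
    apply Real.rpow_le_rpow (abs_nonneg _) _ (le_trans zero_le_one hp)
    calc |θ • x + η • y| ≤ |θ • x| + |η • y| := abs_add_le _ _
      _ = θ * |x| + η * |y| := by
          rw [smul_eq_mul, smul_eq_mul, abs_mul, abs_mul, abs_of_nonneg hθ,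
            abs_of_nonneg hη]
  refine h1.trans ?_
  have := (convexOn_rpow hp).2 (abs_nonneg x) (abs_nonneg y) hθ hη hθη
  simpa using this

lemma aux_key {p : ℝ} (hp : 1 < p) (a b A : ℝ) (hba : b ≤ a) (hA0 : 0 ≤ A)
    (hAab : A ≤ a - b) :
    |a - A| ^ p + |b + A| ^ p ≤ |a| ^ p + |b| ^ p := by
  rcases eq_or_lt_of_le hba with heq | hlt
  · have : A = 0 := le_antisymm (by linarith) hA0
    subst this heq
    simp
  · set d := a - b with hd
    have hd0 : 0 < d := by simp [hd]; linarith
    set θ := A / d with hθdef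
    have hθ0 : 0 ≤ θ := div_nonneg hA0 hd0.le
    have hθ1 : θ ≤ 1 := by
      rw [hθdef, div_le_one hd0]; linarith
    have hAθ : A = θ * d := by rw [hθdef, div_mul_cancel₀ A hd0.ne']
    have hconv := aux_convexOn_abs_rpow hp.le
    have e1 : a - A = θ • b + (1 - θ) • a := by
      simp only [smul_eq_mul]; rw [hAθ]; ring
    have e2 : b + A = (1 - θ) • b + θ • a := by
      simp only [smul_eq_mul]; rw [hAθ]; ring
    have c1 := hconv.2 (mem_univ b) (mem_univ a) hθ0
      (show (0:ℝ) ≤ 1 - θ by linarith) (show θ + (1 - θ) = 1 by ring)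
    have c2 := hconv.2 (mem_univ b) (mem_univ a)
      (show (0:ℝ) ≤ 1 - θ by linarith) hθ0 (show (1 - θ) + θ = 1 by ring)
    simp only [smul_eq_mul] at c1 c2
    simp only [smul_eq_mul] at e1 e2
    rw [← e1] at c1
    rw [← e2] at c2
    calc |a - A| ^ p + |b + A| ^ p
        ≤ (θ * |b| ^ p + (1 - θ) * |a| ^ p) + ((1 - θ) * |b| ^ p + θ * |a| ^ p) := by
          exact add_le_add c1 c2
      _ = |a| ^ p + |b| ^ p := by ring

/-- For `p ∈ (1,∞)`, if `A` lies between `0` and `a - b` (inclusive), then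
`|a - A|^p + |b + A|^p ≤ |a|^p + |b|^p`. -/
theorem stmt_0 (p : ℝ) (hp : 1 < p) (a b A : ℝ)
    (h1 : b ≤ a → 0 ≤ A ∧ A ≤ a - b)
    (h2 : a ≤ b → a - b ≤ A ∧ A ≤ 0) :
    |a - A| ^ p + |b + A| ^ p ≤ |a| ^ p + |b| ^ p := by
  rcases le_total b a with hba | hab
  · obtain ⟨hA0, hAab⟩ := h1 hba
    exact aux_key hp a b A hba hA0 hAab
  · obtain ⟨hAab, hA0⟩ := h2 hab
    have := aux_key hp b a (-A) hab (by linarith) (by linarith)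
    have e1 : b - -A = b + A := by ring
    have e2 : a + -A = a - A := by ring
    rw [e1, e2] at this
    linarith
end

section
/- Let p ∈ (1,2] and define ψ_p : (0,∞) → ℝ by ψ_p(s) = (1+s)^{p−1} + sgn(1−s)|1−s|^{p−1}. Then for all x, y ∈ ℝ, |x+y|^p + |x−y|^p = sup over s > 0 of (ψ_p(s)|x|^p + ψ_p(1/s)|y|^p). In particular, for every s > 0, ψ_p(s)|x|^p + ψ_p(1/s)|y|^p ≤ |x+y|^p + |x−y|^p. -/
open Real Set

/-- sign x * x = |x| -/
private lemma bcl_sign_mul_self (x : ℝ) : Real.sign x * x = |x| := by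
  rcases lt_trichotomy x 0 with h | h | h
  · rw [Real.sign_of_neg h, abs_of_neg h]; ring
  · simp [h]
  · rw [Real.sign_of_pos h, abs_of_pos h]; ring

/-- concave difference inequality for rpow with exponent in (0,1] -/
private lemma bcl_concave_diff {q : ℝ} (hq0 : 0 < q) (hq1 : q ≤ 1) {c C δ : ℝ}
    (hc : 0 ≤ c) (hcC : c ≤ C) (hδ : 0 ≤ δ) :
    (C + δ) ^ q + c ^ q ≤ C ^ q + (c + δ) ^ q := by
  rcases eq_or_lt_of_le hδ with rfl | hδ'
  · simp
  have hD : 0 < C + δ - c := by linarith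
  set l := δ / (C + δ - c) with hl
  set m := (C - c) / (C + δ - c) with hm
  have hl0 : 0 ≤ l := div_nonneg hδ hD.le
  have hm0 : 0 ≤ m := div_nonneg (by linarith) hD.le
  have hlm : l + m = 1 := by rw [hl, hm]; field_simp; ring
  have hcon := Real.concaveOn_rpow hq0.le hq1
  have hmem1 : c ∈ Set.Ici (0:ℝ) := hc
  have hmem2 : C + δ ∈ Set.Ici (0:ℝ) := by simp only [Set.mem_Ici]; linarith
  have h1 := hcon.2 hmem1 hmem2 hl0 hm0 hlm
  have h2 := hcon.2 hmem1 hmem2 hm0 hl0 (by linarith)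
  simp only [smul_eq_mul] at h1 h2
  have e1 : l * c + m * (C + δ) = C := by rw [hl, hm]; field_simp; ring
  have e2 : m * c + l * (C + δ) = c + δ := by rw [hl, hm]; field_simp; ring
  rw [e1] at h1
  rw [e2] at h2
  have e3 : c ^ q + (C + δ) ^ q
      = (l * c ^ q + m * (C + δ) ^ q) + (m * c ^ q + l * (C + δ) ^ q) := by
    linear_combination (c ^ q + (C + δ) ^ q) * hlm.symm
  linarith
/-- the BCL weight function -/
noncomputable def bclPsi (p s : ℝ) : ℝ :=
  (1 + s) ^ (p - 1) + Real.sign (1 - s) * |1 - s| ^ (p - 1)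

private lemma bclPsi_of_le {p s : ℝ} (hp : 0 < p - 1) (h : s ≤ 1) :
    bclPsi p s = (1 + s) ^ (p - 1) + (1 - s) ^ (p - 1) := by
  rcases eq_or_lt_of_le h with rfl | h'
  · simp [bclPsi, Real.sign_zero, Real.zero_rpow hp.ne']
  · rw [bclPsi, Real.sign_of_pos (by linarith), abs_of_pos (by linarith), one_mul]

private lemma bclPsi_of_ge {p s : ℝ} (hp : 0 < p - 1) (h : 1 ≤ s) :
    bclPsi p s = (1 + s) ^ (p - 1) - (s - 1) ^ (p - 1) := by
  rcases eq_or_lt_of_le h with rfl | h'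
  · simp [bclPsi, Real.sign_zero, Real.zero_rpow hp.ne']
  · rw [bclPsi, Real.sign_of_neg (by linarith), abs_of_neg (by linarith)]
    ring_nf

private lemma bclPsi_anti {p : ℝ} (hp1 : 1 < p) (hp2 : p ≤ 2) {u v : ℝ}
    (hu : 0 < u) (huv : u ≤ v) : bclPsi p v ≤ bclPsi p u := by
  have hq0 : 0 < p - 1 := by linarith
  have hq1 : p - 1 ≤ 1 := by linarith
  have main : ∀ a b : ℝ, 0 < a → a ≤ b → (b ≤ 1 ∨ 1 ≤ a) → bclPsi p b ≤ bclPsi p a := by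
    rintro a b ha hab (hb1 | ha1)
    · rw [bclPsi_of_le hq0 hb1, bclPsi_of_le hq0 (hab.trans hb1)]
      have h := bcl_concave_diff hq0 hq1 (c := 1 - b) (C := 1 + a) (δ := b - a)
        (by linarith) (by linarith) (by linarith)
      rw [show 1 + a + (b - a) = 1 + b by ring, show 1 - b + (b - a) = 1 - a by ring] at h
      linarith
    · rw [bclPsi_of_ge hq0 ha1, bclPsi_of_ge hq0 (ha1.trans hab)]
      have h := bcl_concave_diff hq0 hq1 (c := a - 1) (C := 1 + a) (δ := b - a)
        (by linarith) (by linarith) (by linarith)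
      rw [show 1 + a + (b - a) = 1 + b by ring, show a - 1 + (b - a) = b - 1 by ring] at h
      linarith
  rcases le_total v 1 with hv1 | hv1
  · exact main u v hu huv (Or.inl hv1)
  rcases le_total 1 u with hu1 | hu1
  · exact main u v hu huv (Or.inr hu1)
  · exact (main 1 v one_pos hv1 (Or.inr le_rfl)).trans (main u 1 hu hu1 (Or.inl le_rfl))

private lemma bclPsi_le_two {p : ℝ} (hp1 : 1 < p) (hp2 : p ≤ 2) {u : ℝ} (hu : 0 < u) :
    bclPsi p u ≤ 2 := by
  have hq0 : 0 < p - 1 := by linarith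
  have hq1 : p - 1 ≤ 1 := by linarith
  rcases le_total u 1 with h1 | h1
  · rw [bclPsi_of_le hq0 h1]
    have h := bcl_concave_diff hq0 hq1 (c := 1 - u) (C := 1) (δ := u)
      (by linarith) (by linarith) hu.le
    rw [show (1:ℝ) - u + u = 1 by ring, Real.one_rpow] at h
    linarith
  · rw [bclPsi_of_ge hq0 h1]
    have h := bcl_concave_diff hq0 hq1 (c := 0) (C := u - 1) (δ := 2)
      le_rfl (by linarith) (by norm_num)
    rw [show u - 1 + 2 = 1 + u by ring, Real.zero_rpow hq0.ne', zero_add] at h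
    have h2 : (2:ℝ) ^ (p - 1) ≤ 2 := by
      calc (2:ℝ) ^ (p - 1) ≤ 2 ^ (1:ℝ) := Real.rpow_le_rpow_of_exponent_le one_le_two hq1
      _ = 2 := Real.rpow_one 2
    linarith

private lemma bclPsi_ge {p : ℝ} (hp1 : 1 < p) (hp2 : p ≤ 2) {u : ℝ}
    (hu : 0 < u) (hu1 : u < 1) : 2 - u ≤ bclPsi p u := by
  have hq0 : 0 < p - 1 := by linarith
  rw [bclPsi_of_le hq0 hu1.le]
  have h1 : (1:ℝ) ≤ (1 + u) ^ (p - 1) := Real.one_le_rpow (by linarith) hq0.le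
  have h2 : 1 - u ≤ (1 - u) ^ (p - 1) := by
    calc 1 - u = (1 - u) ^ (1:ℝ) := (Real.rpow_one _).symm
    _ ≤ (1 - u) ^ (p - 1) :=
      Real.rpow_le_rpow_of_exponent_ge (by linarith) (by linarith) (by linarith)
  linarith

private lemma bclPsi_inv_mul {p τ : ℝ} (hp1 : 1 < p) (hτ : 0 < τ) :
    τ ^ (p - 1) * bclPsi p (1 / τ) =
      (1 + τ) ^ (p - 1) - Real.sign (1 - τ) * |1 - τ| ^ (p - 1) := by
  have h1 : τ ^ (p - 1) * (1 + 1 / τ) ^ (p - 1) = (1 + τ) ^ (p - 1) := by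
    rw [← Real.mul_rpow hτ.le (by positivity)]
    congr 1; field_simp; ring
  have h2 : τ ^ (p - 1) * |1 - 1 / τ| ^ (p - 1) = |1 - τ| ^ (p - 1) := by
    rw [← Real.mul_rpow hτ.le (abs_nonneg _)]
    congr 1
    rw [show (1 : ℝ) - 1 / τ = (τ - 1) / τ by field_simp, abs_div, abs_of_pos hτ,
      mul_comm, div_mul_cancel₀ _ hτ.ne', abs_sub_comm]
  have h3 : Real.sign (1 - 1 / τ) = - Real.sign (1 - τ) := by
    rcases lt_trichotomy τ 1 with h | h | h
    · rw [Real.sign_of_pos (by linarith : 0 < 1 - τ),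
        Real.sign_of_neg (by rw [sub_neg]; exact one_lt_one_div hτ h)]
    · simp [h]
    · rw [Real.sign_of_neg (by linarith : 1 - τ < 0),
        Real.sign_of_pos (by rw [sub_pos]; exact (div_lt_one hτ).2 h)]
      norm_num
  calc τ ^ (p - 1) * bclPsi p (1 / τ)
      = τ ^ (p - 1) * (1 + 1 / τ) ^ (p - 1)
        + Real.sign (1 - 1 / τ) * (τ ^ (p - 1) * |1 - 1 / τ| ^ (p - 1)) := by
        rw [bclPsi]; ring
    _ = (1 + τ) ^ (p - 1) - Real.sign (1 - τ) * |1 - τ| ^ (p - 1) := by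
        rw [h1, h2, h3]; ring
private lemma bcl_rpow_succ {x p : ℝ} (hx : 0 ≤ x) (hp : 1 < p) :
    x ^ (p - 1) * x = x ^ p := by
  rcases eq_or_lt_of_le hx with rfl | hx'
  · rw [Real.zero_rpow (by linarith : p - 1 ≠ 0), Real.zero_rpow (by linarith : p ≠ 0), zero_mul]
  · rw [show p = (p - 1) + 1 by ring, Real.rpow_add hx', Real.rpow_one]
    ring_nf

/-- equality at the optimal point: `ψ(s) + ψ(1/s) s^p = (1+s)^p + |1-s|^p` -/
private lemma bclPsi_eq_at {p s : ℝ} (hp1 : 1 < p) (hs : 0 < s) :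
    bclPsi p s + bclPsi p (1 / s) * s ^ p = (1 + s) ^ p + |1 - s| ^ p := by
  have hsp : s ^ p = s ^ (p - 1) * s := (bcl_rpow_succ hs.le hp1).symm
  calc bclPsi p s + bclPsi p (1 / s) * s ^ p
      = bclPsi p s + (s ^ (p - 1) * bclPsi p (1 / s)) * s := by rw [hsp]; ring
    _ = ((1 + s) ^ (p - 1) + Real.sign (1 - s) * |1 - s| ^ (p - 1))
        + ((1 + s) ^ (p - 1) - Real.sign (1 - s) * |1 - s| ^ (p - 1)) * s := by
        rw [bclPsi_inv_mul hp1 hs]; rfl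
    _ = (1 + s) ^ (p - 1) * (1 + s) + |1 - s| ^ (p - 1) * (Real.sign (1 - s) * (1 - s)) := by
        ring
    _ = (1 + s) ^ p + |1 - s| ^ p := by
        rw [bcl_sign_mul_self, bcl_rpow_succ (by linarith : (0:ℝ) ≤ 1 + s) hp1,
          bcl_rpow_succ (abs_nonneg _) hp1]

/-- derivative of the gap function `F` away from `t = 1` -/
private lemma bclF_hasDeriv {p s τ : ℝ} (hp1 : 1 < p) (hτ : 0 < τ) (hτ1 : τ ≠ 1) :
    HasDerivAt (fun t : ℝ => (1 + t) ^ p + |1 - t| ^ p - bclPsi p s - bclPsi p (1 / s) * t ^ p)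
      (p * τ ^ (p - 1) * (bclPsi p (1 / τ) - bclPsi p (1 / s))) τ := by
  have h1 : HasDerivAt (fun t : ℝ => (1 + t) ^ p) (1 * p * (1 + τ) ^ (p - 1)) τ :=
    ((hasDerivAt_id τ).const_add 1).rpow_const (Or.inr hp1.le)
  have h3 : HasDerivAt (fun t : ℝ => bclPsi p (1 / s) * t ^ p)
      (bclPsi p (1 / s) * (1 * p * τ ^ (p - 1))) τ :=
    ((hasDerivAt_id τ).rpow_const (Or.inr hp1.le)).const_mul _
  rcases lt_or_gt_of_ne hτ1 with hlt | hgt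
  · have h2a : HasDerivAt (fun t : ℝ => (1 - t) ^ p) ((-1) * p * (1 - τ) ^ (p - 1)) τ :=
      ((hasDerivAt_id τ).const_sub 1).rpow_const (Or.inr hp1.le)
    have h2 : HasDerivAt (fun t : ℝ => |1 - t| ^ p) ((-1) * p * (1 - τ) ^ (p - 1)) τ := by
      apply h2a.congr_of_eventuallyEq
      filter_upwards [Iio_mem_nhds hlt] with t (ht : t < 1)
      rw [abs_of_pos (by linarith)]
    have := ((h1.add h2).sub_const (bclPsi p s)).sub h3
    convert this using 1
    · rfl
    · rfl
    · rfl
    have hmul := bclPsi_inv_mul hp1 hτ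
    rw [Real.sign_of_pos (by linarith : 0 < 1 - τ), abs_of_pos (by linarith : 0 < 1 - τ),
      one_mul] at hmul
    have expand : p * τ ^ (p - 1) * (bclPsi p (1 / τ) - bclPsi p (1 / s))
        = p * (τ ^ (p - 1) * bclPsi p (1 / τ)) - bclPsi p (1 / s) * (p * τ ^ (p - 1)) := by ring
    rw [expand, hmul]; ring
  · have h2a : HasDerivAt (fun t : ℝ => (t - 1) ^ p) (1 * p * (τ - 1) ^ (p - 1)) τ :=
      ((hasDerivAt_id τ).sub_const 1).rpow_const (Or.inr hp1.le)
    have h2 : HasDerivAt (fun t : ℝ => |1 - t| ^ p) (1 * p * (τ - 1) ^ (p - 1)) τ := by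
      apply h2a.congr_of_eventuallyEq
      filter_upwards [Ioi_mem_nhds hgt] with t (ht : 1 < t)
      rw [abs_of_neg (by linarith : 1 - t < 0)]
      norm_num
    have := ((h1.add h2).sub_const (bclPsi p s)).sub h3
    convert this using 1
    · rfl
    · rfl
    · rfl
    have hmul := bclPsi_inv_mul hp1 hτ
    rw [Real.sign_of_neg (by linarith : 1 - τ < 0), abs_of_neg (by linarith : 1 - τ < 0)] at hmul
    have expand : p * τ ^ (p - 1) * (bclPsi p (1 / τ) - bclPsi p (1 / s))
        = p * (τ ^ (p - 1) * bclPsi p (1 / τ)) - bclPsi p (1 / s) * (p * τ ^ (p - 1)) := by ring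
    rw [expand, hmul]; ring

/-- the key scalar inequality -/
private lemma bcl_key {p : ℝ} (hp1 : 1 < p) (hp2 : p ≤ 2) {s t : ℝ} (hs : 0 < s) (ht : 0 < t) :
    bclPsi p s + bclPsi p (1 / s) * t ^ p ≤ (1 + t) ^ p + |1 - t| ^ p := by
  set F : ℝ → ℝ :=
    fun t => (1 + t) ^ p + |1 - t| ^ p - bclPsi p s - bclPsi p (1 / s) * t ^ p with hF
  have hF0 : F s = 0 := by
    simp only [hF]
    have := bclPsi_eq_at hp1 hs
    linarith
  suffices h : 0 ≤ F t by simp only [hF] at h; linarith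
  have hcont : Continuous F := by
    apply Continuous.sub
    apply Continuous.sub
    apply Continuous.add
    · exact (continuous_const.add continuous_id).rpow_const fun x => Or.inr (by linarith)
    · exact (continuous_const.sub continuous_id).abs.rpow_const fun x => Or.inr (by linarith)
    · exact continuous_const
    · exact continuous_const.mul (continuous_id.rpow_const fun x => Or.inr (by linarith))
  have anti : ∀ a b : ℝ, 0 < a → a ≤ b → b ≤ s → (b ≤ 1 ∨ 1 ≤ a) → F b ≤ F a := by
    intro a b ha hab hbs hor
    have hA : AntitoneOn F (Set.Icc a b) := by
      apply antitoneOn_of_deriv_nonpos (convex_Icc a b) hcont.continuousOn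
      · intro z hz
        rw [interior_Icc] at hz
        have hz0 : 0 < z := ha.trans hz.1
        have hz1 : z ≠ 1 := by
          rcases hor with h | h
          · exact ne_of_lt (lt_of_lt_of_le hz.2 h)
          · exact ne_of_gt (lt_of_le_of_lt h hz.1)
        exact (bclF_hasDeriv hp1 hz0 hz1).differentiableAt.differentiableWithinAt
      · intro z hz
        rw [interior_Icc] at hz
        have hz0 : 0 < z := ha.trans hz.1
        have hz1 : z ≠ 1 := by
          rcases hor with h | h
          · exact ne_of_lt (lt_of_lt_of_le hz.2 h)
          · exact ne_of_gt (lt_of_le_of_lt h hz.1)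
        rw [(bclF_hasDeriv hp1 hz0 hz1).deriv]
        have hmono : bclPsi p (1 / z) ≤ bclPsi p (1 / s) := by
          apply bclPsi_anti hp1 hp2 (by positivity)
          exact one_div_le_one_div_of_le hz0 (le_of_lt (lt_of_lt_of_le hz.2 hbs))
        apply mul_nonpos_of_nonneg_of_nonpos (by positivity)
        linarith
    exact hA (Set.mem_Icc.2 ⟨le_rfl, hab⟩) (Set.mem_Icc.2 ⟨hab, le_rfl⟩) hab
  have mono : ∀ a b : ℝ, s ≤ a → a ≤ b → (b ≤ 1 ∨ 1 ≤ a) → F a ≤ F b := by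
    intro a b ha hab hor
    have ha0 : 0 < a := lt_of_lt_of_le hs ha
    have hM : MonotoneOn F (Set.Icc a b) := by
      apply monotoneOn_of_deriv_nonneg (convex_Icc a b) hcont.continuousOn
      · intro z hz
        rw [interior_Icc] at hz
        have hz0 : 0 < z := ha0.trans hz.1
        have hz1 : z ≠ 1 := by
          rcases hor with h | h
          · exact ne_of_lt (lt_of_lt_of_le hz.2 h)
          · exact ne_of_gt (lt_of_le_of_lt h hz.1)
        exact (bclF_hasDeriv hp1 hz0 hz1).differentiableAt.differentiableWithinAt
      · intro z hz
        rw [interior_Icc] at hz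
        have hz0 : 0 < z := ha0.trans hz.1
        have hz1 : z ≠ 1 := by
          rcases hor with h | h
          · exact ne_of_lt (lt_of_lt_of_le hz.2 h)
          · exact ne_of_gt (lt_of_le_of_lt h hz.1)
        rw [(bclF_hasDeriv hp1 hz0 hz1).deriv]
        have hmono : bclPsi p (1 / s) ≤ bclPsi p (1 / z) := by
          apply bclPsi_anti hp1 hp2 (by positivity)
          exact one_div_le_one_div_of_le hs (le_of_lt (lt_of_le_of_lt ha hz.1))
        apply mul_nonneg (by positivity)
        linarith
    exact hM (Set.mem_Icc.2 ⟨le_rfl, hab⟩) (Set.mem_Icc.2 ⟨hab, le_rfl⟩) hab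
  rcases le_total t s with hts | hst
  · rcases le_total s 1 with h1 | h1
    · have := anti t s ht hts le_rfl (Or.inl h1); linarith
    rcases le_total 1 t with h2 | h2
    · have := anti t s ht hts le_rfl (Or.inr h2); linarith
    · have e1 := anti t 1 ht h2 (by linarith) (Or.inl le_rfl)
      have e2 := anti 1 s one_pos h1 le_rfl (Or.inr le_rfl)
      linarith
  · rcases le_total t 1 with h1 | h1
    · have := mono s t le_rfl hst (Or.inl h1); linarith
    rcases le_total 1 s with h2 | h2
    · have := mono s t le_rfl hst (Or.inr h2); linarith
    · have e1 := mono s 1 le_rfl h2 (Or.inl le_rfl)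
      have e2 := mono 1 t (by linarith) h1 (Or.inr le_rfl)
      linarith
private lemma bcl_abs_pair (x y : ℝ) :
    (|x + y| = |x| + |y| ∧ |x - y| = abs (|x| - |y|)) ∨
    (|x + y| = abs (|x| - |y|) ∧ |x - y| = |x| + |y|) := by
  rcases le_total 0 x with hx | hx <;> rcases le_total 0 y with hy | hy
  · left
    rw [abs_of_nonneg hx, abs_of_nonneg hy, abs_of_nonneg (by linarith : (0:ℝ) ≤ x + y)]
    exact ⟨rfl, rfl⟩
  · right
    rw [abs_of_nonneg hx, abs_of_nonpos hy]
    constructor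
    · congr 1; ring
    · rw [abs_of_nonneg (by linarith : (0:ℝ) ≤ x - y)]; ring
  · right
    rw [abs_of_nonpos hx, abs_of_nonneg hy]
    constructor
    · rw [show -x - y = -(x + y) by ring, abs_neg]
    · rw [abs_of_nonpos (by linarith : x - y ≤ 0)]; ring
  · left
    rw [abs_of_nonpos hx, abs_of_nonpos hy]
    constructor
    · rw [abs_of_nonpos (by linarith : x + y ≤ 0)]; ring
    · rw [show -x - -y = -(x - y) by ring, abs_neg]

/-- the inequality in terms of nonnegative `a`, `b` -/
private lemma bcl_key_ab {p : ℝ} (hp1 : 1 < p) (hp2 : p ≤ 2) {s a b : ℝ}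
    (hs : 0 < s) (ha : 0 ≤ a) (hb : 0 ≤ b) :
    bclPsi p s * a ^ p + bclPsi p (1 / s) * b ^ p ≤ (a + b) ^ p + |a - b| ^ p := by
  have hp0 : (0:ℝ) < p := by linarith
  rcases eq_or_lt_of_le ha with rfl | ha'
  · rw [Real.zero_rpow hp0.ne', mul_zero, zero_add, zero_add, zero_sub, abs_neg,
      abs_of_nonneg hb]
    nlinarith [bclPsi_le_two hp1 hp2 (by positivity : (0:ℝ) < 1 / s),
      Real.rpow_nonneg hb p]
  rcases eq_or_lt_of_le hb with rfl | hb'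
  · rw [Real.zero_rpow hp0.ne', mul_zero, add_zero, add_zero, sub_zero, abs_of_nonneg ha]
    nlinarith [bclPsi_le_two hp1 hp2 hs, Real.rpow_nonneg ha p]
  have ht : 0 < b / a := by positivity
  have key := bcl_key hp1 hp2 hs ht
  have hmul := mul_le_mul_of_nonneg_right key (Real.rpow_nonneg ha'.le p)
  have e1 : (b / a) ^ p * a ^ p = b ^ p := by
    rw [← Real.mul_rpow (by positivity) ha'.le, div_mul_cancel₀ _ ha'.ne']
  have e2 : (1 + b / a) ^ p * a ^ p = (a + b) ^ p := by
    rw [← Real.mul_rpow (by positivity) ha'.le]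
    congr 1; field_simp
  have e3 : |1 - b / a| ^ p * a ^ p = |a - b| ^ p := by
    rw [show (1:ℝ) - b / a = (a - b) / a by field_simp, abs_div, abs_of_pos ha',
      Real.div_rpow (abs_nonneg _) ha'.le, div_mul_cancel₀ _ (ne_of_gt (by positivity))]
  calc bclPsi p s * a ^ p + bclPsi p (1 / s) * b ^ p
      = (bclPsi p s + bclPsi p (1 / s) * (b / a) ^ p) * a ^ p := by
        rw [add_mul, mul_assoc, e1]
    _ ≤ ((1 + b / a) ^ p + |1 - b / a| ^ p) * a ^ p := hmul
    _ = (a + b) ^ p + |a - b| ^ p := by rw [add_mul, e2, e3]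

/-- equality case in terms of positive `a`, `b` -/
private lemma bcl_eq_ab {p : ℝ} (hp1 : 1 < p) {a b : ℝ} (ha : 0 < a) (hb : 0 < b) :
    bclPsi p (b / a) * a ^ p + bclPsi p (a / b) * b ^ p = (a + b) ^ p + |a - b| ^ p := by
  have ht : 0 < b / a := by positivity
  have key := bclPsi_eq_at hp1 ht
  have hmul := congrArg (fun z => z * a ^ p) key
  have e1 : (b / a) ^ p * a ^ p = b ^ p := by
    rw [← Real.mul_rpow (by positivity) ha.le, div_mul_cancel₀ _ ha.ne']
  have e2 : (1 + b / a) ^ p * a ^ p = (a + b) ^ p := by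
    rw [← Real.mul_rpow (by positivity) ha.le]
    congr 1; field_simp
  have e3 : |1 - b / a| ^ p * a ^ p = |a - b| ^ p := by
    rw [show (1:ℝ) - b / a = (a - b) / a by field_simp, abs_div, abs_of_pos ha,
      Real.div_rpow (abs_nonneg _) ha.le, div_mul_cancel₀ _ (ne_of_gt (by positivity))]
  have einv : 1 / (b / a) = a / b := one_div_div b a
  calc bclPsi p (b / a) * a ^ p + bclPsi p (a / b) * b ^ p
      = (bclPsi p (b / a) + bclPsi p (1 / (b / a)) * (b / a) ^ p) * a ^ p := by
        rw [einv, add_mul, mul_assoc, e1]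
    _ = ((1 + b / a) ^ p + |1 - b / a| ^ p) * a ^ p := by rw [key]
    _ = (a + b) ^ p + |a - b| ^ p := by rw [add_mul, e2, e3]
private lemma bcl_main_ineq {p : ℝ} (hp1 : 1 < p) (hp2 : p ≤ 2) (x y : ℝ) {s : ℝ}
    (hs : 0 < s) :
    bclPsi p s * |x| ^ p + bclPsi p (1 / s) * |y| ^ p ≤ |x + y| ^ p + |x - y| ^ p := by
  rcases bcl_abs_pair x y with ⟨h1, h2⟩ | ⟨h1, h2⟩ <;> rw [h1, h2]
  · exact bcl_key_ab hp1 hp2 hs (abs_nonneg x) (abs_nonneg y)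
  · have := bcl_key_ab hp1 hp2 hs (abs_nonneg x) (abs_nonneg y)
    linarith

private lemma bcl_L_eq (p x y : ℝ) :
    |x + y| ^ p + |x - y| ^ p = (|x| + |y|) ^ p + abs (|x| - |y|) ^ p := by
  rcases bcl_abs_pair x y with ⟨h1, h2⟩ | ⟨h1, h2⟩ <;> rw [h1, h2]
  exact add_comm _ _

/-- Bahouri–Coifman–Lohoué identity for `p ∈ (1,2]`:
`|x+y|^p + |x−y|^p = sup_{s>0} (ψ_p(s)|x|^p + ψ_p(1/s)|y|^p)` where
`ψ_p(s) = (1+s)^{p−1} + sgn(1−s)|1−s|^{p−1}`; in particular each `s > 0`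
gives a lower bound. -/
theorem stmt_2 (p : ℝ) (hp1 : 1 < p) (hp2 : p ≤ 2) (x y : ℝ) :
    (|x + y| ^ p + |x - y| ^ p
        = ⨆ s : {s : ℝ // 0 < s},
            (((1 + s.1) ^ (p - 1) + Real.sign (1 - s.1) * |1 - s.1| ^ (p - 1)) * |x| ^ p
              + ((1 + 1 / s.1) ^ (p - 1)
                  + Real.sign (1 - 1 / s.1) * |1 - 1 / s.1| ^ (p - 1)) * |y| ^ p)) ∧
      ∀ s : ℝ, 0 < s →
        ((1 + s) ^ (p - 1) + Real.sign (1 - s) * |1 - s| ^ (p - 1)) * |x| ^ p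
            + ((1 + 1 / s) ^ (p - 1) + Real.sign (1 - 1 / s) * |1 - 1 / s| ^ (p - 1)) * |y| ^ p
          ≤ |x + y| ^ p + |x - y| ^ p := by
  have hp0 : (0:ℝ) < p := by linarith
  have hineq : ∀ s : ℝ, 0 < s →
      bclPsi p s * |x| ^ p + bclPsi p (1 / s) * |y| ^ p ≤ |x + y| ^ p + |x - y| ^ p :=
    fun s hs => bcl_main_ineq hp1 hp2 x y hs
  constructor
  · have hbdd : BddAbove (Set.range fun s : {s : ℝ // 0 < s} =>
        bclPsi p s.1 * |x| ^ p + bclPsi p (1 / s.1) * |y| ^ p) := by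
      refine ⟨|x + y| ^ p + |x - y| ^ p, ?_⟩
      rintro _ ⟨s, rfl⟩
      exact hineq s.1 s.2
    have hub : (⨆ s : {s : ℝ // 0 < s},
          (bclPsi p s.1 * |x| ^ p + bclPsi p (1 / s.1) * |y| ^ p))
        ≤ |x + y| ^ p + |x - y| ^ p := ciSup_le fun s => hineq s.1 s.2
    have hlb : |x + y| ^ p + |x - y| ^ p ≤ ⨆ s : {s : ℝ // 0 < s},
        (bclPsi p s.1 * |x| ^ p + bclPsi p (1 / s.1) * |y| ^ p) := by
      rcases eq_or_ne x 0 with rfl | hx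
      · rcases eq_or_ne y 0 with rfl | hy
        · refine le_trans (le_of_eq ?_) (le_ciSup hbdd ⟨1, one_pos⟩)
          simp [abs_zero, Real.zero_rpow hp0.ne']
        · -- x = 0, y ≠ 0
          have hB : 0 < |y| ^ p := Real.rpow_pos_of_pos (abs_pos.2 hy) p
          apply le_of_forall_lt
          intro w hw
          have hL : |(0:ℝ) + y| ^ p + |(0:ℝ) - y| ^ p = 2 * |y| ^ p := by
            rw [zero_add, zero_sub, abs_neg]; ring
          rw [hL] at hw
          set u : ℝ := min ((2 * |y| ^ p - w) / (2 * |y| ^ p)) (1 / 2) with hu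
          have hu0 : 0 < u :=
            lt_min (div_pos (by linarith) (by positivity)) (by norm_num)
          have hu1 : u < 1 := lt_of_le_of_lt (min_le_right _ _) (by norm_num)
          have hsub : u * |y| ^ p < 2 * |y| ^ p - w := by
            have h1 : u ≤ (2 * |y| ^ p - w) / (2 * |y| ^ p) := min_le_left _ _
            have h2 : u * |y| ^ p ≤ (2 * |y| ^ p - w) / 2 := by
              calc u * |y| ^ p
                  ≤ ((2 * |y| ^ p - w) / (2 * |y| ^ p)) * |y| ^ p := by nlinarith
                _ = (2 * |y| ^ p - w) / 2 := by field_simp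
            linarith
          have hpsi : 2 - u ≤ bclPsi p u := bclPsi_ge hp1 hp2 hu0 hu1
          have hval : w < bclPsi p (1 / u : ℝ) * |(0:ℝ)| ^ p
              + bclPsi p (1 / (1 / u)) * |y| ^ p := by
            rw [one_div_one_div, abs_zero, Real.zero_rpow hp0.ne', mul_zero, zero_add]
            nlinarith
          exact lt_of_lt_of_le hval (le_ciSup hbdd ⟨1 / u, by positivity⟩)
      · rcases eq_or_ne y 0 with rfl | hy
        · -- y = 0, x ≠ 0
          have hB : 0 < |x| ^ p := Real.rpow_pos_of_pos (abs_pos.2 hx) p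
          apply le_of_forall_lt
          intro w hw
          have hL : |x + 0| ^ p + |x - 0| ^ p = 2 * |x| ^ p := by
            rw [add_zero, sub_zero]; ring
          rw [hL] at hw
          set u : ℝ := min ((2 * |x| ^ p - w) / (2 * |x| ^ p)) (1 / 2) with hu
          have hu0 : 0 < u :=
            lt_min (div_pos (by linarith) (by positivity)) (by norm_num)
          have hu1 : u < 1 := lt_of_le_of_lt (min_le_right _ _) (by norm_num)
          have hsub : u * |x| ^ p < 2 * |x| ^ p - w := by
            have h1 : u ≤ (2 * |x| ^ p - w) / (2 * |x| ^ p) := min_le_left _ _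
            have h2 : u * |x| ^ p ≤ (2 * |x| ^ p - w) / 2 := by
              calc u * |x| ^ p
                  ≤ ((2 * |x| ^ p - w) / (2 * |x| ^ p)) * |x| ^ p := by nlinarith
                _ = (2 * |x| ^ p - w) / 2 := by field_simp
            linarith
          have hpsi : 2 - u ≤ bclPsi p u := bclPsi_ge hp1 hp2 hu0 hu1
          have hval : w < bclPsi p u * |x| ^ p + bclPsi p (1 / u) * |(0:ℝ)| ^ p := by
            rw [abs_zero, Real.zero_rpow hp0.ne', mul_zero, add_zero]
            nlinarith
          exact lt_of_lt_of_le hval (le_ciSup hbdd ⟨u, hu0⟩)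
        · -- both nonzero
          have ha : 0 < |x| := abs_pos.2 hx
          have hb : 0 < |y| := abs_pos.2 hy
          have heq : bclPsi p (|y| / |x|) * |x| ^ p + bclPsi p (1 / (|y| / |x|)) * |y| ^ p
              = |x + y| ^ p + |x - y| ^ p := by
            rw [one_div_div, bcl_eq_ab hp1 ha hb, bcl_L_eq p x y]
          exact le_trans (le_of_eq heq.symm) (le_ciSup hbdd ⟨|y| / |x|, by positivity⟩)
    exact le_antisymm hlb hub
  · intro s hs
    exact hineq s hs
end

section
/- Let p ∈ [2,∞) and define ψ_p : (0,∞) → ℝ by ψ_p(s) = (1+s)^{p−1} + sgn(1−s)|1−s|^{p−1}. Then for all x, y ∈ ℝ and all s > 0, |x+y|^p + |x−y|^p ≤ ψ_p(s)|x|^p + ψ_p(1/s)|y|^p. -/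
open Real Set

noncomputable def psiAux (q s : ℝ) : ℝ := (1 + s) ^ q + Real.sign (1 - s) * |1 - s| ^ q

lemma psiAux_def (q s : ℝ) : psiAux q s = (1 + s) ^ q + Real.sign (1 - s) * |1 - s| ^ q := rfl

lemma psiAux_eq_left {q : ℝ} (hq : 1 ≤ q) {u : ℝ} (hu : u ≤ 1) :
    psiAux q u = (1 + u) ^ q + (1 - u) ^ q := by
  rcases lt_or_eq_of_le hu with h | h
  · rw [psiAux, Real.sign_of_pos (by linarith : (0:ℝ) < 1 - u),
      abs_of_pos (by linarith : (0:ℝ) < 1 - u), one_mul]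
  · subst h
    norm_num [psiAux, Real.sign_zero, Real.zero_rpow (by linarith : q ≠ 0)]

lemma psiAux_eq_right {q : ℝ} (hq : 1 ≤ q) {u : ℝ} (hu : 1 ≤ u) :
    psiAux q u = (1 + u) ^ q - (u - 1) ^ q := by
  rcases lt_or_eq_of_le hu with h | h
  · rw [psiAux, Real.sign_of_neg (by linarith : (1:ℝ) - u < 0),
      abs_of_neg (by linarith : (1:ℝ) - u < 0), neg_sub]
    ring
  · rw [← h]
    norm_num [psiAux, Real.sign_zero, Real.zero_rpow (by linarith : q ≠ 0)]

lemma contRpowAux {f : ℝ → ℝ} (hf : Continuous f) {q : ℝ} (hq : 0 ≤ q) :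
    Continuous fun x => f x ^ q :=
  hf.rpow_const (fun _ => Or.inr hq)

lemma mono1 {q : ℝ} (hq : 1 ≤ q) :
    MonotoneOn (fun u : ℝ => (1 + u) ^ q + (1 - u) ^ q) (Icc (0:ℝ) 1) := by
  have hq0 : (0:ℝ) ≤ q := by linarith
  have hder : ∀ u ∈ Ioo (0:ℝ) 1, HasDerivAt (fun u : ℝ => (1 + u) ^ q + (1 - u) ^ q)
      (1 * q * (1 + u) ^ (q - 1) + -1 * q * (1 - u) ^ (q - 1)) u := by
    intro u hu
    have h1 : HasDerivAt (fun u : ℝ => (1 + u) ^ q) (1 * q * (1 + u) ^ (q - 1)) u :=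
      HasDerivAt.rpow_const ((hasDerivAt_id u).const_add 1)
        (Or.inl (by nlinarith [hu.1] : (1:ℝ) + u ≠ 0))
    have h2 : HasDerivAt (fun u : ℝ => (1 - u) ^ q) (-1 * q * (1 - u) ^ (q - 1)) u :=
      HasDerivAt.rpow_const ((hasDerivAt_id u).neg.const_add 1)
        (Or.inl (by nlinarith [hu.2] : (1:ℝ) - u ≠ 0))
    exact h1.add h2
  apply monotoneOn_of_deriv_nonneg (convex_Icc 0 1)
  · exact ((contRpowAux (by continuity) hq0).add (contRpowAux (by continuity) hq0)).continuousOn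
  · intro u hu
    rw [interior_Icc] at hu
    exact (hder u hu).differentiableAt.differentiableWithinAt
  · intro u hu
    rw [interior_Icc] at hu
    rw [(hder u hu).deriv]
    have h1 : (1 - u) ^ (q - 1) ≤ (1 + u) ^ (q - 1) :=
      Real.rpow_le_rpow (by linarith [hu.2]) (by linarith [hu.1]) (by linarith)
    nlinarith [h1, hq0]

lemma mono2 {q : ℝ} (hq : 1 ≤ q) :
    MonotoneOn (fun u : ℝ => (1 + u) ^ q - (u - 1) ^ q) (Ici (1:ℝ)) := by
  have hq0 : (0:ℝ) ≤ q := by linarith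
  have hder : ∀ u ∈ Ioi (1:ℝ), HasDerivAt (fun u : ℝ => (1 + u) ^ q - (u - 1) ^ q)
      (1 * q * (1 + u) ^ (q - 1) - 1 * q * (u - 1) ^ (q - 1)) u := by
    intro u hu
    have hu' : (1:ℝ) < u := hu
    have h1 : HasDerivAt (fun u : ℝ => (1 + u) ^ q) (1 * q * (1 + u) ^ (q - 1)) u :=
      HasDerivAt.rpow_const ((hasDerivAt_id u).const_add 1)
        (Or.inl (by nlinarith : (1:ℝ) + u ≠ 0))
    have h2 : HasDerivAt (fun u : ℝ => (u - 1) ^ q) (1 * q * (u - 1) ^ (q - 1)) u :=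
      HasDerivAt.rpow_const ((hasDerivAt_id u).sub_const 1)
        (Or.inl (by nlinarith : u - (1:ℝ) ≠ 0))
    exact h1.sub h2
  apply monotoneOn_of_deriv_nonneg (convex_Ici 1)
  · exact ((contRpowAux (by continuity) hq0).sub (contRpowAux (by continuity) hq0)).continuousOn
  · intro u hu
    rw [interior_Ici] at hu
    exact (hder u hu).differentiableAt.differentiableWithinAt
  · intro u hu
    rw [interior_Ici] at hu
    have hu' : (1:ℝ) < u := hu
    rw [(hder u hu).deriv]
    have h1 : (u - 1) ^ (q - 1) ≤ (1 + u) ^ (q - 1) :=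
      Real.rpow_le_rpow (by linarith) (by linarith) (by linarith)
    nlinarith [h1, hq0]

lemma psiAux_mono {q : ℝ} (hq : 1 ≤ q) {u v : ℝ} (hu : 0 < u) (huv : u ≤ v) :
    psiAux q u ≤ psiAux q v := by
  rcases le_total v 1 with hv1 | hv1
  · rw [psiAux_eq_left hq (le_trans huv hv1), psiAux_eq_left hq hv1]
    exact mono1 hq ⟨hu.le, le_trans huv hv1⟩ ⟨by linarith, hv1⟩ huv
  · rcases le_total u 1 with hu1 | hu1
    · calc psiAux q u ≤ psiAux q 1 := by
            rw [psiAux_eq_left hq hu1, psiAux_eq_left hq le_rfl]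
            exact mono1 hq ⟨hu.le, hu1⟩ ⟨zero_le_one, le_rfl⟩ hu1
        _ ≤ psiAux q v := by
            rw [psiAux_eq_right hq le_rfl, psiAux_eq_right hq hv1]
            exact mono2 hq (Set.mem_Ici.mpr le_rfl) (Set.mem_Ici.mpr hv1) hv1
    · rw [psiAux_eq_right hq hu1, psiAux_eq_right hq hv1]
      exact mono2 hq (Set.mem_Ici.mpr hu1) (Set.mem_Ici.mpr (le_trans hu1 huv)) huv

lemma psiAux_ge_two {q : ℝ} (hq : 1 ≤ q) {u : ℝ} (hu : 0 < u) : 2 ≤ psiAux q u := by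
  rcases le_total u 1 with hu1 | hu1
  · rw [psiAux_eq_left hq hu1]
    have b1 : 1 + q * u ≤ (1 + u) ^ q :=
      one_add_mul_self_le_rpow_one_add (by linarith) hq
    have b2 : 1 + q * (-u) ≤ (1 + (-u)) ^ q :=
      one_add_mul_self_le_rpow_one_add (by linarith) hq
    rw [show (1:ℝ) + -u = 1 - u by ring] at b2
    linarith
  · calc (2:ℝ) = 2 ^ (1:ℝ) := by rw [Real.rpow_one]
      _ ≤ 2 ^ q := Real.rpow_le_rpow_of_exponent_le (by norm_num) hq
      _ = psiAux q 1 := by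
          rw [psiAux_eq_left hq le_rfl]
          norm_num [Real.zero_rpow (by linarith : q ≠ 0)]
      _ ≤ psiAux q u := psiAux_mono hq one_pos hu1

lemma sq_rpow_half (p : ℝ) (y : ℝ) : ((y ^ 2 : ℝ)) ^ (p / 2) = |y| ^ p := by
  rw [← sq_abs, ← Real.rpow_natCast |y| 2, ← Real.rpow_mul (abs_nonneg y)]
  congr 1
  push_cast
  ring

lemma myHasDerivAt_abs_rpow {p : ℝ} (hp : 2 ≤ p) (x : ℝ) :
    HasDerivAt (fun y : ℝ => |y| ^ p) (p * Real.sign x * |x| ^ (p - 1)) x := by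
  have h3 := hasDerivAt_abs_rpow x (by linarith : (1:ℝ) < p)
  have hde : p * |x| ^ (p - 2) * x = p * Real.sign x * |x| ^ (p - 1) := by
    rcases eq_or_ne x 0 with h0 | h0
    · subst h0
      norm_num [Real.sign_zero]
    · have hax : 0 < |x| := abs_pos.2 h0
      have h1 : |x| ^ (p - 1) = |x| * |x| ^ (p - 2) := by
        have h := Real.rpow_add hax 1 (p - 2)
        rw [Real.rpow_one] at h
        rw [show p - 1 = 1 + (p - 2) by ring, h]
      have hsx : Real.sign x * |x| = x := by
        rcases lt_or_gt_of_ne h0 with h | h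
        · rw [Real.sign_of_neg h, abs_of_neg h]; ring
        · rw [Real.sign_of_pos h, abs_of_pos h]; ring
      rw [h1]
      linear_combination (-(p * |x| ^ (p - 2))) * hsx
  rwa [hde] at h3

lemma key_ident {q : ℝ} (hq : 1 ≤ q) {t : ℝ} (ht : 0 < t) :
    t ^ q * psiAux q (1 / t) = (1 + t) ^ q - Real.sign (1 - t) * |1 - t| ^ q := by
  have ht0 : t ≠ 0 := ht.ne'
  have h1 : t ^ q * (1 + 1 / t) ^ q = (1 + t) ^ q := by
    rw [← Real.mul_rpow ht.le (by positivity)]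
    congr 1
    field_simp
    ring
  have h2 : t ^ q * |1 - 1 / t| ^ q = |1 - t| ^ q := by
    rw [← Real.mul_rpow ht.le (abs_nonneg _)]
    congr 1
    rw [show t * |1 - 1 / t| = |t| * |1 - 1 / t| by rw [abs_of_pos ht], ← abs_mul,
      show t * (1 - 1 / t) = t - 1 by field_simp, abs_sub_comm]
  have h3 : Real.sign (1 - 1 / t) = -Real.sign (1 - t) := by
    rcases lt_trichotomy t 1 with h | h | h
    · have : (1:ℝ) < 1 / t := by rw [lt_div_iff₀ ht]; linarith
      rw [Real.sign_of_neg (by linarith), Real.sign_of_pos (by linarith)]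
    · subst h
      norm_num [Real.sign_zero]
    · have : 1 / t < 1 := by rw [div_lt_one ht]; linarith
      rw [Real.sign_of_pos (by linarith), Real.sign_of_neg (by linarith)]
      ring
  calc t ^ q * psiAux q (1 / t)
      = t ^ q * (1 + 1 / t) ^ q + Real.sign (1 - 1 / t) * (t ^ q * |1 - 1 / t| ^ q) := by
        rw [psiAux]; ring
    _ = (1 + t) ^ q - Real.sign (1 - t) * |1 - t| ^ q := by rw [h1, h2, h3]; ring

lemma eq_at {q : ℝ} (hq : 1 ≤ q) {s : ℝ} (hs : 0 < s) :
    psiAux q s + psiAux q (1 / s) * s ^ (q + 1) = (1 + s) ^ (q + 1) + |1 - s| ^ (q + 1) := by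
  have hs0 : s ≠ 0 := hs.ne'
  have h1 : s ^ (q + 1) = s ^ q * s := Real.rpow_add_one hs0 q
  have h2 : psiAux q (1 / s) * s ^ (q + 1)
      = ((1 + s) ^ q - Real.sign (1 - s) * |1 - s| ^ q) * s := by
    rw [h1, ← key_ident hq hs]
    ring
  have h3 : (1 + s) ^ q * (1 + s) = (1 + s) ^ (q + 1) :=
    (Real.rpow_add_one (by positivity) q).symm
  have h4 : Real.sign (1 - s) * |1 - s| ^ q * (1 - s) = |1 - s| ^ (q + 1) := by
    rcases eq_or_ne s 1 with h | h
    · rw [h]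
      norm_num [Real.sign_zero, Real.zero_rpow (by linarith : q + 1 ≠ 0)]
    · have hne : (1:ℝ) - s ≠ 0 := fun hc => h (by linarith)
      have hsx : Real.sign (1 - s) * (1 - s) = |1 - s| := by
        rcases lt_or_gt_of_ne hne with hlt | hgt
        · rw [Real.sign_of_neg hlt, abs_of_neg hlt]; ring
        · rw [Real.sign_of_pos hgt, abs_of_pos hgt]; ring
      calc Real.sign (1 - s) * |1 - s| ^ q * (1 - s)
          = |1 - s| ^ q * (Real.sign (1 - s) * (1 - s)) := by ring
        _ = |1 - s| ^ q * |1 - s| := by rw [hsx]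
        _ = |1 - s| ^ (q + 1) := (Real.rpow_add_one (abs_ne_zero.2 hne) q).symm
  rw [h2, psiAux]
  linear_combination h3 + h4
lemma main_ineq {q : ℝ} (hq : 1 ≤ q) {s t : ℝ} (hs : 0 < s) (ht : 0 < t) :
    (1 + t) ^ (q + 1) + |1 - t| ^ (q + 1)
      ≤ psiAux q s + psiAux q (1 / s) * t ^ (q + 1) := by
  have hp : (2:ℝ) ≤ q + 1 := by linarith
  have hp0 : (0:ℝ) ≤ q + 1 := by linarith
  set C := psiAux q (1 / s) with hC
  set G : ℝ → ℝ := fun t => psiAux q s + C * t ^ (q + 1) - ((1 + t) ^ (q + 1) + |1 - t| ^ (q + 1))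
    with hG
  have hGs : G s = 0 := by
    have h := eq_at hq hs
    simp only [hG, hC]
    linarith
  have hderiv : ∀ u : ℝ, 0 < u →
      HasDerivAt G ((q + 1) * u ^ q * (C - psiAux q (1 / u))) u := by
    intro u hu
    have hu1 : (0:ℝ) < 1 + u := by linarith
    have d1 : HasDerivAt (fun t : ℝ => t ^ (q + 1)) (1 * (q + 1) * u ^ (q + 1 - 1)) u :=
      HasDerivAt.rpow_const (hasDerivAt_id u) (Or.inl hu.ne')
    have d2 : HasDerivAt (fun t : ℝ => (1 + t) ^ (q + 1)) (1 * (q + 1) * (1 + u) ^ (q + 1 - 1)) u :=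
      HasDerivAt.rpow_const ((hasDerivAt_id u).const_add 1) (Or.inl hu1.ne')
    have d3 : HasDerivAt (fun t : ℝ => |1 - t| ^ (q + 1))
        ((q + 1) * Real.sign (1 - u) * |1 - u| ^ (q + 1 - 1) * (-1)) u := by
      have hi : HasDerivAt (fun t : ℝ => 1 - t) (-1) u := by
        exact (hasDerivAt_id u).const_sub 1
      have := (myHasDerivAt_abs_rpow hp (1 - u)).comp u hi
      exact this
    have hD := ((d1.const_mul C).const_add (psiAux q s)).sub (d2.add d3)
    have hq1 : q + 1 - 1 = q := by ring
    rw [hq1] at hD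
    have hkey := key_ident hq hu
    refine hD.congr_deriv ?_
    linear_combination (q + 1) * hkey
  have hcont : Continuous G := by
    have c1 : Continuous fun t : ℝ => t ^ (q + 1) := contRpowAux continuous_id hp0
    have c2 : Continuous fun t : ℝ => (1 + t) ^ (q + 1) :=
      contRpowAux (continuous_const.add continuous_id) hp0
    have c3 : Continuous fun t : ℝ => |1 - t| ^ (q + 1) :=
      contRpowAux ((continuous_const.sub continuous_id).abs) hp0
    exact (continuous_const.add (continuous_const.mul c1)).sub (c2.add c3)
  have hanti : AntitoneOn G (Ioc 0 s) := by
    apply antitoneOn_of_deriv_nonpos (convex_Ioc 0 s) hcont.continuousOn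
    · intro u hu
      rw [interior_Ioc] at hu
      exact (hderiv u hu.1).differentiableAt.differentiableWithinAt
    · intro u hu
      rw [interior_Ioc] at hu
      rw [(hderiv u hu.1).deriv]
      have h1 : psiAux q (1 / s) ≤ psiAux q (1 / u) :=
        psiAux_mono hq (one_div_pos.mpr hs) (one_div_le_one_div_of_le hu.1 hu.2.le)
      have h2 : C - psiAux q (1 / u) ≤ 0 := by rw [hC]; linarith
      have h3 : (0:ℝ) ≤ (q + 1) * u ^ q :=
        mul_nonneg (by linarith) (Real.rpow_nonneg hu.1.le q)
      exact mul_nonpos_of_nonneg_of_nonpos h3 h2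
  have hmono : MonotoneOn G (Ici s) := by
    apply monotoneOn_of_deriv_nonneg (convex_Ici s)  hcont.continuousOn
    · intro u hu
      rw [interior_Ici] at hu
      exact (hderiv u (lt_trans hs hu)).differentiableAt.differentiableWithinAt
    · intro u hu
      rw [interior_Ici] at hu
      have hu0 : 0 < u := lt_trans hs hu
      rw [(hderiv u hu0).deriv]
      have h1 : psiAux q (1 / u) ≤ psiAux q (1 / s) :=
        psiAux_mono hq (one_div_pos.mpr hu0) (one_div_le_one_div_of_le hs hu.le)
      have h2 : (0:ℝ) ≤ C - psiAux q (1 / u) := by rw [hC]; linarith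
      have h3 : (0:ℝ) ≤ (q + 1) * u ^ q :=
        mul_nonneg (by linarith) (Real.rpow_nonneg hu0.le q)
      exact mul_nonneg h3 h2
  have hGt : 0 ≤ G t := by
    rcases le_total t s with h | h
    · have := hanti ⟨ht, h⟩ ⟨hs, le_rfl⟩ h
      linarith [hGs ▸ this]
    · have := hmono (Set.mem_Ici.mpr le_rfl) (Set.mem_Ici.mpr h) h
      linarith [hGs ▸ this]
  simp only [hG, hC] at hGt
  linarith

lemma two_var {q : ℝ} (hq : 1 ≤ q) {s : ℝ} (hs : 0 < s) {a b : ℝ} (ha : 0 ≤ a) (hb : 0 ≤ b) :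
    (a + b) ^ (q + 1) + |a - b| ^ (q + 1)
      ≤ psiAux q s * a ^ (q + 1) + psiAux q (1 / s) * b ^ (q + 1) := by
  have hp0 : (0:ℝ) < q + 1 := by linarith
  rcases eq_or_lt_of_le ha with h0 | ha
  · rw [← h0, zero_add, show (0:ℝ) - b = -b by ring, abs_neg, abs_of_nonneg hb,
      Real.zero_rpow hp0.ne', mul_zero, zero_add]
    have h2 := psiAux_ge_two hq (one_div_pos.mpr hs)
    nlinarith [Real.rpow_nonneg hb (q + 1)]
  · rcases eq_or_lt_of_le hb with h0 | hb
    · rw [← h0, add_zero, show a - 0 = a by ring, abs_of_nonneg ha.le,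
        Real.zero_rpow hp0.ne', mul_zero, add_zero]
      have h2 := psiAux_ge_two hq hs
      nlinarith [Real.rpow_nonneg ha.le (q + 1)]
    · have ht : 0 < b / a := div_pos hb ha
      have key := main_ineq hq hs ht
      have ha' : (0:ℝ) < a ^ (q + 1) := Real.rpow_pos_of_pos ha _
      have h1 : a ^ (q + 1) * (1 + b / a) ^ (q + 1) = (a + b) ^ (q + 1) := by
        rw [← Real.mul_rpow ha.le (by positivity)]
        congr 1
        field_simp
      have h2 : a ^ (q + 1) * |1 - b / a| ^ (q + 1) = |a - b| ^ (q + 1) := by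
        rw [← Real.mul_rpow ha.le (abs_nonneg _)]
        congr 1
        rw [show a * |1 - b / a| = |a| * |1 - b / a| by rw [abs_of_pos ha], ← abs_mul]
        congr 1
        field_simp
      have h3 : a ^ (q + 1) * (b / a) ^ (q + 1) = b ^ (q + 1) := by
        rw [← Real.mul_rpow ha.le (div_nonneg hb.le ha.le)]
        congr 1
        field_simp
      calc (a + b) ^ (q + 1) + |a - b| ^ (q + 1)
          = a ^ (q + 1) * ((1 + b / a) ^ (q + 1) + |1 - b / a| ^ (q + 1)) := by
            rw [mul_add, h1, h2]
        _ ≤ a ^ (q + 1) * (psiAux q s + psiAux q (1 / s) * (b / a) ^ (q + 1)) :=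
            mul_le_mul_of_nonneg_left key ha'.le
        _ = psiAux q s * a ^ (q + 1) + psiAux q (1 / s) * b ^ (q + 1) := by
            rw [mul_add, ← h3]
            ring

/-- For `p ∈ [2,∞)` and `ψ_p(s) = (1+s)^{p−1} + sgn(1−s)|1−s|^{p−1}`:
for all `x, y ∈ ℝ` and `s > 0`,
`|x+y|^p + |x−y|^p ≤ ψ_p(s)|x|^p + ψ_p(1/s)|y|^p`. -/
theorem stmt_3 (p : ℝ) (hp : 2 ≤ p) (x y : ℝ) (s : ℝ) (hs : 0 < s) :
    |x + y| ^ p + |x - y| ^ p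
      ≤ ((1 + s) ^ (p - 1) + Real.sign (1 - s) * |1 - s| ^ (p - 1)) * |x| ^ p
          + ((1 + 1 / s) ^ (p - 1) + Real.sign (1 - 1 / s) * |1 - 1 / s| ^ (p - 1)) * |y| ^ p := by
  have hq : 1 ≤ p - 1 := by linarith
  have habs : (|x + y| = |x| + |y| ∧ |x - y| = |(|x| - |y|)|) ∨
      (|x + y| = |(|x| - |y|)| ∧ |x - y| = |x| + |y|) := by
    rcases le_total 0 x with hx | hx <;> rcases le_total 0 y with hy | hy
    · left
      constructor
      · rw [abs_of_nonneg hx, abs_of_nonneg hy, abs_of_nonneg (by linarith : 0 ≤ x + y)]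
      · rw [abs_of_nonneg hx, abs_of_nonneg hy]
    · right
      constructor
      · rw [abs_of_nonneg hx, abs_of_nonpos hy]
        congr 1
        ring
      · rw [abs_of_nonneg hx, abs_of_nonpos hy, abs_of_nonneg (by linarith : 0 ≤ x - y)]
        ring
    · right
      constructor
      · rw [abs_of_nonpos hx, abs_of_nonneg hy, show -x - y = -(x + y) by ring, abs_neg]
      · rw [abs_of_nonpos hx, abs_of_nonneg hy, abs_of_nonpos (by linarith : x - y ≤ 0)]
        ring
    · left
      constructor
      · rw [abs_of_nonpos hx, abs_of_nonpos hy, abs_of_nonpos (by linarith : x + y ≤ 0)]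
        ring
      · rw [abs_of_nonpos hx, abs_of_nonpos hy, abs_sub_comm x y, show -x - -y = y - x by ring]
  have hLHS : |x + y| ^ p + |x - y| ^ p = (|x| + |y|) ^ p + |(|x| - |y|)| ^ p := by
    rcases habs with ⟨h1, h2⟩ | ⟨h1, h2⟩ <;> rw [h1, h2] <;> ring
  have main := two_var hq hs (abs_nonneg x) (abs_nonneg y)
  rw [show p - 1 + 1 = p by ring] at main
  rw [psiAux_def, psiAux_def] at main
  rw [hLHS]
  exact main
end

section
/- Let p ∈ (1,∞), let V be a real vector space, and let E : V → [0,∞) be p-homogeneous (E(au) = |a|^p E(u)) and satisfy p-Clarkson's inequality: for p ∈ (1,2], E(f+g) + E(f−g) ≥ 2(E(f)^{1/(p−1)} + E(g)^{1/(p−1)})^{p−1}, and for p ∈ [2,∞), E(f+g) + E(f−g) ≤ 2(E(f)^{1/(p−1)} + E(g)^{1/(p−1)})^{p−1}, and suppose E^{1/p} satisfies the triangle inequality. Then for all f, g ∈ V: E(f+g) + E(f−g) − 2E(f) ≤ 2·max(1, p−1)·(E(f)^{1/(p−1)} + E(g)^{1/(p−1)})^{(p−2)⁺}·E(g)^{min(1,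 1/(p−1))}, where (p−2)⁺ = max(p−2, 0). -/
/-!
For `p ≤ 2`, weak Clarkson applied to the pair `f + g, f - g`, together with homogeneity
`E(2u) = 2^p E(u)` and the power-mean inequality for the exponent `1/(p-1) ≥ 1`, gives the
parallelogram-type bound `E(f+g) + E(f-g) ≤ 2(E f + E g)`. For `p ≥ 2`, strong Clarkson bounds
`E(f+g) + E(f-g)` by `2(a+b)^{p-1}` with `a^{p-1} = E f`, `b^{p-1} = E g`, and the convexity
estimate `(a+b)^q - a^q ≤ q(a+b)^{q-1} b` (`q = p - 1 ≥ 1`) finishes.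
-/

namespace Real

lemma rpow_add_le_mul_rpow_add_rpow {r x y : ℝ} (hr : 1 ≤ r) (hx : 0 ≤ x) (hy : 0 ≤ y) :
    (x + y) ^ r ≤ 2 ^ (r - 1) * (x ^ r + y ^ r) := by
  lift x to NNReal using hx
  lift y to NNReal using hy
  exact_mod_cast NNReal.rpow_add_le_mul_rpow_add_rpow x y hr

lemma add_le_two_rpow_mul_rpow_add_rpow_rpow {s x y : ℝ} (hs0 : 0 < s) (hs1 : s ≤ 1)
    (hx : 0 ≤ x) (hy : 0 ≤ y) :
    x + y ≤ 2 ^ (1 - s) * (x ^ (1 / s) + y ^ (1 / s)) ^ s := by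
  have hr : 1 ≤ 1 / s := one_le_one_div hs0 hs1
  have hxy : 0 ≤ x + y := add_nonneg hx hy
  have h := rpow_le_rpow (rpow_nonneg hxy _) (rpow_add_le_mul_rpow_add_rpow hr hx hy) hs0.le
  rw [one_div, rpow_inv_rpow hxy hs0.ne',
    mul_rpow (by positivity) (by positivity), ← rpow_mul zero_le_two, sub_mul, inv_mul_cancel₀
    hs0.ne', one_mul] at h
  simpa only [one_div] using h

lemma add_rpow_sub_rpow_le {q a b : ℝ} (hq : 1 ≤ q) (ha : 0 ≤ a) (hb : 0 ≤ b) :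
    (a + b) ^ q - a ^ q ≤ q * (a + b) ^ (q - 1) * b := by
  rcases (add_nonneg ha hb).eq_or_lt with hc | hc
  · obtain ⟨rfl, rfl⟩ : a = 0 ∧ b = 0 := ⟨by linarith, by linarith⟩
    simp
  set c := a + b
  have hbc : -1 ≤ -(b / c) := by
    rw [neg_le_neg_iff, div_le_one hc]
    linarith
  have h := one_add_mul_self_le_rpow_one_add hbc hq
  rw [show 1 + -(b / c) = a / c by field_simp; ring, div_rpow ha hc.le,
    le_div_iff₀ (rpow_pos_of_pos hc q)] at h
  calc c ^ q - a ^ q ≤ c ^ q - (1 + q * -(b / c)) * c ^ q := by linarith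
    _ = q * (c ^ q / c) * b := by ring
    _ = q * c ^ (q - 1) * b := by rw [rpow_sub_one hc.ne']

end Real

lemma add_add_sub_le_two_mul_add_of_clarkson {V : Type*} [AddCommGroup V] [Module ℝ V]
    {p : ℝ} {E : V → ℝ} (hp : 1 < p) (hp2 : p ≤ 2) (hE0 : ∀ u, 0 ≤ E u)
    (hhom : ∀ (a : ℝ) (u : V), E (a • u) = |a| ^ p * E u)
    (hCla : ∀ u v : V,
      2 * (E u ^ (1 / (p - 1)) + E v ^ (1 / (p - 1))) ^ (p - 1) ≤ E (u + v) + E (u - v))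
    (f g : V) :
    E (f + g) + E (f - g) ≤ 2 * (E f + E g) := by
  have hmean := Real.add_le_two_rpow_mul_rpow_add_rpow_rpow (s := p - 1) (by linarith)
    (by linarith) (hE0 (f + g)) (hE0 (f - g))
  have hcla := hCla (f + g) (f - g)
  rw [show f + g + (f - g) = (2 : ℝ) • f by rw [two_smul]; abel,
    show f + g - (f - g) = (2 : ℝ) • g by rw [two_smul]; abel,
    hhom, hhom, abs_two] at hcla
  have hpow : (2 : ℝ) ^ (1 - (p - 1)) * 2 ^ p = 4 := by
    rw [← Real.rpow_add two_pos, show 1 - (p - 1) + p = 2 by ring]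
    norm_num
  set M := (E (f + g) ^ (1 / (p - 1)) + E (f - g) ^ (1 / (p - 1))) ^ (p - 1)
  have hscaled : 2 ^ (1 - (p - 1)) * (2 * M) ≤ 4 * (E f + E g) :=
    calc _ ≤ (2 : ℝ) ^ (1 - (p - 1)) * (2 ^ p * (E f + E g)) :=
          mul_le_mul_of_nonneg_left (by linarith) (by positivity)
      _ = 4 * (E f + E g) := by rw [← mul_assoc, hpow]
  linarith

theorem stmt_7_general {V : Type*} [AddCommGroup V] [Module ℝ V]
    (p : ℝ) (hp : 1 < p) (E : V → ℝ)
    (hE0 : ∀ u, 0 ≤ E u)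
    (hhom : ∀ (a : ℝ) (u : V), E (a • u) = |a| ^ p * E u)
    (hCla₁ : p ≤ 2 → ∀ u v : V,
      2 * (E u ^ (1 / (p - 1)) + E v ^ (1 / (p - 1))) ^ (p - 1) ≤ E (u + v) + E (u - v))
    (hCla₂ : 2 ≤ p → ∀ u v : V,
      E (u + v) + E (u - v) ≤ 2 * (E u ^ (1 / (p - 1)) + E v ^ (1 / (p - 1))) ^ (p - 1))
    (f g : V) :
    E (f + g) + E (f - g) - 2 * E f
      ≤ 2 * max 1 (p - 1)
          * (E f ^ (1 / (p - 1)) + E g ^ (1 / (p - 1))) ^ max (p - 2) 0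
          * E g ^ min 1 (1 / (p - 1)) := by
  have hp1 : 0 < p - 1 := by linarith
  rcases le_or_gt p 2 with hp2 | hp2
  · rw [max_eq_left (by linarith), max_eq_right (by linarith),
      min_eq_left (one_le_one_div hp1 (by linarith)), Real.rpow_zero, Real.rpow_one]
    linarith [add_add_sub_le_two_mul_add_of_clarkson hp hp2 hE0 hhom (hCla₁ hp2) f g]
  · rw [max_eq_right (by linarith), max_eq_left (by linarith),
      min_eq_right ((div_le_one hp1).2 (by linarith))]
    have hmvt := Real.add_rpow_sub_rpow_le (q := p - 1) (by linarith)
      (Real.rpow_nonneg (hE0 f) (1 / (p - 1))) (Real.rpow_nonneg (hE0 g) (1 / (p - 1)))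
    rw [one_div, Real.rpow_inv_rpow (hE0 f) hp1.ne', show p - 1 - 1 = p - 2 by ring] at hmvt
    rw [one_div] at hCla₂ ⊢
    linarith [hCla₂ hp2.le f g]

/-- For a `p`-energy form `E` (i.e. `E^{1/p}` is a seminorm and `E` is `p`-homogeneous)
satisfying `p`-Clarkson's inequality, one has the central-difference bound
`E(f+g) + E(f−g) − 2E(f) ≤ 2·max(1,p−1)·(E(f)^{1/(p−1)} + E(g)^{1/(p−1)})^{(p−2)⁺}·E(g)^{min(1,1/(p−1))}`. -/
theorem stmt_7 {V : Type*} [AddCommGroup V] [Module ℝ V]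
    (p : ℝ) (hp : 1 < p) (E : V → ℝ)
    (hE0 : ∀ u, 0 ≤ E u)
    (hhom : ∀ (a : ℝ) (u : V), E (a • u) = |a| ^ p * E u)
    (htri : ∀ u v : V, E (u + v) ^ (1 / p) ≤ E u ^ (1 / p) + E v ^ (1 / p))
    (hCla₁ : p ≤ 2 → ∀ u v : V,
      2 * (E u ^ (1 / (p - 1)) + E v ^ (1 / (p - 1))) ^ (p - 1) ≤ E (u + v) + E (u - v))
    (hCla₂ : 2 ≤ p → ∀ u v : V,
      E (u + v) + E (u - v) ≤ 2 * (E u ^ (1 / (p - 1)) + E v ^ (1 / (p - 1))) ^ (p - 1))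
    (f g : V) :
    E (f + g) + E (f - g) - 2 * E f
      ≤ 2 * max 1 (p - 1)
          * (E f ^ (1 / (p - 1)) + E g ^ (1 / (p - 1))) ^ max (p - 2) 0
          * E g ^ min 1 (1 / (p - 1)) :=
  stmt_7_general p hp E hE0 hhom hCla₁ hCla₂ f g
end

section
/- Let p ∈ (1,∞), let V be a real vector space and E : V → [0,∞) a p-energy form (E^{1/p} is a seminorm, E is p-homogeneous) satisfying p-Clarkson's inequality. Then for every f, g ∈ V the function t ↦ E(f + t g) from ℝ to [0,∞) is differentiable. -/
open Set Filter Real Topology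

/-- A convex function on `ℝ` whose symmetric second difference at `t` is `O(δ^r)` with `r > 1`
is differentiable at `t`. -/
private lemma convex_diff_aux {φ : ℝ → ℝ} (hφ : ConvexOn ℝ Set.univ φ) {t C r : ℝ}
    (hC : 0 ≤ C) (hr : 1 < r)
    (hD : ∀ δ : ℝ, 0 < δ → δ ≤ 1 → φ (t + δ) + φ (t - δ) - 2 * φ t ≤ C * δ ^ r) :
    DifferentiableAt ℝ φ t := by
  set s : ℝ → ℝ := slope φ t with hsdef
  have hmono : MonotoneOn s ({t}ᶜ) := by
    have := hφ.slope_mono (Set.mem_univ t)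
    simpa [Set.compl_eq_univ_diff] using this
  have hslope : ∀ y : ℝ, s y = (φ y - φ t) / (y - t) := by
    intro y
    rw [hsdef, slope_def_field]
  have hmono' : ∀ y z : ℝ, y ≠ t → z ≠ t → y ≤ z → s y ≤ s z := by
    intro y z hy hz hyz
    exact hmono (by simpa using hy) (by simpa using hz) hyz
  have hbddA : BddAbove (s '' Set.Iio t) := by
    refine ⟨s (t + 1), ?_⟩
    rintro _ ⟨y, hy, rfl⟩
    exact hmono' y (t + 1) (ne_of_lt hy) (by linarith) (by linarith [hy.out])
  have hbddB : BddBelow (s '' Set.Ioi t) := by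
    refine ⟨s (t - 1), ?_⟩
    rintro _ ⟨z, hz, rfl⟩
    exact hmono' (t - 1) z (by linarith) (ne_of_gt hz) (by linarith [hz.out])
  have hneA : (s '' Set.Iio t).Nonempty := ⟨s (t - 1), ⟨t - 1, by simp, rfl⟩⟩
  have hneB : (s '' Set.Ioi t).Nonempty := ⟨s (t + 1), ⟨t + 1, by simp, rfl⟩⟩
  set M : ℝ := sSup (s '' Set.Iio t) with hM
  set L : ℝ := sInf (s '' Set.Ioi t) with hL
  have hML : M ≤ L := by
    refine csSup_le hneA ?_
    rintro _ ⟨y, hy, rfl⟩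
    refine le_csInf hneB ?_
    rintro _ ⟨z, hz, rfl⟩
    exact hmono' y z (ne_of_lt hy) (ne_of_gt hz) (by linarith [hy.out, hz.out])
  have hkey : ∀ δ : ℝ, 0 < δ → δ ≤ 1 → L ≤ M + C * δ ^ (r - 1) := by
    intro δ h0 h1
    have h₁ : L ≤ s (t + δ) := csInf_le hbddB ⟨t + δ, by simp [h0], rfl⟩
    have h₂ : s (t - δ) ≤ M := le_csSup hbddA ⟨t - δ, by simp [h0], rfl⟩
    have h₃ : s (t + δ) ≤ s (t - δ) + C * δ ^ (r - 1) := by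
      rw [hslope, hslope]
      have hD' := hD δ h0 h1
      have hrr : δ ^ (r - 1) = δ ^ r / δ := by
        rw [Real.rpow_sub h0, Real.rpow_one]
      have h4 : (φ (t + δ) - φ t) / δ - (φ t - φ (t - δ)) / δ ≤ C * (δ ^ r / δ) := by
        rw [div_sub_div_same, ← mul_div_assoc]
        exact (div_le_div_iff_of_pos_right h0).mpr (by linarith)
      have e1 : t + δ - t = δ := by ring
      have e2 : t - δ - t = -δ := by ring
      rw [e1, e2]
      have : (φ (t - δ) - φ t) / (-δ) = (φ t - φ (t - δ)) / δ := by
        rw [div_neg, ← neg_div, neg_sub]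
      rw [this] at *
      rw [hrr]
      linarith [h4]
    linarith
  have hLM : L ≤ M := by
    have htends : Tendsto (fun δ : ℝ => M + C * δ ^ (r - 1)) (𝓝[>] (0 : ℝ)) (𝓝 M) := by
      have h0 : Tendsto (fun δ : ℝ => δ ^ (r - 1)) (𝓝 (0 : ℝ)) (𝓝 (0 : ℝ)) := by
        have hc := Real.continuousAt_rpow_const 0 (r - 1) (Or.inr (by linarith))
        have : (0 : ℝ) ^ (r - 1) = 0 := Real.zero_rpow (by linarith)
        simpa [ContinuousAt, this] using hc
      have ha : Tendsto (fun δ : ℝ => δ ^ (r - 1)) (𝓝[>] (0 : ℝ)) (𝓝 0) :=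
        h0.mono_left nhdsWithin_le_nhds
      have hb : Tendsto (fun δ : ℝ => M + C * δ ^ (r - 1)) (𝓝[>] (0 : ℝ)) (𝓝 (M + C * 0)) :=
        (ha.const_mul C).const_add M
      simpa using hb
    refine ge_of_tendsto htends ?_
    filter_upwards [Ioc_mem_nhdsGT (one_pos : (0:ℝ) < 1)] with δ hδ
    exact hkey δ hδ.1 hδ.2
  have hEq : M = L := le_antisymm hML hLM
  have tR : Tendsto s (𝓝[>] t) (𝓝 L) :=
    MonotoneOn.tendsto_nhdsGT (hmono.mono fun y hy => ne_of_gt hy) hbddB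
  have tL : Tendsto s (𝓝[<] t) (𝓝 M) :=
    MonotoneOn.tendsto_nhdsLT (hmono.mono fun y hy => ne_of_lt hy) hbddA
  have hHas : HasDerivAt φ L t := by
    rw [hasDerivAt_iff_tendsto_slope, ← nhdsLT_sup_nhdsGT, tendsto_sup]
    exact ⟨hEq ▸ tL, tR⟩
  exact hHas.differentiableAt

/-- For a `p`-energy form `E` satisfying `p`-Clarkson's inequality, the function
`t ↦ E(f + t g)` is differentiable on `ℝ` for all `f, g`. -/
theorem stmt_8 {V : Type*} [AddCommGroup V] [Module ℝ V]
    (p : ℝ) (hp : 1 < p) (E : V → ℝ)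
    (hE0 : ∀ u, 0 ≤ E u)
    (hhom : ∀ (a : ℝ) (u : V), E (a • u) = |a| ^ p * E u)
    (htri : ∀ u v : V, E (u + v) ^ (1 / p) ≤ E u ^ (1 / p) + E v ^ (1 / p))
    (hCla₁ : p ≤ 2 → ∀ u v : V,
      2 * (E u ^ (1 / (p - 1)) + E v ^ (1 / (p - 1))) ^ (p - 1) ≤ E (u + v) + E (u - v))
    (hCla₂ : 2 ≤ p → ∀ u v : V,
      E (u + v) + E (u - v) ≤ 2 * (E u ^ (1 / (p - 1)) + E v ^ (1 / (p - 1))) ^ (p - 1))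
    (f g : V) :
    Differentiable ℝ fun t : ℝ => E (f + t • g) := by
  have hp0 : (0 : ℝ) < p := by linarith
  have hp1 : (0 : ℝ) < p - 1 := by linarith
  have hq0 : (0 : ℝ) < 1 / (p - 1) := by positivity
  -- cancellation lemmas
  have hcancel : ∀ x : ℝ, 0 ≤ x → (x ^ (1 / p)) ^ p = x := fun x hx => by
    rw [one_div, Real.rpow_inv_rpow hx hp0.ne']
  have hcancel' : ∀ x : ℝ, 0 ≤ x → (x ^ (1 / (p - 1))) ^ (p - 1) = x := fun x hx => by
    rw [one_div, Real.rpow_inv_rpow hx hp1.ne']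
  have hcancel'' : ∀ x : ℝ, 0 ≤ x → (x ^ (p - 1)) ^ (1 / (p - 1)) = x := fun x hx => by
    rw [one_div, Real.rpow_rpow_inv hx hp1.ne']
  -- convexity-type inequality for E
  have hEconv : ∀ u v : V, ∀ a b : ℝ, 0 ≤ a → 0 ≤ b → a + b = 1 →
      E (a • u + b • v) ≤ a * E u + b * E v := by
    intro u v a b ha hb hab
    have h1 : E (a • u + b • v) ^ (1 / p) ≤ a * E u ^ (1 / p) + b * E v ^ (1 / p) := by
      refine (htri (a • u) (b • v)).trans_eq ?_
      rw [hhom, hhom, Real.mul_rpow (by positivity) (hE0 u),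
        Real.mul_rpow (by positivity) (hE0 v), one_div,
        Real.rpow_rpow_inv (abs_nonneg a) hp0.ne', Real.rpow_rpow_inv (abs_nonneg b) hp0.ne',
        abs_of_nonneg ha, abs_of_nonneg hb]
    have h2 : E (a • u + b • v) = (E (a • u + b • v) ^ (1 / p)) ^ p :=
      (hcancel _ (hE0 _)).symm
    have h3 : (E (a • u + b • v) ^ (1 / p)) ^ p ≤ (a * E u ^ (1 / p) + b * E v ^ (1 / p)) ^ p :=
      Real.rpow_le_rpow (Real.rpow_nonneg (hE0 _) _) h1 hp0.le
    have h4 : (a * E u ^ (1 / p) + b * E v ^ (1 / p)) ^ p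
        ≤ a * (E u ^ (1 / p)) ^ p + b * (E v ^ (1 / p)) ^ p := by
      have := (convexOn_rpow hp.le).2 (Set.mem_Ici.2 (Real.rpow_nonneg (hE0 u) (1 / p)))
        (Set.mem_Ici.2 (Real.rpow_nonneg (hE0 v) (1 / p))) ha hb hab
      simpa [smul_eq_mul] using this
    rw [hcancel _ (hE0 u), hcancel _ (hE0 v)] at h4
    linarith [h2, h3, h4]
  -- convexity of the function
  have hconv : ConvexOn ℝ Set.univ (fun t : ℝ => E (f + t • g)) := by
    refine ⟨convex_univ, ?_⟩
    intro x _ y _ a b ha hb hab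
    simp only [smul_eq_mul]
    have hrw : f + (a * x + b * y) • g = a • (f + x • g) + b • (f + y • g) := by
      have h : a • (f + x • g) + b • (f + y • g) = (a + b) • f + (a * x + b * y) • g := by
        module
      rw [h, hab, one_smul]
    rw [hrw]
    exact hEconv _ _ a b ha hb hab
  -- the key second-difference bound, then conclude
  intro t
  set u : V := f + t • g with hu
  have hbnd : ∃ C r : ℝ, 0 ≤ C ∧ 1 < r ∧ ∀ δ : ℝ, 0 < δ → δ ≤ 1 →
      E (f + (t + δ) • g) + E (f + (t - δ) • g) - 2 * E (f + t • g) ≤ C * δ ^ r := by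
    rcases le_total p 2 with hple | hpge
    · -- case p ≤ 2
      refine ⟨2 * E g, p, mul_nonneg (by norm_num) (hE0 g), hp, ?_⟩
      intro δ h0 h1
      have hrw1 : f + (t + δ) • g = u + δ • g := by rw [hu]; module
      have hrw2 : f + (t - δ) • g = u - δ • g := by rw [hu]; module
      rw [hrw1, hrw2]
      set A : ℝ := E (u + δ • g) with hA
      set B : ℝ := E (u - δ • g) with hB
      have hA0 : 0 ≤ A := hE0 _
      have hB0 : 0 ≤ B := hE0 _
      have hcla := hCla₁ hple (u + δ • g) (u - δ • g)
      have hsum : (u + δ • g) + (u - δ • g) = (2 : ℝ) • u := by module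
      have hdiff : (u + δ • g) - (u - δ • g) = (2 * δ) • g := by module
      rw [hsum, hdiff, hhom, hhom] at hcla
      have habs2 : |(2 : ℝ)| ^ p = 2 ^ p := by rw [abs_of_pos]; norm_num
      have habs2d : |2 * δ| ^ p = 2 ^ p * δ ^ p := by
        rw [abs_of_pos (by linarith), Real.mul_rpow (by norm_num) h0.le]
      rw [habs2, habs2d] at hcla
      set Y : ℝ := E u + δ ^ p * E g with hY
      have hY0 : 0 ≤ Y := by
        have h6 := Real.rpow_nonneg h0.le p
        have h7 := hE0 u; have h8 := hE0 g
        positivity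
      have h2p : (2 : ℝ) ^ p = 2 * 2 ^ (p - 1) := by
        have hx : (2 : ℝ) ^ (1 + (p - 1)) = 2 ^ (1 : ℝ) * 2 ^ (p - 1) :=
          Real.rpow_add (by norm_num) _ _
        simpa [Real.rpow_one, show 1 + (p - 1) = p by ring] using hx
      have hXle : (A ^ (1 / (p - 1)) + B ^ (1 / (p - 1))) ^ (p - 1) ≤ 2 ^ (p - 1) * Y := by
        have hstep : 2 * ((A ^ (1 / (p - 1)) + B ^ (1 / (p - 1))) ^ (p - 1))
            ≤ 2 * (2 ^ (p - 1) * Y) := by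
          calc 2 * ((A ^ (1 / (p - 1)) + B ^ (1 / (p - 1))) ^ (p - 1))
              ≤ 2 ^ p * E u + 2 ^ p * δ ^ p * E g := hcla
          _ = 2 * (2 ^ (p - 1) * Y) := by rw [h2p, hY]; ring
        linarith
      set X : ℝ := A ^ (1 / (p - 1)) + B ^ (1 / (p - 1)) with hX
      have hX0 : 0 ≤ X := add_nonneg (Real.rpow_nonneg hA0 _) (Real.rpow_nonneg hB0 _)
      have hXle2 : X ≤ 2 * Y ^ (1 / (p - 1)) := by
        have step : (X ^ (p - 1)) ^ (1 / (p - 1)) ≤ (2 ^ (p - 1) * Y) ^ (1 / (p - 1)) :=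
          Real.rpow_le_rpow (Real.rpow_nonneg hX0 _) hXle hq0.le
        rw [hcancel'' X hX0] at step
        rw [Real.mul_rpow (Real.rpow_nonneg (by norm_num) _) hY0,
          hcancel'' 2 (by norm_num)] at step
        exact step
      have hq1 : (1 : ℝ) ≤ 1 / (p - 1) := by
        rw [le_div_iff₀ hp1]; linarith
      have hpm : ((A + B) / 2) ^ (1 / (p - 1)) ≤ X / 2 := by
        have hcv := (convexOn_rpow hq1).2 (Set.mem_Ici.2 hA0) (Set.mem_Ici.2 hB0)
          (by norm_num : (0:ℝ) ≤ 1/2) (by norm_num : (0:ℝ) ≤ 1/2) (by norm_num)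
        simp only [smul_eq_mul] at hcv
        calc ((A + B) / 2) ^ (1 / (p - 1)) = (1/2 * A + 1/2 * B) ^ (1 / (p - 1)) := by ring_nf
        _ ≤ 1/2 * A ^ (1 / (p - 1)) + 1/2 * B ^ (1 / (p - 1)) := hcv
        _ = X / 2 := by rw [hX]; ring
      have hABle : (A + B) / 2 ≤ Y := by
        refine (Real.rpow_le_rpow_iff (by positivity) hY0 hq0).mp ?_
        calc ((A + B) / 2) ^ (1 / (p - 1)) ≤ X / 2 := hpm
        _ ≤ Y ^ (1 / (p - 1)) := by linarith [hXle2]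
      rw [hY] at hABle
      have h9 : A + B ≤ 2 * E u + 2 * (δ ^ p * E g) := by linarith
      have h10 : 2 * (δ ^ p * E g) = 2 * E g * δ ^ p := by ring
      rw [← hu]
      linarith [h10 ▸ h9]
    · -- case 2 ≤ p
      set q : ℝ := 1 / (p - 1) with hqdef
      set r : ℝ := p * q with hrdef
      have hr1 : 1 < r := by
        rw [hrdef, hqdef]
        rw [mul_one_div, lt_div_iff₀ hp1]
        linarith
      have hr0 : 0 < r := by linarith
      have hpsi : E u ≤ (E u ^ q + E g ^ q) ^ (p - 1) := by
        have hbase : E u ^ q ≤ E u ^ q + E g ^ q := by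
          have := Real.rpow_nonneg (hE0 g) q
          linarith
        calc E u = (E u ^ q) ^ (p - 1) := by rw [hqdef, hcancel' _ (hE0 u)]
        _ ≤ (E u ^ q + E g ^ q) ^ (p - 1) :=
          Real.rpow_le_rpow (Real.rpow_nonneg (hE0 u) q) hbase hp1.le
      refine ⟨2 * ((E u ^ q + E g ^ q) ^ (p - 1) - E u), r, by linarith, hr1, ?_⟩
      intro δ h0 h1
      have hrw1 : f + (t + δ) • g = u + δ • g := by rw [hu]; module
      have hrw2 : f + (t - δ) • g = u - δ • g := by rw [hu]; module
      rw [hrw1, hrw2, ← hu]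
      have hcla := hCla₂ hpge u (δ • g)
      have hEδg : E (δ • g) = δ ^ p * E g := by
        rw [hhom, abs_of_pos h0]
      rw [hEδg] at hcla
      have hEδgq : (δ ^ p * E g) ^ q = δ ^ r * E g ^ q := by
        rw [Real.mul_rpow (Real.rpow_nonneg h0.le p) (hE0 g), hrdef,
          Real.rpow_mul h0.le]
      rw [hEδgq] at hcla
      -- convexity chord bound with s = δ ^ r
      set σ : ℝ := δ ^ r with hσdef
      have hσ0 : 0 ≤ σ := Real.rpow_nonneg h0.le r
      have hσ1 : σ ≤ 1 := Real.rpow_le_one h0.le h1 hr0.le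
      have hchord : (E u ^ q + σ * E g ^ q) ^ (p - 1)
          ≤ (1 - σ) * E u + σ * (E u ^ q + E g ^ q) ^ (p - 1) := by
        have hcv := (convexOn_rpow (by linarith : (1:ℝ) ≤ p - 1)).2
          (Set.mem_Ici.2 (Real.rpow_nonneg (hE0 u) q))
          (Set.mem_Ici.2 (add_nonneg (Real.rpow_nonneg (hE0 u) q) (Real.rpow_nonneg (hE0 g) q)))
          (by linarith : (0:ℝ) ≤ 1 - σ) hσ0 (by ring)
        simp only [smul_eq_mul] at hcv
        have hpt : (1 - σ) * (E u ^ q) + σ * (E u ^ q + E g ^ q) = E u ^ q + σ * E g ^ q := by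
          ring
        rw [hpt] at hcv
        calc (E u ^ q + σ * E g ^ q) ^ (p - 1)
            ≤ (1 - σ) * (E u ^ q) ^ (p - 1) + σ * (E u ^ q + E g ^ q) ^ (p - 1) := hcv
        _ = (1 - σ) * E u + σ * (E u ^ q + E g ^ q) ^ (p - 1) := by
            rw [hqdef, hcancel' _ (hE0 u)]
      have hfinal : E (u + δ • g) + E (u - δ • g)
          ≤ 2 * E u + 2 * ((E u ^ q + E g ^ q) ^ (p - 1) - E u) * σ := by
        calc E (u + δ • g) + E (u - δ • g)
            ≤ 2 * (E u ^ q + σ * E g ^ q) ^ (p - 1) := by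
              rw [hσdef]; exact hcla
        _ ≤ 2 * ((1 - σ) * E u + σ * (E u ^ q + E g ^ q) ^ (p - 1)) := by linarith
        _ = 2 * E u + 2 * ((E u ^ q + E g ^ q) ^ (p - 1) - E u) * σ := by ring
      rw [hσdef] at hfinal
      linarith
  obtain ⟨C, r, hC, hr, hDD⟩ := hbnd
  exact convex_diff_aux hconv hC hr hDD
end

section
/- Let p ∈ (1,∞), let V be a real vector space and E : V → [0,∞) a p-energy form satisfying p-Clarkson's inequality, and for f, g ∈ V define E(f; g) := (1/p)·(d/dt)E(f + tg)|_{t=0} (which exists). Then for all f, g ∈ V: |E(f; g)| ≤ E(f)^{(p−1)/p} · E(g)^{1/p}. -/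
open Filter Topology Set

private lemma rpow_sub_rpow_le_aux {p a b : ℝ} (hp : 1 ≤ p) (ha : 0 ≤ a) (hab : a ≤ b) :
    b ^ p - a ^ p ≤ p * b ^ (p - 1) * (b - a) := by
  rcases eq_or_lt_of_le hab with rfl | hlt
  · simp
  have hb : 0 ≤ b := ha.trans hab
  obtain ⟨c, hc, hceq⟩ := exists_hasDerivAt_eq_slope (fun x => x ^ p)
    (fun x => p * x ^ (p - 1)) hlt
    (fun x _ => (Real.hasDerivAt_rpow_const (Or.inr hp)).continuousAt.continuousWithinAt)
    (fun x _ => Real.hasDerivAt_rpow_const (Or.inr hp))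
  have hcb : p * c ^ (p - 1) ≤ p * b ^ (p - 1) := by
    have h0 : 0 < p := lt_of_lt_of_le one_pos hp
    have h1 : c ^ (p - 1) ≤ b ^ (p - 1) :=
      Real.rpow_le_rpow (le_of_lt (ha.trans_lt hc.1)) (le_of_lt hc.2) (by linarith)
    exact mul_le_mul_of_nonneg_left h1 h0.le
  have hsl : (b ^ p - a ^ p) / (b - a) ≤ p * b ^ (p - 1) := hceq ▸ hcb
  calc b ^ p - a ^ p = (b ^ p - a ^ p) / (b - a) * (b - a) := by
        rw [div_mul_cancel₀]
        exact sub_ne_zero.2 hlt.ne'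
    _ ≤ p * b ^ (p - 1) * (b - a) := mul_le_mul_of_nonneg_right hsl (by linarith)

private lemma abs_rpow_sub_rpow_le_aux {p a b M : ℝ} (hp : 1 ≤ p) (ha : 0 ≤ a) (hb : 0 ≤ b)
    (haM : a ≤ M) (hbM : b ≤ M) :
    |b ^ p - a ^ p| ≤ p * M ^ (p - 1) * |b - a| := by
  have hp0 : 0 < p := lt_of_lt_of_le one_pos hp
  have key : ∀ x y : ℝ, 0 ≤ x → x ≤ y → y ≤ M →
      y ^ p - x ^ p ≤ p * M ^ (p - 1) * (y - x) := by
    intro x y hx hxy hyM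
    calc y ^ p - x ^ p ≤ p * y ^ (p - 1) * (y - x) := rpow_sub_rpow_le_aux hp hx hxy
      _ ≤ p * M ^ (p - 1) * (y - x) := by
          apply mul_le_mul_of_nonneg_right _ (by linarith)
          exact mul_le_mul_of_nonneg_left
            (Real.rpow_le_rpow (hx.trans hxy) hyM (by linarith)) hp0.le
  rcases le_total a b with hab | hba
  · rw [abs_of_nonneg (sub_nonneg.2 (Real.rpow_le_rpow ha hab hp0.le)),
      abs_of_nonneg (sub_nonneg.2 hab)]
    exact key a b ha hab hbM
  · rw [abs_of_nonpos (sub_nonpos.2 (Real.rpow_le_rpow hb hba hp0.le)),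
      abs_of_nonpos (sub_nonpos.2 hba), neg_sub, neg_sub]
    exact key b a hb hba haM

/-- For a `p`-energy form `E` satisfying `p`-Clarkson's inequality, the two-variable
form `E(f;g) := (1/p)(d/dt)E(f+tg)|_{t=0}` satisfies
`|E(f;g)| ≤ E(f)^{(p−1)/p} E(g)^{1/p}`. -/
theorem stmt_9 {V : Type*} [AddCommGroup V] [Module ℝ V]
    (p : ℝ) (hp : 1 < p) (E : V → ℝ)
    (hE0 : ∀ u, 0 ≤ E u)
    (hhom : ∀ (a : ℝ) (u : V), E (a • u) = |a| ^ p * E u)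
    (htri : ∀ u v : V, E (u + v) ^ (1 / p) ≤ E u ^ (1 / p) + E v ^ (1 / p))
    (hCla₁ : p ≤ 2 → ∀ u v : V,
      2 * (E u ^ (1 / (p - 1)) + E v ^ (1 / (p - 1))) ^ (p - 1) ≤ E (u + v) + E (u - v))
    (hCla₂ : 2 ≤ p → ∀ u v : V,
      E (u + v) + E (u - v) ≤ 2 * (E u ^ (1 / (p - 1)) + E v ^ (1 / (p - 1))) ^ (p - 1))
    (f g : V) :
    |(1 / p) * deriv (fun t : ℝ => E (f + t • g)) 0|
      ≤ E f ^ ((p - 1) / p) * E g ^ (1 / p) := by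
  have hp0 : 0 < p := lt_trans one_pos hp
  set φ : ℝ → ℝ := fun t : ℝ => E (f + t • g) with hφ
  set c1 : ℝ := E f ^ (1 / p) with hc1
  set c2 : ℝ := E g ^ (1 / p) with hc2
  have hc1n : 0 ≤ c1 := Real.rpow_nonneg (hE0 f) _
  have hc2n : 0 ≤ c2 := Real.rpow_nonneg (hE0 g) _
  have hφ0 : φ 0 = E f := by simp [hφ]
  -- E (t • g) ^ (1/p) = |t| * c2
  have hEg : ∀ t : ℝ, E (t • g) ^ (1 / p) = |t| * c2 := by
    intro t
    rw [hhom t g, Real.mul_rpow (Real.rpow_nonneg (abs_nonneg t) p) (hE0 g),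
      ← Real.rpow_mul (abs_nonneg t), mul_one_div_cancel hp0.ne', Real.rpow_one, hc2]
  -- Lipschitz bound on the p-th root
  have hlip : ∀ t : ℝ, |φ t ^ (1 / p) - c1| ≤ |t| * c2 := by
    intro t
    rw [abs_sub_le_iff]
    constructor
    · have := htri f (t • g)
      rw [hEg t] at this
      linarith
    · have := htri (f + t • g) ((-t) • g)
      have heq : f + t • g + (-t) • g = f := by
        rw [add_assoc, ← add_smul]
        simp
      rw [heq, hEg (-t), abs_neg] at this
      simp only [hφ, hc1]
      linarith
  -- main difference estimate
  have hroot : ∀ t : ℝ, (φ t ^ (1 / p)) ^ p = φ t := by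
    intro t
    rw [← Real.rpow_mul (hE0 _), one_div, inv_mul_cancel₀ hp0.ne', Real.rpow_one]
  have hc1p : c1 ^ p = E f := by
    rw [hc1, ← Real.rpow_mul (hE0 f), one_div, inv_mul_cancel₀ hp0.ne', Real.rpow_one]
  have hdiff : ∀ t : ℝ, |φ t - φ 0| ≤ p * (c1 + |t| * c2) ^ (p - 1) * (|t| * c2) := by
    intro t
    have hA : φ t ^ (1 / p) ≤ c1 + |t| * c2 := by
      have := htri f (t • g)
      rw [hEg t] at this
      exact this
    have hM : 0 ≤ c1 + |t| * c2 := by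
      have := mul_nonneg (abs_nonneg t) hc2n
      linarith
    have hB : c1 ≤ c1 + |t| * c2 := le_add_of_nonneg_right (mul_nonneg (abs_nonneg t) hc2n)
    have hkey := abs_rpow_sub_rpow_le_aux hp.le hc1n (Real.rpow_nonneg (hE0 _) _) hB hA
    rw [hroot t, hc1p] at hkey
    rw [hφ0]
    calc |φ t - E f| ≤ p * (c1 + |t| * c2) ^ (p - 1) * |φ t ^ (1 / p) - c1| := hkey
      _ ≤ p * (c1 + |t| * c2) ^ (p - 1) * (|t| * c2) := by
          apply mul_le_mul_of_nonneg_left (hlip t)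
          exact mul_nonneg hp0.le (Real.rpow_nonneg hM _)
  -- bound the slope
  have hslope : ∀ t : ℝ, |slope φ 0 t| ≤ p * (c1 + |t| * c2) ^ (p - 1) * c2 := by
    intro t
    have hM : 0 ≤ c1 + |t| * c2 := by
      have := mul_nonneg (abs_nonneg t) hc2n
      linarith
    rcases eq_or_ne t 0 with rfl | ht
    · have h0 : slope φ 0 0 = 0 := by simp [slope_def_field]
      rw [h0, abs_zero]
      have hM0 : (0:ℝ) ≤ c1 + |(0:ℝ)| * c2 := hM
      simp only [abs_zero] at hM0
      exact mul_nonneg (mul_nonneg hp0.le (Real.rpow_nonneg hM0 _)) hc2n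
    · rw [slope_def_field, abs_div, sub_zero]
      rw [div_le_iff₀ (abs_pos.2 ht)]
      calc |φ t - φ 0| ≤ p * (c1 + |t| * c2) ^ (p - 1) * (|t| * c2) := hdiff t
        _ = p * (c1 + |t| * c2) ^ (p - 1) * c2 * |t| := by ring
  by_cases hd : DifferentiableAt ℝ φ 0
  · have htend : Tendsto (slope φ 0) (𝓝[≠] 0) (𝓝 (deriv φ 0)) :=
      hasDerivAt_iff_tendsto_slope.mp hd.hasDerivAt
    have habs : Tendsto (fun t => |slope φ 0 t|) (𝓝[≠] 0) (𝓝 |deriv φ 0|) :=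
      (continuous_abs.tendsto _).comp htend
    have hBtend : Tendsto (fun t : ℝ => p * (c1 + |t| * c2) ^ (p - 1) * c2) (𝓝[≠] 0)
        (𝓝 (p * c1 ^ (p - 1) * c2)) := by
      apply Tendsto.mono_left _ nhdsWithin_le_nhds
      have h1 : Tendsto (fun t : ℝ => c1 + |t| * c2) (𝓝 0) (𝓝 c1) := by
        have : Continuous (fun t : ℝ => c1 + |t| * c2) := by continuity
        have h0 : c1 + |(0:ℝ)| * c2 = c1 := by simp
        simpa [h0] using this.tendsto 0
      have h2 : ContinuousAt (fun x : ℝ => x ^ (p - 1)) c1 :=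
        Real.continuousAt_rpow_const c1 (p - 1) (Or.inr (by linarith))
      exact (((h2.tendsto.comp h1).const_mul p).mul_const c2)
    have hle : |deriv φ 0| ≤ p * c1 ^ (p - 1) * c2 :=
      le_of_tendsto_of_tendsto' habs hBtend hslope
    have hc1e : c1 ^ (p - 1) = E f ^ ((p - 1) / p) := by
      rw [hc1, ← Real.rpow_mul (hE0 f)]
      congr 1
      ring
    rw [abs_mul, abs_of_nonneg (by positivity : (0:ℝ) ≤ 1 / p)]
    calc 1 / p * |deriv φ 0| ≤ 1 / p * (p * c1 ^ (p - 1) * c2) := by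
          apply mul_le_mul_of_nonneg_left hle (by positivity)
      _ = c1 ^ (p - 1) * c2 := by field_simp
      _ = E f ^ ((p - 1) / p) * E g ^ (1 / p) := by rw [hc1e]
  · rw [deriv_zero_of_not_differentiableAt hd]
    simp only [mul_zero, abs_zero]
    exact mul_nonneg (Real.rpow_nonneg (hE0 f) _) (Real.rpow_nonneg (hE0 g) _)
end

section
/- Let p ∈ (1,∞), V a real vector space, E : V → [0,∞) a p-energy form satisfying p-Clarkson's inequality, and E(f; g) := (1/p)(d/dt)E(f+tg)|_{t=0}. Then for every fixed f ∈ V, the map g ↦ E(f; g) is linear: E(f; g₁ + g₂) = E(f; g₁) + E(f; g₂) and E(f; ag) = a·E(f; g) for a ∈ ℝ. Moreover E(f; f) = E(f) and E(af; g) = sgn(a)|a|^{p−1} E(f; g). -/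
open Set Filter Real Topology

section aux
variable {V : Type*} [AddCommGroup V] [Module ℝ V] {p : ℝ} {E : V → ℝ}

private lemma aux_rpow_invp (hp0 : (0:ℝ) < p) {x : ℝ} (hx : 0 ≤ x) :
    (x ^ (1/p)) ^ p = x := by
  rw [one_div, Real.rpow_inv_rpow hx hp0.ne']

/-- `t ↦ |t|^q * c` has derivative `0` at `0` when `q > 1`. -/
private lemma aux_hasDerivAt_abs_rpow {q : ℝ} (hq : 1 < q) (c : ℝ) :
    HasDerivAt (fun t : ℝ => c * |t| ^ q) 0 0 := by
  rw [hasDerivAt_iff_tendsto_slope]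
  have habs : Tendsto (fun t : ℝ => |c| * |t| ^ (q - 1)) (𝓝[≠] 0) (𝓝 0) := by
    have hc : ContinuousAt (fun t : ℝ => |c| * |t| ^ (q - 1)) 0 := by
      exact (continuousAt_const.mul
        ((Real.continuousAt_rpow_const _ _ (Or.inr (by linarith))).comp
          continuous_abs.continuousAt))
    have h0 : |c| * |(0:ℝ)| ^ (q - 1) = 0 := by
      rw [abs_zero, Real.zero_rpow (by linarith), mul_zero]
    have := hc.tendsto
    rw [h0] at this
    exact this.mono_left nhdsWithin_le_nhds
  apply squeeze_zero_norm' ?_ habs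
  filter_upwards [self_mem_nhdsWithin] with t ht
  have ht0 : t ≠ 0 := ht
  have habs0 : (0:ℝ) < |t| := abs_pos.2 ht0
  have : slope (fun t : ℝ => c * |t| ^ q) 0 t = c * |t| ^ q / t := by
    rw [slope_def_field, abs_zero, Real.zero_rpow (by linarith), mul_zero, sub_zero, sub_zero]
  rw [this, Real.norm_eq_abs]
  rw [abs_div, abs_mul, abs_of_nonneg (Real.rpow_nonneg (abs_nonneg t) q)]
  rw [mul_div_assoc]
  have : |t| ^ q / |t| = |t| ^ (q - 1) := by
    rw [Real.rpow_sub habs0, Real.rpow_one]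
  rw [this]

/-- Convexity of `E` from homogeneity and the triangle inequality. -/
private lemma aux_convE (hp : 1 < p) (hE0 : ∀ u, 0 ≤ E u)
    (hhom : ∀ (a : ℝ) (u : V), E (a • u) = |a| ^ p * E u)
    (htri : ∀ u v : V, E (u + v) ^ (1 / p) ≤ E u ^ (1 / p) + E v ^ (1 / p))
    (u v : V) {a b : ℝ} (ha : 0 ≤ a) (hb : 0 ≤ b) (hab : a + b = 1) :
    E (a • u + b • v) ≤ a * E u + b * E v := by
  have hp0 : (0:ℝ) < p := by linarith
  have hsc : ∀ (c : ℝ) (w : V), 0 ≤ c → E (c • w) ^ (1/p) = c * E w ^ (1/p) := by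
    intro c w hc
    rw [hhom, Real.mul_rpow (Real.rpow_nonneg (abs_nonneg _) _) (hE0 _),
      ← Real.rpow_mul (abs_nonneg _), mul_one_div, div_self hp0.ne', Real.rpow_one,
      abs_of_nonneg hc]
  have key : E (a • u + b • v) ^ (1/p) ≤ a * E u ^ (1/p) + b * E v ^ (1/p) := by
    refine (htri _ _).trans ?_
    rw [hsc a u ha, hsc b v hb]
  have h2 := Real.rpow_le_rpow (Real.rpow_nonneg (hE0 _) _) key hp0.le
  rw [aux_rpow_invp hp0 (hE0 _)] at h2
  refine h2.trans ?_
  have hcx := (convexOn_rpow hp.le).2 (mem_Ici.2 (Real.rpow_nonneg (hE0 u) (1/p)))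
    (mem_Ici.2 (Real.rpow_nonneg (hE0 v) (1/p))) ha hb hab
  simp only [smul_eq_mul] at hcx
  refine hcx.trans ?_
  rw [aux_rpow_invp hp0 (hE0 u), aux_rpow_invp hp0 (hE0 v)]

/-- Convexity of `t ↦ E (f + t • g)`. -/
private lemma aux_convPhi (hp : 1 < p) (hE0 : ∀ u, 0 ≤ E u)
    (hhom : ∀ (a : ℝ) (u : V), E (a • u) = |a| ^ p * E u)
    (htri : ∀ u v : V, E (u + v) ^ (1 / p) ≤ E u ^ (1 / p) + E v ^ (1 / p))
    (f g : V) : ConvexOn ℝ univ (fun t : ℝ => E (f + t • g)) := by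
  refine ⟨convex_univ, fun x _ y _ a b ha hb hab => ?_⟩
  simp only [smul_eq_mul]
  have hkey : a • (f + x • g) + b • (f + y • g) = f + (a * x + b * y) • g := by
    have h1 : a • (f + x • g) + b • (f + y • g)
        = (a + b) • f + (a * x + b * y) • g := by
      simp only [smul_add, smul_smul, add_smul]; abel
    rw [h1, hab, one_smul]
  rw [← hkey]
  exact aux_convE hp hE0 hhom htri _ _ ha hb hab

/-- The second-difference bound from Clarkson's inequalities. -/
private lemma aux_bound (hp : 1 < p) (hE0 : ∀ u, 0 ≤ E u)
    (hhom : ∀ (a : ℝ) (u : V), E (a • u) = |a| ^ p * E u)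
    (hCla₁ : p ≤ 2 → ∀ u v : V,
      2 * (E u ^ (1 / (p - 1)) + E v ^ (1 / (p - 1))) ^ (p - 1) ≤ E (u + v) + E (u - v))
    (hCla₂ : 2 ≤ p → ∀ u v : V,
      E (u + v) + E (u - v) ≤ 2 * (E u ^ (1 / (p - 1)) + E v ^ (1 / (p - 1))) ^ (p - 1))
    (f g : V) :
    ∃ h : ℝ → ℝ, h 0 = 0 ∧ HasDerivAt h 0 0 ∧
      ∀ t : ℝ, E (f + t • g) + E (f + (-t) • g) ≤ 2 * E f + h t := by
  have hp0 : (0:ℝ) < p := by linarith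
  have hp1 : (0:ℝ) < p - 1 := by linarith
  set r : ℝ := 1 / (p - 1) with hr
  have hr0 : (0:ℝ) < r := by positivity
  rcases le_total p 2 with hple | hpge
  · -- p ≤ 2 : use hCla₁ with u = f + t•g, v = f + (-t)•g
    have hrge1 : (1:ℝ) ≤ r := by
      rw [hr, le_div_iff₀ hp1, one_mul]; linarith
    refine ⟨fun t => 2 * E g * |t| ^ p, ?_, ?_, ?_⟩
    · simp [Real.zero_rpow hp0.ne']
    · exact aux_hasDerivAt_abs_rpow hp _
    · intro t
      show E (f + t • g) + E (f + (-t) • g) ≤ 2 * E f + 2 * E g * |t| ^ p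
      have hcl := hCla₁ hple (f + t • g) (f + (-t) • g)
      have hsum : (f + t • g) + (f + (-t) • g) = (2:ℝ) • f := by
        rw [neg_smul, two_smul]; abel
      have hdiff : (f + t • g) - (f + (-t) • g) = (2 * t) • g := by
        rw [neg_smul, two_mul, add_smul]; abel
      rw [hsum, hdiff, hhom, hhom] at hcl
      set A := E (f + t • g) with hA
      set B := E (f + (-t) • g) with hB
      have hA0 : 0 ≤ A := hE0 _
      have hB0 : 0 ≤ B := hE0 _
      have h2p : |(2:ℝ)| ^ p = 2 * 2 ^ (p - 1) := by
        have h22 : (2:ℝ) ^ p = 2 ^ (1:ℝ) * 2 ^ (p-1) := by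
          rw [← Real.rpow_add (by norm_num : (0:ℝ) < 2)]; ring_nf
        rw [abs_two, h22, Real.rpow_one]
      have h2tp : |2 * t| ^ p = (2 * 2 ^ (p - 1)) * |t| ^ p := by
        rw [abs_mul, Real.mul_rpow (abs_nonneg _) (abs_nonneg _), h2p]
      rw [h2p, h2tp] at hcl
      set W : ℝ := E f + |t| ^ p * E g with hW
      have hW0 : 0 ≤ W := by
        have := hE0 f; have := hE0 g; positivity
      have hstep1 : (A ^ r + B ^ r) ^ (p - 1) ≤ 2 ^ (p - 1) * W := by
        have hre : 2 * 2 ^ (p-1) * E f + 2 * 2 ^ (p-1) * |t| ^ p * E g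
            = 2 * (2 ^ (p-1) * W) := by rw [hW]; ring
        rw [hre] at hcl
        linarith
      have hX0 : 0 ≤ A ^ r + B ^ r := by positivity
      have hstep2 : A ^ r + B ^ r ≤ 2 * W ^ r := by
        have := Real.rpow_le_rpow (Real.rpow_nonneg hX0 _) hstep1 hr0.le
        rwa [← Real.rpow_mul hX0, mul_comm (p-1) r,
          hr, div_mul_cancel₀ 1 hp1.ne', Real.rpow_one,
          Real.mul_rpow (by positivity) hW0, ← Real.rpow_mul (by norm_num : (0:ℝ) ≤ 2),
          mul_comm (p-1) (1/(p-1)), div_mul_cancel₀ 1 hp1.ne', Real.rpow_one] at this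
      -- power mean: ((A+B)/2)^r ≤ (A^r + B^r)/2
      have hpm := (convexOn_rpow hrge1).2 (mem_Ici.2 hA0) (mem_Ici.2 hB0)
        (by norm_num : (0:ℝ) ≤ 1/2) (by norm_num : (0:ℝ) ≤ 1/2) (by norm_num)
      simp only [smul_eq_mul] at hpm
      have hfin : (1/2 * A + 1/2 * B) ^ r ≤ W ^ r := by
        refine hpm.trans ?_; linarith
      have := (Real.rpow_le_rpow_iff (by linarith) hW0 hr0).1 hfin
      have hgoal : A + B ≤ 2 * W := by linarith
      rw [hW] at hgoal
      nlinarith [hgoal]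
  · -- 2 ≤ p : use hCla₂ with u = f, v = t•g
    have hrle1 : r ≤ 1 := by
      rw [hr, div_le_one hp1]; linarith
    set c : ℝ := E f ^ r with hc
    set d : ℝ := E g ^ r with hd
    have hpr1 : 1 < p * r := by
      rw [hr, mul_one_div, lt_div_iff₀ hp1, one_mul]; linarith
    refine ⟨fun t => 2 * (c + |t| ^ (p * r) * d) ^ (p - 1) - 2 * E f, ?_, ?_, ?_⟩
    · show (2:ℝ) * (c + |(0:ℝ)| ^ (p * r) * d) ^ (p - 1) - 2 * E f = 0
      have h0' : |(0:ℝ)| ^ (p * r) = 0 := by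
        rw [abs_zero, Real.zero_rpow (by positivity : p * r ≠ 0)]
      rw [h0', zero_mul, add_zero, hc, ← Real.rpow_mul (hE0 f),
        hr, div_mul_cancel₀ 1 hp1.ne', Real.rpow_one]
      ring
    · -- derivative zero at 0
      have hu : HasDerivAt (fun t : ℝ => (1:ℝ) * |t| ^ (p * r)) 0 0 :=
        aux_hasDerivAt_abs_rpow hpr1 1
      have hu' : HasDerivAt (fun t : ℝ => |t| ^ (p * r)) 0 0 := by
        simpa using hu
      have hinner : HasDerivAt (fun x : ℝ => c + x * d) d 0 := by
        simpa using ((hasDerivAt_id (0:ℝ)).mul_const d).const_add c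
      have hG : HasDerivAt (fun x : ℝ => c + x * d ^ (1:ℕ)) d 0 := by simpa using hinner
      have hGp : HasDerivAt (fun x : ℝ => (c + x * d) ^ (p - 1))
          (d * (p - 1) * (c + 0 * d) ^ (p - 1 - 1)) 0 :=
        hinner.rpow_const (Or.inr (by linarith))
      have h00 : |(0:ℝ)| ^ (p * r) = 0 := by
        rw [abs_zero, Real.zero_rpow (by positivity : p * r ≠ 0)]
      rw [← h00] at hGp
      have hcomp := hGp.comp 0 hu'
      have : HasDerivAt (fun t : ℝ => (c + |t| ^ (p * r) * d) ^ (p - 1)) 0 0 := by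
        simpa [Function.comp_def] using hcomp
      have := (this.const_mul 2).sub_const (2 * E f)
      simpa using this
    · intro t
      show E (f + t • g) + E (f + (-t) • g)
          ≤ 2 * E f + (2 * (c + |t| ^ (p * r) * d) ^ (p - 1) - 2 * E f)
      have hcl := hCla₂ hpge f (t • g)
      have h2 : f - t • g = f + (-t) • g := by rw [neg_smul, sub_eq_add_neg]
      rw [h2, hhom] at hcl
      have h3 : (|t| ^ p * E g) ^ r = |t| ^ (p * r) * d := by
        rw [Real.mul_rpow (Real.rpow_nonneg (abs_nonneg _) _) (hE0 g),
          ← Real.rpow_mul (abs_nonneg t), hd]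
      rw [h3, ← hc] at hcl
      linarith
end aux

/-- Composition with multiplication by a constant. -/
private lemma aux_comp_mul {φ : ℝ → ℝ} {L : ℝ} (h : HasDerivAt φ L 0) (a : ℝ) :
    HasDerivAt (fun t : ℝ => φ (a * t)) (L * a) 0 := by
  have h2t : HasDerivAt (fun t : ℝ => a * t) a 0 := by
    simpa using (hasDerivAt_id (0:ℝ)).const_mul a
  have h' : HasDerivAt φ L (a * 0) := by simpa using h
  simpa [Function.comp_def] using h'.comp 0 h2t

/-- Existence of the derivative at `0` of `t ↦ E (f + t • g)`. -/
private lemma aux_exists_deriv {V : Type*} [AddCommGroup V] [Module ℝ V]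
    {p : ℝ} {E : V → ℝ} (hp : 1 < p) (hE0 : ∀ u, 0 ≤ E u)
    (hhom : ∀ (a : ℝ) (u : V), E (a • u) = |a| ^ p * E u)
    (htri : ∀ u v : V, E (u + v) ^ (1 / p) ≤ E u ^ (1 / p) + E v ^ (1 / p))
    (hCla₁ : p ≤ 2 → ∀ u v : V,
      2 * (E u ^ (1 / (p - 1)) + E v ^ (1 / (p - 1))) ^ (p - 1) ≤ E (u + v) + E (u - v))
    (hCla₂ : 2 ≤ p → ∀ u v : V,
      E (u + v) + E (u - v) ≤ 2 * (E u ^ (1 / (p - 1)) + E v ^ (1 / (p - 1))) ^ (p - 1))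
    (f g : V) :
    ∃ L, HasDerivAt (fun t : ℝ => E (f + t • g)) L 0 := by
  set φ : ℝ → ℝ := fun t => E (f + t • g) with hφ
  obtain ⟨h, h0, hd, hineq⟩ := aux_bound hp hE0 hhom hCla₁ hCla₂ f g
  have hconv : ConvexOn ℝ univ φ := aux_convPhi hp hE0 hhom htri f g
  have hmono : MonotoneOn (slope φ 0) (univ \ {(0:ℝ)}) := hconv.slope_mono (mem_univ 0)
  set q : ℝ → ℝ := slope φ 0 with hq
  have hqd : ∀ t : ℝ, q t = (φ t - φ 0) / t := fun t => by
    rw [hq, slope_def_field, sub_zero]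
  have hmem : ∀ t : ℝ, t ≠ 0 → t ∈ univ \ {(0:ℝ)} := fun t ht => ⟨mem_univ _, ht⟩
  have hmIoi : MonotoneOn q (Ioi 0) :=
    hmono.mono (fun x hx => hmem x (ne_of_gt hx))
  have hmIio : MonotoneOn q (Iio 0) :=
    hmono.mono (fun x hx => hmem x (ne_of_lt hx))
  have hbb : BddBelow (q '' Ioi 0) := by
    refine ⟨q (-1), ?_⟩
    rintro _ ⟨t, ht, rfl⟩
    exact hmono (hmem _ (by norm_num)) (hmem _ (ne_of_gt ht)) (by linarith [mem_Ioi.1 ht])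
  have hba : BddAbove (q '' Iio 0) := by
    refine ⟨q 1, ?_⟩
    rintro _ ⟨t, ht, rfl⟩
    exact hmono (hmem _ (ne_of_lt ht)) (hmem _ (by norm_num)) (by linarith [mem_Iio.1 ht])
  set L : ℝ := sInf (q '' Ioi 0) with hL
  set L' : ℝ := sSup (q '' Iio 0) with hL'
  have hR : Tendsto q (𝓝[>] (0:ℝ)) (𝓝 L) := hmIoi.tendsto_nhdsGT hbb
  have hLt : Tendsto q (𝓝[<] (0:ℝ)) (𝓝 L') := hmIio.tendsto_nhdsLT hba
  have hqle : ∀ s t : ℝ, s < 0 → 0 < t → q s ≤ q t := fun s t hs ht =>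
    hmono (hmem _ (ne_of_lt hs)) (hmem _ (ne_of_gt ht)) (by linarith)
  have hL'leL : L' ≤ L := by
    refine csSup_le ⟨q (-1), ⟨-1, by norm_num, rfl⟩⟩ ?_
    rintro _ ⟨s, hs, rfl⟩
    refine le_csInf ⟨q 1, ⟨1, by norm_num, rfl⟩⟩ ?_
    rintro _ ⟨t, ht, rfl⟩
    exact hqle s t hs ht
  have hφ0 : φ 0 = E f := by simp [hφ]
  have hLleL' : L ≤ L' := by
    have hkey : ∀ t : ℝ, 0 < t → L - L' ≤ h t / t := by
      intro t ht
      have h1 : L ≤ q t := csInf_le hbb ⟨t, ht, rfl⟩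
      have h2 : q (-t) ≤ L' := le_csSup hba ⟨-t, by simpa using ht, rfl⟩
      have ht' : t ≠ 0 := ne_of_gt ht
      have h3 : q t - q (-t) = (φ t + φ (-t) - 2 * φ 0) / t := by
        rw [hqd t, hqd (-t), div_neg, sub_neg_eq_add, ← add_div]
        congr 1
        ring
      have h4 : φ t + φ (-t) - 2 * φ 0 ≤ h t := by
        have := hineq t
        rw [hφ0]; simp only [hφ]
        linarith
      have h5 : q t - q (-t) ≤ h t / t := h3 ▸ (div_le_div_iff_of_pos_right ht).2 h4
      linarith
    have htend : Tendsto (fun t : ℝ => h t / t) (𝓝[>] (0:ℝ)) (𝓝 0) := by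
      have hslope := hasDerivAt_iff_tendsto_slope.1 hd
      have heq : slope h 0 = fun t : ℝ => h t / t := by
        funext t; rw [slope_def_field, h0, sub_zero, sub_zero]
      rw [heq] at hslope
      exact hslope.mono_left (nhdsWithin_mono 0 (fun x hx => ne_of_gt hx))
    have := ge_of_tendsto htend (eventually_nhdsWithin_of_forall hkey)
    linarith
  have hLL : L' = L := le_antisymm hL'leL hLleL'
  refine ⟨L, hasDerivAt_iff_tendsto_slope.2 ?_⟩
  show Tendsto q (𝓝[≠] (0:ℝ)) (𝓝 L)
  rw [← nhdsLT_sup_nhdsGT (0:ℝ), tendsto_sup]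
  exact ⟨hLL ▸ hLt, hR⟩

/-- For a `p`-energy form `E` satisfying `p`-Clarkson's inequality, with
`E(f;g) := (1/p)(d/dt)E(f+tg)|_{t=0}`: the map `g ↦ E(f;g)` is linear,
`E(f;f) = E(f)`, and `E(af;g) = sgn(a)|a|^{p−1} E(f;g)`. -/
theorem stmt_10 {V : Type*} [AddCommGroup V] [Module ℝ V]
    (p : ℝ) (hp : 1 < p) (E : V → ℝ)
    (hE0 : ∀ u, 0 ≤ E u)
    (hhom : ∀ (a : ℝ) (u : V), E (a • u) = |a| ^ p * E u)
    (htri : ∀ u v : V, E (u + v) ^ (1 / p) ≤ E u ^ (1 / p) + E v ^ (1 / p))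
    (hCla₁ : p ≤ 2 → ∀ u v : V,
      2 * (E u ^ (1 / (p - 1)) + E v ^ (1 / (p - 1))) ^ (p - 1) ≤ E (u + v) + E (u - v))
    (hCla₂ : 2 ≤ p → ∀ u v : V,
      E (u + v) + E (u - v) ≤ 2 * (E u ^ (1 / (p - 1)) + E v ^ (1 / (p - 1))) ^ (p - 1))
    (f : V) :
    (∀ g₁ g₂ : V,
        (1 / p) * deriv (fun t : ℝ => E (f + t • (g₁ + g₂))) 0
          = (1 / p) * deriv (fun t : ℝ => E (f + t • g₁)) 0
            + (1 / p) * deriv (fun t : ℝ => E (f + t • g₂)) 0) ∧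
    (∀ (a : ℝ) (g : V),
        (1 / p) * deriv (fun t : ℝ => E (f + t • (a • g))) 0
          = a * ((1 / p) * deriv (fun t : ℝ => E (f + t • g)) 0)) ∧
    ((1 / p) * deriv (fun t : ℝ => E (f + t • f)) 0 = E f) ∧
    (∀ (a : ℝ) (g : V),
        (1 / p) * deriv (fun t : ℝ => E (a • f + t • g)) 0
          = Real.sign a * |a| ^ (p - 1) * ((1 / p) * deriv (fun t : ℝ => E (f + t • g)) 0)) := by
  have hp0 : (0:ℝ) < p := by linarith
  have hD : ∀ f g : V, ∃ L, HasDerivAt (fun t : ℝ => E (f + t • g)) L 0 :=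
    aux_exists_deriv hp hE0 hhom htri hCla₁ hCla₂
  refine ⟨?_, ?_, ?_, ?_⟩
  · -- additivity
    intro g₁ g₂
    obtain ⟨L₁, hL₁⟩ := hD f g₁
    obtain ⟨L₂, hL₂⟩ := hD f g₂
    obtain ⟨L₁₂, hL₁₂⟩ := hD f (g₁ + g₂)
    have key : L₁₂ = L₁ + L₂ := by
      set D : ℝ → ℝ := fun t =>
        (1/2) * E (f + (2*t) • g₁) + (1/2) * E (f + (2*t) • g₂) - E (f + t • (g₁ + g₂)) with hDdef
      have hc1 : HasDerivAt (fun t : ℝ => E (f + (2*t) • g₁)) (L₁ * 2) 0 :=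
        aux_comp_mul hL₁ 2
      have hc2 : HasDerivAt (fun t : ℝ => E (f + (2*t) • g₂)) (L₂ * 2) 0 :=
        aux_comp_mul hL₂ 2
      have hdD : HasDerivAt D ((1/2) * (L₁ * 2) + (1/2) * (L₂ * 2) - L₁₂) 0 :=
        ((hc1.const_mul (1/2)).add (hc2.const_mul (1/2))).sub hL₁₂
      have hmin : IsLocalMin D 0 := by
        apply Filter.Eventually.of_forall
        intro t
        have hsplit : f + t • (g₁ + g₂)
            = (1/2 : ℝ) • (f + (2*t) • g₁) + (1/2 : ℝ) • (f + (2*t) • g₂) := by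
          simp only [smul_add, smul_smul]
          rw [show (1/2 : ℝ) * (2*t) = t by ring]
          rw [show ((1:ℝ)/2) • f + t • g₁ + (((1:ℝ)/2) • f + t • g₂)
            = (((1:ℝ)/2) + (1/2)) • f + (t • g₁ + t • g₂) by rw [add_smul]; abel]
          norm_num
        have hle : E (f + t • (g₁ + g₂))
            ≤ (1/2) * E (f + (2*t) • g₁) + (1/2) * E (f + (2*t) • g₂) := by
          rw [hsplit]
          exact aux_convE hp hE0 hhom htri _ _ (by norm_num) (by norm_num) (by norm_num)
        have hD0 : D 0 = 0 := by
          simp only [hDdef]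
          norm_num
          ring
        rw [hD0]
        simp only [hDdef]
        linarith
      have := hmin.deriv_eq_zero
      rw [hdD.deriv] at this
      linarith
    rw [hL₁.deriv, hL₂.deriv, hL₁₂.deriv, key]
    ring
  · -- scalar multiplication in g
    intro a g
    obtain ⟨L, hL⟩ := hD f g
    have hfun : (fun t : ℝ => E (f + t • (a • g))) = (fun t : ℝ => E (f + (a*t) • g)) := by
      funext t; rw [smul_smul, mul_comm]
    have hc : HasDerivAt (fun t : ℝ => E (f + (a*t) • g)) (L * a) 0 :=
      aux_comp_mul hL a
    rw [hfun, hc.deriv, hL.deriv]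
    ring
  · -- E(f;f) = E f
    have hfun : ∀ t : ℝ, t ∈ Ioo (-1:ℝ) 1 →
        E (f + t • f) = ((1:ℝ) + t) ^ p * E f := by
      intro t ht
      have : f + t • f = ((1:ℝ) + t) • f := by rw [add_smul, one_smul]
      rw [this, hhom, abs_of_pos (by linarith [ht.1] : (0:ℝ) < 1 + t)]
    have hmem : Ioo (-1:ℝ) 1 ∈ 𝓝 (0:ℝ) := Ioo_mem_nhds (by norm_num) (by norm_num)
    have heq : (fun t : ℝ => E (f + t • f)) =ᶠ[𝓝 (0:ℝ)]
        (fun t : ℝ => ((1:ℝ) + t) ^ p * E f) := by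
      filter_upwards [hmem] with t ht
      exact hfun t ht
    have hbase : HasDerivAt (fun t : ℝ => (1:ℝ) + t) 1 0 := by
      simpa using (hasDerivAt_id (0:ℝ)).const_add 1
    have hr : HasDerivAt (fun t : ℝ => ((1:ℝ) + t) ^ p)
        (1 * p * ((1:ℝ) + 0) ^ (p - 1)) 0 :=
      hbase.rpow_const (Or.inl (by norm_num))
    have hr2 : HasDerivAt (fun t : ℝ => ((1:ℝ) + t) ^ p * E f)
        ((1 * p * ((1:ℝ) + 0) ^ (p - 1)) * E f) 0 := hr.mul_const (E f)
    have hfinal : HasDerivAt (fun t : ℝ => E (f + t • f))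
        ((1 * p * ((1:ℝ) + 0) ^ (p - 1)) * E f) 0 := by
      exact hr2.congr_of_eventuallyEq heq
    rw [hfinal.deriv]
    rw [show (1:ℝ) + 0 = 1 by norm_num, Real.one_rpow]
    field_simp
  · -- scaling in f
    intro a g
    obtain ⟨L, hL⟩ := hD f g
    rcases eq_or_ne a 0 with rfl | ha
    · have hfun : (fun t : ℝ => E ((0:ℝ) • f + t • g)) = (fun t : ℝ => E g * |t| ^ p) := by
        funext t
        rw [zero_smul, zero_add, hhom, mul_comm]
      have hder : HasDerivAt (fun t : ℝ => E g * |t| ^ p) 0 0 :=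
        aux_hasDerivAt_abs_rpow hp (E g)
      rw [hfun, hder.deriv]
      simp [Real.sign_zero]
    · have hfun : (fun t : ℝ => E (a • f + t • g))
          = (fun t : ℝ => |a| ^ p * E (f + (a⁻¹ * t) • g)) := by
        funext t
        rw [← hhom]
        congr 1
        rw [smul_add, smul_smul, mul_inv_cancel_left₀ ha]
      have hc : HasDerivAt (fun t : ℝ => E (f + (a⁻¹ * t) • g)) (L * a⁻¹) 0 :=
        aux_comp_mul hL a⁻¹
      have hder : HasDerivAt (fun t : ℝ => |a| ^ p * E (f + (a⁻¹ * t) • g))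
          (|a| ^ p * (L * a⁻¹)) 0 := hc.const_mul _
      rw [hfun, hder.deriv, hL.deriv]
      have habs : |a| ^ p = |a| ^ (p - 1) * |a| := by
        rw [show p = (p - 1) + 1 by ring, Real.rpow_add (abs_pos.2 ha), Real.rpow_one]
        ring_nf
      have hsign : |a| * a⁻¹ = Real.sign a := by
        rcases lt_or_gt_of_ne ha with h | h
        · rw [abs_of_neg h, Real.sign_of_neg h]
          field_simp
        · rw [abs_of_pos h, Real.sign_of_pos h]
          field_simp
      rw [habs]
      rw [show |a| ^ (p-1) * |a| * (L * a⁻¹) = (|a| * a⁻¹) * (|a| ^ (p-1) * L) by ring, hsign]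
      ring
end

section
/- Let p ∈ (1,∞), V a real vector space, E : V → [0,∞) a p-energy form satisfying p-Clarkson's inequality and the strong subadditivity E(u ∨ v) + E(u ∧ v) ≤ E(u) + E(v) (where V is a vector lattice of functions and ∨, ∧ are pointwise max/min, assumed to preserve V). If u₁, u₂, v ∈ V satisfy (u₂ − u₁) ∧ v = 0 pointwise, then E(u₁; v) ≥ E(u₂; v). -/
open Set Filter Topology



/-- A convex function on `ℝ` whose symmetric second difference at `0` is dominated by a
function `φ` with `φ 0 = 0` and `φ' 0 = 0` is differentiable at `0`. -/
lemma aux_conv_hasDerivAt {g φ : ℝ → ℝ} (hg : ConvexOn ℝ Set.univ g) (hφ0 : φ 0 = 0)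
    (hφd : HasDerivAt φ 0 0) (hb : ∀ t : ℝ, 0 < t → g t + g (-t) - 2 * g 0 ≤ φ t) :
    ∃ L, HasDerivAt g L 0 := by
  set s : ℝ → ℝ := slope g 0 with hs
  have smono : MonotoneOn s (Set.univ \ {0}) := hg.slope_mono (Set.mem_univ 0)
  have hmem : ∀ t : ℝ, t ≠ 0 → t ∈ Set.univ \ {0} := fun t ht => ⟨trivial, ht⟩
  have smono_Ioi : MonotoneOn s (Set.Ioi 0) := fun a ha b hb hab =>
    smono (hmem a (ne_of_gt ha)) (hmem b (ne_of_gt hb)) hab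
  have smono_Iio : MonotoneOn s (Set.Iio 0) := fun a ha b hb hab =>
    smono (hmem a (ne_of_lt ha)) (hmem b (ne_of_lt hb)) hab
  have hbdd_Ioi : BddBelow (s '' Set.Ioi 0) := by
    refine ⟨s (-1), ?_⟩
    rintro _ ⟨t, ht, rfl⟩
    exact smono (hmem (-1) (by norm_num)) (hmem t (ne_of_gt ht)) (by simp at ht ⊢; linarith)
  have hbdd_Iio : BddAbove (s '' Set.Iio 0) := by
    refine ⟨s 1, ?_⟩
    rintro _ ⟨t, ht, rfl⟩
    exact smono (hmem t (ne_of_lt ht)) (hmem 1 (by norm_num)) (by simp at ht ⊢; linarith)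
  set L := sInf (s '' Set.Ioi 0) with hL
  set M := sSup (s '' Set.Iio 0) with hM
  have hLt : Tendsto s (𝓝[>] (0:ℝ)) (𝓝 L) := smono_Ioi.tendsto_nhdsGT hbdd_Ioi
  have hMt : Tendsto s (𝓝[<] (0:ℝ)) (𝓝 M) := smono_Iio.tendsto_nhdsLT hbdd_Iio
  have hML : M ≤ L := by
    refine csSup_le ⟨s (-1), Set.mem_image_of_mem _ (by norm_num)⟩ ?_
    rintro _ ⟨a, ha, rfl⟩
    refine le_csInf ⟨s 1, Set.mem_image_of_mem _ (by norm_num)⟩ ?_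
    rintro _ ⟨b, hbb, rfl⟩
    exact smono (hmem a (ne_of_lt ha)) (hmem b (ne_of_gt hbb))
      (le_of_lt (lt_trans ha hbb))
  have hLM : L ≤ M := by
    have hslope : Tendsto (slope φ 0) (𝓝[>] (0:ℝ)) (𝓝 0) :=
      (hasDerivAt_iff_tendsto_slope.mp hφd).mono_left
        (nhdsWithin_mono _ (fun x hx => ne_of_gt hx))
    have ht0 : Tendsto (fun t => M + slope φ 0 t) (𝓝[>] (0:ℝ)) (𝓝 (M + 0)) :=
      tendsto_const_nhds.add hslope
    rw [add_zero] at ht0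
    refine ge_of_tendsto ht0 ?_
    filter_upwards [self_mem_nhdsWithin] with t ht
    have ht' : (t : ℝ) ≠ 0 := ne_of_gt ht
    have h1 : L ≤ s t := csInf_le hbdd_Ioi (Set.mem_image_of_mem _ ht)
    have h2 : s (-t) ≤ M := le_csSup hbdd_Iio (Set.mem_image_of_mem _ (by simpa using ht))
    have hst : s t = s (-t) + (g t + g (-t) - 2 * g 0) / t := by
      have hd : s t - s (-t) = (g t + g (-t) - 2 * g 0) / t := by
        simp only [hs, slope_def_field, sub_zero]
        rw [div_sub_div _ _ ht' (neg_ne_zero.mpr ht'),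
          div_eq_div_iff (mul_ne_zero ht' (neg_ne_zero.mpr ht')) ht']
        ring
      linarith
    have h3 : slope φ 0 t = φ t / t := by
      rw [slope_def_field, hφ0, sub_zero, sub_zero]
    have h4 : (g t + g (-t) - 2 * g 0) / t ≤ φ t / t := by
      exact div_le_div_of_nonneg_right (hb t ht) (le_of_lt ht)
    calc L ≤ s t := h1
      _ = s (-t) + (g t + g (-t) - 2 * g 0) / t := hst
      _ ≤ M + φ t / t := add_le_add h2 h4
      _ = M + slope φ 0 t := by rw [h3]
  have hMLeq : M = L := le_antisymm hML hLM
  refine ⟨L, hasDerivAt_iff_tendsto_slope.mpr ?_⟩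
  rw [← nhdsLT_sup_nhdsGT (0:ℝ), tendsto_sup]
  exact ⟨hMLeq ▸ hMt, hLt⟩


lemma aux_energy_convexOn {X : Type*} (p : ℝ) (hp : 1 < p)
    (F : Submodule ℝ (X → ℝ)) (E : (X → ℝ) → ℝ)
    (hE0 : ∀ u ∈ F, 0 ≤ E u)
    (hhom : ∀ (a : ℝ), ∀ u ∈ F, E (a • u) = |a| ^ p * E u)
    (htri : ∀ u ∈ F, ∀ v ∈ F, E (u + v) ^ (1 / p) ≤ E u ^ (1 / p) + E v ^ (1 / p))
    (u v : X → ℝ) (hu : u ∈ F) (hv : v ∈ F) :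
    ConvexOn ℝ Set.univ (fun t : ℝ => E (u + t • v)) := by
  have hpne : p ≠ 0 := by positivity
  have hmem : ∀ t : ℝ, u + t • v ∈ F := fun t => F.add_mem hu (F.smul_mem t hv)
  set N : ℝ → ℝ := fun t => E (u + t • v) ^ (1 / p) with hN
  have hN0 : ∀ t, 0 ≤ N t := fun t => Real.rpow_nonneg (hE0 _ (hmem t)) _
  -- homogeneity of the seminorm
  have hhomN : ∀ (c : ℝ) (w : X → ℝ), w ∈ F → 0 ≤ c → E (c • w) ^ (1 / p) = c * E w ^ (1 / p) := by
    intro c w hw hc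
    rw [hhom c w hw, Real.mul_rpow (Real.rpow_nonneg (abs_nonneg c) p) (hE0 w hw),
      ← Real.rpow_mul (abs_nonneg c), mul_one_div, div_self hpne, Real.rpow_one,
      abs_of_nonneg hc]
  -- convexity of N
  have hNconv : ∀ (a b la mu : ℝ), 0 ≤ la → 0 ≤ mu → la + mu = 1 →
      N (la * a + mu * b) ≤ la * N a + mu * N b := by
    intro a b la mu hla hmu hlm
    have key : u + (la * a + mu * b) • v = la • (u + a • v) + mu • (u + b • v) := by
      funext x
      simp only [Pi.add_apply, Pi.smul_apply, smul_eq_mul]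
      linear_combination (-(u x)) * hlm
    have h1 : N (la * a + mu * b)
        ≤ E (la • (u + a • v)) ^ (1 / p) + E (mu • (u + b • v)) ^ (1 / p) := by
      rw [hN]
      simp only
      rw [key]
      exact htri _ (F.smul_mem la (hmem a)) _ (F.smul_mem mu (hmem b))
    rw [hhomN la _ (hmem a) hla, hhomN mu _ (hmem b) hmu] at h1
    exact h1
  -- now E (u + t • v) = (N t) ^ p
  have hEN : ∀ t, E (u + t • v) = N t ^ p := by
    intro t
    rw [hN]
    simp only
    rw [← Real.rpow_mul (hE0 _ (hmem t)), one_div, inv_mul_cancel₀ hpne, Real.rpow_one]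
  refine ⟨convex_univ, fun a _ b _ la mu hla hmu hlm => ?_⟩
  simp only [smul_eq_mul]
  rw [hEN, hEN, hEN]
  calc N (la * a + mu * b) ^ p ≤ (la * N a + mu * N b) ^ p :=
        Real.rpow_le_rpow (hN0 _) (hNconv a b la mu hla hmu hlm) (le_of_lt (lt_trans one_pos hp))
    _ ≤ la * N a ^ p + mu * N b ^ p := by
        have := (convexOn_rpow (le_of_lt hp)).2 (Set.mem_Ici.mpr (hN0 a))
          (Set.mem_Ici.mpr (hN0 b)) hla hmu hlm
        simpa using this


lemma aux_clarkson_bound {X : Type*} (p : ℝ) (hp : 1 < p)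
    (F : Submodule ℝ (X → ℝ)) (E : (X → ℝ) → ℝ)
    (hE0 : ∀ u ∈ F, 0 ≤ E u)
    (hhom : ∀ (a : ℝ), ∀ u ∈ F, E (a • u) = |a| ^ p * E u)
    (htri : ∀ u ∈ F, ∀ v ∈ F, E (u + v) ^ (1 / p) ≤ E u ^ (1 / p) + E v ^ (1 / p))
    (hCla₁ : p ≤ 2 → ∀ u ∈ F, ∀ v ∈ F,
      2 * (E u ^ (1 / (p - 1)) + E v ^ (1 / (p - 1))) ^ (p - 1) ≤ E (u + v) + E (u - v))
    (hCla₂ : 2 ≤ p → ∀ u ∈ F, ∀ v ∈ F,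
      E (u + v) + E (u - v) ≤ 2 * (E u ^ (1 / (p - 1)) + E v ^ (1 / (p - 1))) ^ (p - 1))
    (u v : X → ℝ) (hu : u ∈ F) (hv : v ∈ F) :
    ∃ L, HasDerivAt (fun t : ℝ => E (u + t • v)) L 0 := by
  have hp0 : (0:ℝ) < p := lt_trans one_pos hp
  have hp1' : (0:ℝ) < p - 1 := by linarith
  have hpne : p ≠ 0 := ne_of_gt hp0
  have hmem : ∀ t : ℝ, u + t • v ∈ F := fun t => F.add_mem hu (F.smul_mem t hv)
  have hgconv := aux_energy_convexOn p hp F E hE0 hhom htri u v hu hv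
  have h0v : u + (0:ℝ) • v = u := by module
  have hgneg : ∀ t : ℝ, u + (-t) • v = u - t • v := fun t => by module
  have hEtv : ∀ t : ℝ, 0 < t → E (t • v) = t ^ p * E v := by
    intro t ht
    rw [hhom t v hv, abs_of_pos ht]
  rcases le_total p 2 with hple | hpge
  · -- case p ≤ 2
    refine aux_conv_hasDerivAt hgconv (φ := fun t : ℝ => 2 * E v * t ^ p) ?_ ?_ ?_
    · simp [Real.zero_rpow hpne]
    · have h1 : HasDerivAt (fun t : ℝ => t ^ p) (p * (0:ℝ) ^ (p - 1)) 0 :=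
        Real.hasDerivAt_rpow_const (Or.inr (le_of_lt hp))
      have h2 := h1.const_mul (2 * E v)
      refine h2.congr_deriv ?_
      rw [Real.zero_rpow (ne_of_gt hp1')]
      ring
    · intro t ht
      show E (u + t • v) + E (u + (-t) • v) - 2 * E (u + (0:ℝ) • v) ≤ 2 * E v * t ^ p
      rw [hgneg, h0v]
      set x := E (u + t • v) with hx
      set y := E (u - t • v) with hy
      have hx0 : 0 ≤ x := hE0 _ (hmem t)
      have hy0 : 0 ≤ y := by
        rw [hy, ← hgneg]; exact hE0 _ (hmem (-t))
      set U : X → ℝ := (1/2 : ℝ) • (u + t • v) with hU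
      set W : X → ℝ := (1/2 : ℝ) • (u - t • v) with hW
      have hUm : U ∈ F := F.smul_mem _ (hmem t)
      have hWm : W ∈ F := by
        rw [hW, ← hgneg]; exact F.smul_mem _ (hmem (-t))
      have hUW1 : U + W = u := by rw [hU, hW]; module
      have hUW2 : U - W = t • v := by rw [hU, hW]; module
      set c : ℝ := (1/2 : ℝ) ^ p with hc
      have hc0 : (0:ℝ) ≤ c := Real.rpow_nonneg (by norm_num) _
      have hEU : E U = c * x := by
        rw [hU, hhom _ _ (hmem t), abs_of_pos (by norm_num : (0:ℝ) < 1/2)]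
      have hEW : E W = c * y := by
        rw [hW, hhom _ _ (by rw [← hgneg]; exact hmem (-t)),
          abs_of_pos (by norm_num : (0:ℝ) < 1/2)]
      set r : ℝ := 1 / (p - 1) with hr
      have hr1 : 1 ≤ r := by
        rw [hr, le_div_iff₀ hp1']; linarith
      have hrp : r * (p - 1) = 1 := by
        rw [hr]; field_simp
      set S : ℝ := x ^ r + y ^ r with hS
      have hS0 : 0 ≤ S := by positivity
      have key1 : 2 * (c * S ^ (p - 1)) ≤ E u + t ^ p * E v := by
        have h := hCla₁ hple U hUm W hWm
        rw [hUW1, hUW2, hEtv t ht, hEU, hEW] at h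
        have e1 : (c * x) ^ r + (c * y) ^ r = c ^ r * S := by
          rw [Real.mul_rpow hc0 hx0, Real.mul_rpow hc0 hy0, hS]; ring
        rw [e1, Real.mul_rpow (Real.rpow_nonneg hc0 _) hS0, ← Real.rpow_mul hc0, hrp,
          Real.rpow_one] at h
        linarith
      -- power mean inequality
      have pm : ((1/2) * x + (1/2) * y) ^ r ≤ (1/2) * x ^ r + (1/2) * y ^ r := by
        have := (convexOn_rpow hr1).2 (Set.mem_Ici.mpr hx0) (Set.mem_Ici.mpr hy0)
          (by norm_num : (0:ℝ) ≤ 1/2) (by norm_num : (0:ℝ) ≤ 1/2) (by norm_num)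
        simpa using this
      have pm2 : (1/2) * (x + y) ≤ (2 * c) * S ^ (p - 1) := by
        have t1 := Real.rpow_le_rpow (Real.rpow_nonneg (by positivity) r)
          pm (le_of_lt hp1')
        rw [← Real.rpow_mul (by positivity), hrp, Real.rpow_one] at t1
        have e2 : ((1/2) * x ^ r + (1/2) * y ^ r) ^ (p - 1)
            = (1/2 : ℝ) ^ (p - 1) * S ^ (p - 1) := by
          rw [show (1/2) * x ^ r + (1/2) * y ^ r = (1/2 : ℝ) * S by rw [hS]; ring,
            Real.mul_rpow (by norm_num) hS0]
        have e3 : (1/2 : ℝ) ^ (p - 1) = 2 * c := by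
          rw [Real.rpow_sub (by norm_num : (0:ℝ) < 1/2), Real.rpow_one, hc]
          ring
        rw [e2, e3] at t1
        calc (1/2) * (x + y) = (1/2) * x + (1/2) * y := by ring
          _ ≤ 2 * c * S ^ (p - 1) := t1
      linarith
  · -- case 2 ≤ p
    set A : ℝ := E u ^ (1 / (p - 1)) with hA
    set B : ℝ := E v ^ (1 / (p - 1)) with hB
    set q : ℝ := p * (1 / (p - 1)) with hq
    have hq1 : 1 < q := by
      rw [hq, mul_one_div, lt_div_iff₀ hp1']; linarith
    have hq0 : q ≠ 0 := by positivity
    have hAp : A ^ (p - 1) = E u := by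
      rw [hA, ← Real.rpow_mul (hE0 u hu), one_div, inv_mul_cancel₀ (ne_of_gt hp1'),
        Real.rpow_one]
    refine aux_conv_hasDerivAt hgconv
      (φ := fun t : ℝ => 2 * (A + B * t ^ q) ^ (p - 1) - 2 * E u) ?_ ?_ ?_
    · simp [Real.zero_rpow hq0, hAp]
    · have h1 : HasDerivAt (fun t : ℝ => t ^ q) (q * (0:ℝ) ^ (q - 1)) 0 :=
        Real.hasDerivAt_rpow_const (Or.inr (le_of_lt hq1))
      have h2 : HasDerivAt (fun t : ℝ => A + B * t ^ q) (B * (q * (0:ℝ) ^ (q - 1))) 0 :=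
        (h1.const_mul B).const_add A
      have h3 := h2.rpow_const (p := p - 1) (Or.inr (by linarith : 1 ≤ p - 1))
      have h4 := (h3.const_mul 2).sub_const (2 * E u)
      refine h4.congr_deriv ?_
      rw [Real.zero_rpow (by linarith : q - 1 ≠ 0)]
      ring
    · intro t ht
      show E (u + t • v) + E (u + (-t) • v) - 2 * E (u + (0:ℝ) • v)
        ≤ 2 * (A + B * t ^ q) ^ (p - 1) - 2 * E u
      rw [hgneg, h0v]
      have h := hCla₂ hpge u hu (t • v) (F.smul_mem t hv)
      have e1 : E u ^ (1 / (p - 1)) + E (t • v) ^ (1 / (p - 1)) = A + B * t ^ q := by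
        rw [hEtv t ht, Real.mul_rpow (Real.rpow_nonneg (le_of_lt ht) p) (hE0 v hv),
          ← Real.rpow_mul (le_of_lt ht), ← hq, ← hA, ← hB]
        ring
      rw [e1] at h
      linarith

/-- Monotonicity of the `p`-Laplacian values: if `E` is a `p`-energy form on a vector
lattice `F` of functions, satisfying `p`-Clarkson's inequality and the strong
subadditivity `E(u ∨ v) + E(u ∧ v) ≤ E(u) + E(v)`, and `u₁, u₂, v ∈ F` satisfy
`(u₂ − u₁) ∧ v = 0` pointwise, then `E(u₁; v) ≥ E(u₂; v)` where
`E(f;g) := (1/p)(d/dt)E(f+tg)|_{t=0}`. -/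
theorem stmt_11 {X : Type*} (p : ℝ) (hp : 1 < p)
    (F : Submodule ℝ (X → ℝ)) (E : (X → ℝ) → ℝ)
    (hsupF : ∀ u ∈ F, ∀ v ∈ F, u ⊔ v ∈ F)
    (hinfF : ∀ u ∈ F, ∀ v ∈ F, u ⊓ v ∈ F)
    (hE0 : ∀ u ∈ F, 0 ≤ E u)
    (hhom : ∀ (a : ℝ), ∀ u ∈ F, E (a • u) = |a| ^ p * E u)
    (htri : ∀ u ∈ F, ∀ v ∈ F, E (u + v) ^ (1 / p) ≤ E u ^ (1 / p) + E v ^ (1 / p))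
    (hCla₁ : p ≤ 2 → ∀ u ∈ F, ∀ v ∈ F,
      2 * (E u ^ (1 / (p - 1)) + E v ^ (1 / (p - 1))) ^ (p - 1) ≤ E (u + v) + E (u - v))
    (hCla₂ : 2 ≤ p → ∀ u ∈ F, ∀ v ∈ F,
      E (u + v) + E (u - v) ≤ 2 * (E u ^ (1 / (p - 1)) + E v ^ (1 / (p - 1))) ^ (p - 1))
    (hssub : ∀ u ∈ F, ∀ v ∈ F, E (u ⊔ v) + E (u ⊓ v) ≤ E u + E v)
    (u₁ u₂ v : X → ℝ) (hu₁ : u₁ ∈ F) (hu₂ : u₂ ∈ F) (hv : v ∈ F)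
    (h : (u₂ - u₁) ⊓ v = 0) :
    (1 / p) * deriv (fun t : ℝ => E (u₂ + t • v)) 0
      ≤ (1 / p) * deriv (fun t : ℝ => E (u₁ + t • v)) 0 := by
  have hp0 : (0:ℝ) < p := lt_trans one_pos hp
  -- comparison of difference quotients from strong subadditivity
  have hcomp : ∀ t : ℝ, 0 < t →
      E (u₂ + t • v) - E u₂ ≤ E (u₁ + t • v) - E u₁ := by
    intro t ht
    have key₁ : (u₁ + t • v) ⊔ u₂ = u₂ + t • v := by
      funext x
      have hx := congrFun h x
      simp only [Pi.inf_apply, Pi.sub_apply, Pi.zero_apply] at hx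
      simp only [Pi.sup_apply, Pi.add_apply, Pi.smul_apply, smul_eq_mul]
      rcases le_total (u₂ x - u₁ x) (v x) with hle | hle
      · have h1 : u₂ x - u₁ x = 0 := by rwa [inf_eq_left.mpr hle] at hx
        have h2 : 0 ≤ v x := by linarith
        have e : u₂ x = u₁ x := by linarith
        rw [e, sup_eq_left.mpr (by nlinarith : u₁ x ≤ u₁ x + t * v x)]
      · have h1 : v x = 0 := by rwa [inf_eq_right.mpr hle] at hx
        have h2 : 0 ≤ u₂ x - u₁ x := by linarith
        rw [h1, mul_zero, add_zero, sup_eq_right.mpr (by linarith : u₁ x ≤ u₂ x), add_zero]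
    have key₂ : (u₁ + t • v) ⊓ u₂ = u₁ := by
      funext x
      have hx := congrFun h x
      simp only [Pi.inf_apply, Pi.sub_apply, Pi.zero_apply] at hx
      simp only [Pi.inf_apply, Pi.add_apply, Pi.smul_apply, smul_eq_mul]
      rcases le_total (u₂ x - u₁ x) (v x) with hle | hle
      · have h1 : u₂ x - u₁ x = 0 := by rwa [inf_eq_left.mpr hle] at hx
        have h2 : 0 ≤ v x := by linarith
        have e : u₂ x = u₁ x := by linarith
        rw [e, inf_eq_right.mpr (by nlinarith : u₁ x ≤ u₁ x + t * v x)]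
      · have h1 : v x = 0 := by rwa [inf_eq_right.mpr hle] at hx
        have h2 : 0 ≤ u₂ x - u₁ x := by linarith
        rw [h1, mul_zero, add_zero, inf_eq_left.mpr (by linarith : u₁ x ≤ u₂ x)]
    have hs := hssub (u₁ + t • v) (F.add_mem hu₁ (F.smul_mem t hv)) u₂ hu₂
    rw [key₁, key₂] at hs
    linarith
  obtain ⟨L₁, hL₁⟩ := aux_clarkson_bound p hp F E hE0 hhom htri hCla₁ hCla₂ u₁ v hu₁ hv
  obtain ⟨L₂, hL₂⟩ := aux_clarkson_bound p hp F E hE0 hhom htri hCla₁ hCla₂ u₂ v hu₂ hv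
  have h0₁ : u₁ + (0:ℝ) • v = u₁ := by module
  have h0₂ : u₂ + (0:ℝ) • v = u₂ := by module
  have hLle : L₂ ≤ L₁ := by
    have t₁ : Tendsto (slope (fun t : ℝ => E (u₁ + t • v)) 0) (𝓝[>] (0:ℝ)) (𝓝 L₁) :=
      (hasDerivAt_iff_tendsto_slope.mp hL₁).mono_left
        (nhdsWithin_mono _ (fun x hx => ne_of_gt hx))
    have t₂ : Tendsto (slope (fun t : ℝ => E (u₂ + t • v)) 0) (𝓝[>] (0:ℝ)) (𝓝 L₂) :=
      (hasDerivAt_iff_tendsto_slope.mp hL₂).mono_left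
        (nhdsWithin_mono _ (fun x hx => ne_of_gt hx))
    refine le_of_tendsto_of_tendsto t₂ t₁ ?_
    filter_upwards [self_mem_nhdsWithin] with t ht
    simp only [slope_def_field, sub_zero]
    rw [h0₁, h0₂]
    exact div_le_div_of_nonneg_right (hcomp t ht) (le_of_lt ht)
  rw [hL₁.deriv, hL₂.deriv]
  exact mul_le_mul_of_nonneg_left hLle (by positivity)
end

section
/- Let p ∈ (1,∞) and let E be a p-resistance form on a finite set V (E : ℝ^V → [0,∞) p-homogeneous with E^{1/p} a seminorm whose null space is the constants, satisfying the generalized p-contraction property). For a nonempty B ⊆ V and boundary data u : B → ℝ, there is a unique h ∈ ℝ^V with h|_B = u minimizing E among all extensions of u (the harmonic extension). Weak comparison principle: if u, v : B → ℝ satisfy u ≤ v pointwise on B, then their harmonic extensions satisfy h_B[u] ≤ h_B[v] pointwise on V. In particular min_B u ≤ h_B[u](x) ≤ max_B u for all x ∈ V. -/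
open Real Set

private lemma aux_rpow_superadd {γ u v : ℝ} (hγ : 1 ≤ γ) (hu : 0 ≤ u) (hv : 0 ≤ v) :
    u ^ γ + v ^ γ ≤ (u + v) ^ γ := by
  lift u to NNReal using hu
  lift v to NNReal using hv
  exact_mod_cast NNReal.add_rpow_le_rpow_add u v hγ

private lemma aux_rpow_subadd {γ u v : ℝ} (h0 : 0 ≤ γ) (hγ : γ ≤ 1) (hu : 0 ≤ u) (hv : 0 ≤ v) :
    (u + v) ^ γ ≤ u ^ γ + v ^ γ := by
  lift u to NNReal using hu
  lift v to NNReal using hv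
  exact_mod_cast NNReal.rpow_add_le_add_rpow u v h0 hγ

private lemma aux_karamata (φ : ℝ → ℝ) (hφ : ConvexOn ℝ Set.univ φ) {s t s' t' : ℝ}
    (h1 : s' ≤ s) (h2 : s ≤ t) (h3 : t ≤ t') (hsum : s + t = s' + t') :
    φ s + φ t ≤ φ s' + φ t' := by
  rcases eq_or_lt_of_le (h1.trans (h2.trans h3)) with he | hlt
  · have hs : s = s' := le_antisymm (by linarith) h1
    have ht : t = t' := by linarith
    rw [hs, ht]
  · set a : ℝ := (t' - s) / (t' - s') with ha_def
    have hd : 0 < t' - s' := by linarith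
    have ha0 : 0 ≤ a := div_nonneg (by linarith) hd.le
    have ha1 : a ≤ 1 := by rw [div_le_one hd]; linarith
    have hb0 : 0 ≤ 1 - a := by linarith
    have key : a * (t' - s') = t' - s := div_mul_cancel₀ _ hd.ne'
    have hcs : a * s' + (1 - a) * t' = s := by linear_combination -key
    have hct : (1 - a) * s' + a * t' = t := by
      have : (1 - a) * s' + a * t' = s' + t' - (a * s' + (1 - a) * t') := by ring
      rw [this, hcs]; linarith
    have H1 := hφ.2 (mem_univ s') (mem_univ t') ha0 hb0 (by ring : a + (1 - a) = 1)
    have H2 := hφ.2 (mem_univ s') (mem_univ t') hb0 ha0 (by ring : (1 - a) + a = 1)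
    simp only [smul_eq_mul] at H1 H2
    rw [hcs] at H1
    rw [hct] at H2
    linarith

private lemma aux_abs_rpow_convex {p : ℝ} (hp : 1 ≤ p) :
    ConvexOn ℝ Set.univ (fun x : ℝ => |x| ^ p) := by
  have habs : ConvexOn ℝ Set.univ (fun x : ℝ => |x|) :=
    ⟨convex_univ, fun x _ y _ a b ha hb _ => by
      simpa [abs_mul, abs_of_nonneg ha, abs_of_nonneg hb] using abs_add_le (a * x) (b * y)⟩
  have himg : (fun x : ℝ => |x|) '' Set.univ = Set.Ici (0 : ℝ) := by
    ext x
    constructor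
    · rintro ⟨y, -, rfl⟩; exact abs_nonneg y
    · intro hx; exact ⟨x, mem_univ x, abs_of_nonneg hx⟩
  have := (convexOn_rpow hp).subset (le_of_eq himg) (by rw [himg]; exact convex_Ici 0)
  exact this.comp habs (by
    intro x hx y hy hxy
    rw [himg] at hx
    exact Real.rpow_le_rpow hx hxy (by linarith))


private lemma aux_sq_rpow (x : ℝ) {q : ℝ} : ((x ^ 2 : ℝ)) ^ (q / 2) = |x| ^ q := by
  rw [← sq_abs, ← Real.rpow_natCast |x| 2, ← Real.rpow_mul (abs_nonneg x)]
  norm_num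
  congr 1
  ring

private lemma aux_rpow_two {x : ℝ} (hx : 0 ≤ x) : x ^ (2:ℝ) = x ^ 2 := by
  rw [show (2:ℝ) = ((2:ℕ):ℝ) by norm_num, Real.rpow_natCast]

private lemma aux_S1 {p : ℝ} (hp2 : 2 ≤ p) (a b : ℝ) :
    ((2:ℝ) ^ (-(2:ℝ)⁻¹)) ^ p * |a + b| ^ p + ((2:ℝ) ^ (-(2:ℝ)⁻¹)) ^ p * |a - b| ^ p
      ≤ (a ^ 2 + b ^ 2) ^ (p / 2) := by
  have hp0 : (0:ℝ) ≤ p := by linarith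
  have h1 : |a + b| ^ p + |a - b| ^ p ≤ ((a+b)^2 + (a-b)^2) ^ (p/2) := by
    calc |a + b| ^ p + |a - b| ^ p = ((a+b)^2) ^ (p/2) + ((a-b)^2) ^ (p/2) := by
          rw [aux_sq_rpow, aux_sq_rpow]
      _ ≤ ((a+b)^2 + (a-b)^2) ^ (p/2) :=
          aux_rpow_superadd (by linarith) (sq_nonneg _) (sq_nonneg _)
  have h2 : ((a+b)^2 + (a-b)^2 : ℝ) = 2 * (a^2 + b^2) := by ring
  have h3 : ((2:ℝ) * (a^2+b^2)) ^ (p/2) = 2 ^ (p/2) * (a^2+b^2) ^ (p/2) :=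
    Real.mul_rpow (by norm_num) (by positivity)
  have hc : ((2:ℝ) ^ (-(2:ℝ)⁻¹)) ^ p * 2 ^ (p/2) = 1 := by
    rw [← Real.rpow_mul (by norm_num : (0:ℝ) ≤ 2), ← Real.rpow_add (by norm_num : (0:ℝ) < 2),
      show -(2:ℝ)⁻¹ * p + p/2 = 0 by ring, Real.rpow_zero]
  have hcpos : 0 < ((2:ℝ) ^ (-(2:ℝ)⁻¹)) ^ p := by positivity
  calc ((2:ℝ) ^ (-(2:ℝ)⁻¹)) ^ p * |a + b| ^ p + ((2:ℝ) ^ (-(2:ℝ)⁻¹)) ^ p * |a - b| ^ p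
      = ((2:ℝ) ^ (-(2:ℝ)⁻¹)) ^ p * (|a + b| ^ p + |a - b| ^ p) := by ring
    _ ≤ ((2:ℝ) ^ (-(2:ℝ)⁻¹)) ^ p * (2 ^ (p/2) * (a^2+b^2) ^ (p/2)) := by
        rw [← h3, ← h2]
        exact mul_le_mul_of_nonneg_left h1 hcpos.le
    _ = (a^2+b^2) ^ (p/2) := by rw [← mul_assoc, hc, one_mul]

-- reciprocal Bernoulli trick: for 0 < γ ≤ 1, 0 ≤ u ≤ 1/9 : (1-u)^γ ≥ 1 - (9/8)*γ*u
private lemma aux_recip_bernoulli {γ u : ℝ} (hγ0 : 0 < γ) (hγ1 : γ ≤ 1)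
    (hu0 : 0 ≤ u) (hu : u ≤ 1/9) : 1 - (9/8) * γ * u ≤ (1 - u) ^ γ := by
  have hden : (0:ℝ) < 1 - u := by linarith
  have hs0 : 0 ≤ u / (1 - u) := div_nonneg hu0 hden.le
  have hB := rpow_one_add_le_one_add_mul_self (s := u / (1 - u)) (by linarith) hγ0.le hγ1
  have hrec : (1:ℝ) + u / (1 - u) = (1 - u)⁻¹ := by field_simp; ring
  rw [hrec, Real.inv_rpow hden.le] at hB
  -- hB : ((1-u)^γ)⁻¹ ≤ 1 + γ * (u/(1-u))
  have hZpos : 0 < (1 - u) ^ γ := Real.rpow_pos_of_pos hden γ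
  have hZ1 : 1 ≤ (1 - u) ^ γ * (1 + γ * (u / (1 - u))) := by
    have := mul_le_mul_of_nonneg_left hB hZpos.le
    rwa [mul_inv_cancel₀ hZpos.ne'] at this
  have hsb : u / (1 - u) ≤ (9/8) * u := by
    rw [div_le_iff₀ hden]
    nlinarith
  have hγs0 : 0 ≤ γ * (u / (1 - u)) := mul_nonneg hγ0.le hs0
  nlinarith [hZ1, hsb, hZpos, mul_le_mul_of_nonneg_left hsb hγ0.le,
    mul_nonneg (mul_nonneg hγ0.le hγ0.le) (mul_nonneg hs0 hs0)]

-- chord-type bound: for 0 < γ ≤ 1, 0 ≤ t ≤ 1/3 : (1+t)^γ ≥ 1 + (3/4)*γ*t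
private lemma aux_plus_bernoulli {γ t : ℝ} (hγ0 : 0 < γ) (hγ1 : γ ≤ 1)
    (ht0 : 0 ≤ t) (ht : t ≤ 1/3) : 1 + (3/4) * γ * t ≤ (1 + t) ^ γ := by
  have hden : (0:ℝ) < 1 + t := by linarith
  have hB := rpow_one_add_le_one_add_mul_self (s := -t / (1 + t)) (by
      rw [neg_div, neg_le, neg_neg]
      rw [div_le_one hden]; linarith) hγ0.le hγ1
  have hrec : (1:ℝ) + -t / (1 + t) = (1 + t)⁻¹ := by field_simp; ring
  rw [hrec, Real.inv_rpow hden.le] at hB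
  -- hB : ((1+t)^γ)⁻¹ ≤ 1 + γ * (-t/(1+t))
  have hZpos : 0 < (1 + t) ^ γ := Real.rpow_pos_of_pos hden γ
  have hZ1 : 1 ≤ (1 + t) ^ γ * (1 + γ * (-t / (1 + t))) := by
    have := mul_le_mul_of_nonneg_left hB hZpos.le
    rwa [mul_inv_cancel₀ hZpos.ne'] at this
  have hsb : (3/4) * t ≤ t / (1 + t) := by
    rw [le_div_iff₀ hden]
    nlinarith
  have hd1 : γ * (t / (1 + t)) < 1 := by
    have h1 : t / (1 + t) < 1 := by
      rw [div_lt_one hden]; linarith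
    nlinarith [div_nonneg ht0 hden.le]
  have hgs : 0 ≤ γ * (t / (1 + t)) := mul_nonneg hγ0.le (div_nonneg ht0 hden.le)
  have e1 : γ * ((3/4) * t) ≤ γ * (t / (1 + t)) := mul_le_mul_of_nonneg_left hsb hγ0.le
  have e2 : 0 ≤ ((3/4) * γ * t) * (γ * (t / (1 + t))) :=
    mul_nonneg (by positivity) hgs
  have hfact : (1 + (3/4) * γ * t) * (1 - γ * (t / (1 + t))) ≤ 1 := by nlinarith [e1, e2]
  have hpos2 : 0 < 1 - γ * (t / (1 + t)) := by linarith
  have hZ1' : 1 ≤ (1 + t) ^ γ * (1 - γ * (t / (1 + t))) := by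
    have : γ * (-t / (1 + t)) = -(γ * (t / (1 + t))) := by ring
    rw [this] at hZ1
    linarith [hZ1]
  nlinarith [hZ1', hfact, hpos2]

set_option maxHeartbeats 2000000 in
-- NEAR: 1 < p < 2, 0 ≤ t ≤ 1/3 : (1+t)^p + (1-t)^p ≥ 2 + (5/8)(p-1) t^2
private lemma aux_near {p : ℝ} (hp1 : 1 < p) (hp2 : p < 2) {t : ℝ}
    (ht0 : 0 ≤ t) (ht : t ≤ 1/3) :
    2 + (5/8) * (p-1) * t^2 ≤ (1+t) ^ p + (1-t) ^ p := by
  obtain ⟨β, hβ⟩ : ∃ β : ℝ, β = p - 1 := ⟨_, rfl⟩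
  have hb0 : 0 < β := by rw [hβ]; linarith
  have hb1 : β < 1 := by rw [hβ]; linarith
  have h1t : (0:ℝ) < 1 + t := by linarith
  have h2t : (0:ℝ) < 1 - t := by linarith
  obtain ⟨X, hX⟩ : ∃ X : ℝ, X = (1+t) ^ β := ⟨_, rfl⟩
  obtain ⟨Y, hY⟩ : ∃ Y : ℝ, Y = (1-t) ^ β := ⟨_, rfl⟩
  have hXpos : 0 < X := hX ▸ Real.rpow_pos_of_pos h1t β
  have hYpos : 0 < Y := hY ▸ Real.rpow_pos_of_pos h2t β
  have hsplit1 : (1+t) ^ p = (1+t) * X := by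
    rw [hX, show p = 1 + β by rw [hβ]; ring, Real.rpow_add h1t, Real.rpow_one]
  have hsplit2 : (1-t) ^ p = (1-t) * Y := by
    rw [hY, show p = 1 + β by rw [hβ]; ring, Real.rpow_add h2t, Real.rpow_one]
  -- (C) : Y ≤ 1 - β t
  have hC : Y ≤ 1 - β * t := by
    have := rpow_one_add_le_one_add_mul_self (s := -t) (by linarith) hb0.le hb1.le
    rw [show (1:ℝ) + -t = 1 - t by ring] at this
    rw [hY]; linarith [this]
  -- (D) : 1 + (3/4) β t ≤ X
  have hD : 1 + (3/4) * β * t ≤ X := by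
    have := aux_plus_bernoulli hb0 hb1.le ht0 ht
    rw [hX]; linarith [this]
  -- (B) : X + Y ≥ 2 - (9/8) β t²
  have hB : 2 - (9/8) * β * t^2 ≤ X + Y := by
    have hu0 : (0:ℝ) ≤ t^2 := sq_nonneg t
    have hu : t^2 ≤ 1/9 := by nlinarith
    have hZle := aux_recip_bernoulli (γ := β/2) (u := t^2) (by linarith) (by linarith) hu0 hu
    obtain ⟨Z, hZdef⟩ : ∃ Z : ℝ, Z = (1 - t^2) ^ (β/2) := ⟨_, rfl⟩
    rw [← hZdef] at hZle
    have hZnn : 0 ≤ Z := hZdef ▸ Real.rpow_nonneg (by nlinarith) _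
    have hZ2 : Z ^ 2 = X * Y := by
      rw [hZdef, hX, hY, ← Real.mul_rpow h1t.le h2t.le,
        show (1+t) * (1-t) = 1 - t^2 by ring, ← Real.rpow_natCast ((1 - t^2) ^ (β/2)) 2,
        ← Real.rpow_mul (by nlinarith : (0:ℝ) ≤ 1 - t^2)]
      norm_num
    have hXYam : 2 * Z ≤ X + Y := by nlinarith [sq_nonneg (X - Y), hXpos, hYpos]
    nlinarith [hZle, hXYam]
  rw [hsplit1, hsplit2]
  have h7 : (7/4) * β * t ≤ X - Y := by nlinarith [hC, hD]
  have h8 := mul_le_mul_of_nonneg_left h7 ht0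
  nlinarith [hB, h8]

private lemma aux_mono {p : ℝ} (hp : 1 ≤ p) {t t' : ℝ} (h0 : 0 ≤ t) (htt : t ≤ t')
    (h1 : t' ≤ 1) : (1+t) ^ p + (1-t) ^ p ≤ (1+t') ^ p + (1-t') ^ p := by
  have hφ := aux_abs_rpow_convex hp
  have hk := aux_karamata _ hφ (show 1-t' ≤ 1-t by linarith) (show 1-t ≤ 1+t by linarith)
    (show 1+t ≤ 1+t' by linarith) (by ring)
  rw [abs_of_nonneg (by linarith : (0:ℝ) ≤ 1-t), abs_of_nonneg (by linarith : (0:ℝ) ≤ 1+t),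
    abs_of_nonneg (by linarith : (0:ℝ) ≤ 1-t'), abs_of_nonneg (by linarith : (0:ℝ) ≤ 1+t')] at hk
  linarith

private lemma aux_step {p ε : ℝ} (hp1 : 1 < p) (hp2 : p ≤ 2) (hε : 0 ≤ ε) :
    2 ^ (2/p) + ε ≤ (2 + ε) ^ (2/p) := by
  have hp0 : (0:ℝ) < p := by linarith
  have h2p1 : (0:ℝ) ≤ 2/p - 1 := by
    rw [sub_nonneg, le_div_iff₀ hp0, one_mul]; exact hp2
  have hpos : (0:ℝ) < 2 + ε := by linarith
  have key : (2 + ε) ^ (2/p) = (2+ε) * (2+ε) ^ (2/p - 1) := by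
    nth_rw 1 [show (2/p) = 1 + (2/p - 1) by ring]
    rw [Real.rpow_add hpos, Real.rpow_one]
  have key2 : (2:ℝ) ^ (2/p) = 2 * 2 ^ (2/p - 1) := by
    nth_rw 1 [show (2/p) = 1 + (2/p - 1) by ring]
    rw [Real.rpow_add (by norm_num : (0:ℝ) < 2), Real.rpow_one]
  have hmono : (2:ℝ) ^ (2/p - 1) ≤ (2+ε) ^ (2/p - 1) :=
    Real.rpow_le_rpow (by norm_num) (by linarith) h2p1
  have h1le : (1:ℝ) ≤ 2 ^ (2/p - 1) :=
    (Real.rpow_zero 2).symm.trans_le (Real.rpow_le_rpow_of_exponent_le (by norm_num) h2p1)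
  have h3 : (2+ε) * (2:ℝ) ^ (2/p-1) ≤ (2+ε) * (2+ε) ^ (2/p-1) :=
    mul_le_mul_of_nonneg_left hmono hpos.le
  have h4 : ε * 1 ≤ ε * 2 ^ (2/p-1) := mul_le_mul_of_nonneg_left h1le hε
  rw [key, key2]
  nlinarith [h3, h4]

private lemma aux_G {p : ℝ} (hp1 : 1 < p) (hp2 : p < 2) {t : ℝ} (h0 : 0 ≤ t) (h1 : t ≤ 1) :
    2 ^ (2/p) + (5/72)*(p-1)*t^2 ≤ ((1+t) ^ p + (1-t) ^ p) ^ (2/p) := by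
  have hp0 : (0:ℝ) < p := by linarith
  have h2pnn : (0:ℝ) ≤ 2/p := by positivity
  rcases le_or_gt t (1/3) with hc | hc
  · have hnear := aux_near hp1 hp2 h0 hc
    have hε : (0:ℝ) ≤ (5/8)*(p-1)*t^2 :=
      mul_nonneg (mul_nonneg (by norm_num) (by linarith)) (sq_nonneg t)
    have hstep := aux_step (ε := (5/8)*(p-1)*t^2) hp1 hp2.le hε
    have hlast : (2 + (5/8)*(p-1)*t^2) ^ (2/p) ≤ ((1+t) ^ p + (1-t) ^ p) ^ (2/p) :=
      Real.rpow_le_rpow (by linarith) hnear h2pnn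
    nlinarith [hstep, hlast]
  · have hmono := aux_mono hp1.le (t := 1/3) (t' := t) (by norm_num) hc.le h1
    have hnear := aux_near hp1 hp2 (t := 1/3) (by norm_num) (by norm_num)
    have hε : (0:ℝ) ≤ (5/8)*(p-1)*(1/3:ℝ)^2 :=
      mul_nonneg (mul_nonneg (by norm_num) (by linarith)) (by norm_num)
    have hstep := aux_step (ε := (5/8)*(p-1)*(1/3:ℝ)^2) hp1 hp2.le hε
    have hlast : (2 + (5/8)*(p-1)*(1/3:ℝ)^2) ^ (2/p) ≤ ((1+t) ^ p + (1-t) ^ p) ^ (2/p) :=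
      Real.rpow_le_rpow (by linarith) (by nlinarith [hnear, hmono]) h2pnn
    have ht2 : t^2 ≤ 1 := by nlinarith
    nlinarith [hstep, hlast, mul_le_mul_of_nonneg_left ht2 (by nlinarith : (0:ℝ) ≤ (5/72)*(p-1))]

private lemma aux_S4 {p a b c d : ℝ} (hp : 1 ≤ p) (hba : b ≤ a) (hcd : c ≤ d) :
    |a - d| ^ p + |b - c| ^ p ≤ |a - c| ^ p + |b - d| ^ p := by
  have hφ := aux_abs_rpow_convex hp
  have h1 : b - d ≤ min (a - d) (b - c) := le_min (by linarith) (by linarith)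
  have h3 : max (a - d) (b - c) ≤ a - c := max_le (by linarith) (by linarith)
  have hsum : min (a-d) (b-c) + max (a-d) (b-c) = (b - d) + (a - c) := by
    rw [min_add_max]; ring
  have hk := aux_karamata _ hφ h1 min_le_max h3 hsum
  rcases le_total (a-d) (b-c) with h | h
  · rw [min_eq_left h, max_eq_right h] at hk; linarith
  · rw [min_eq_right h, max_eq_left h] at hk; linarith

private lemma aux_S3 {p : ℝ} (hp : 1 ≤ p) (a b c d : ℝ) :
    |max a b - max c d| ^ p + |min a b - min c d| ^ p ≤ |a - c| ^ p + |b - d| ^ p := by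
  rcases le_total a b with hab | hab <;> rcases le_total c d with hcd | hcd
  · rw [max_eq_right hab, max_eq_right hcd, min_eq_left hab, min_eq_left hcd]
    linarith
  · rw [max_eq_right hab, max_eq_left hcd, min_eq_left hab, min_eq_right hcd]
    have := aux_S4 (a := b) (b := a) (c := d) (d := c) hp hab hcd
    linarith
  · rw [max_eq_left hab, max_eq_right hcd, min_eq_right hab, min_eq_left hcd]
    have := aux_S4 (a := a) (b := b) (c := c) (d := d) hp hab hcd
    linarith
  · rw [max_eq_left hab, max_eq_left hcd, min_eq_right hab, min_eq_right hcd]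

-- same-sign core of the two-point BCL-type inequality
private lemma aux_same {p : ℝ} (hp1 : 1 < p) (hp2 : p < 2) {a b : ℝ}
    (hb0 : 0 ≤ b) (hba : b ≤ a) :
    2 ^ (2/p - 2) * (a+b)^2 + (5/288)*(p-1)*(a-b)^2 ≤ (a ^ p + b ^ p) ^ (2/p) := by
  have hp0 : (0:ℝ) < p := by linarith
  have ha0 : 0 ≤ a := hb0.trans hba
  rcases eq_or_lt_of_le ha0 with ha | ha
  · -- a = 0, hence b = 0
    have hb : b = 0 := le_antisymm (hba.trans_eq ha.symm) hb0
    rw [← ha, hb, Real.zero_rpow hp0.ne']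
    norm_num
    exact Real.rpow_nonneg le_rfl _
  · have hs : (0:ℝ) < a + b := by linarith
    obtain ⟨t, htdef⟩ : ∃ t : ℝ, t = (a-b)/(a+b) := ⟨_, rfl⟩
    obtain ⟨m, hmdef⟩ : ∃ m : ℝ, m = (a+b)/2 := ⟨_, rfl⟩
    have hm : 0 < m := by rw [hmdef]; linarith
    have ht0 : 0 ≤ t := by rw [htdef]; exact div_nonneg (by linarith) hs.le
    have ht1 : t ≤ 1 := by rw [htdef, div_le_one hs]; linarith
    have ha_eq : a = m*(1+t) := by rw [hmdef, htdef]; field_simp; try ring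
    have hb_eq : b = m*(1-t) := by rw [hmdef, htdef]; field_simp; try ring
    have hmt : m*t = (a-b)/2 := by rw [hmdef, htdef]; field_simp; try ring
    have hap : a ^ p = m ^ p * (1+t) ^ p := by
      rw [ha_eq, Real.mul_rpow hm.le (by linarith : (0:ℝ) ≤ 1+t)]
    have hbp : b ^ p = m ^ p * (1-t) ^ p := by
      rw [hb_eq, Real.mul_rpow hm.le (by linarith : (0:ℝ) ≤ 1-t)]
    have hF0 : (0:ℝ) ≤ (1+t) ^ p + (1-t) ^ p := by
      have := Real.rpow_nonneg (by linarith : (0:ℝ) ≤ 1+t) p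
      have := Real.rpow_nonneg (by linarith : (0:ℝ) ≤ 1-t) p
      linarith
    have hRHS : (a ^ p + b ^ p) ^ (2/p) = m^2 * ((1+t) ^ p + (1-t) ^ p) ^ (2/p) := by
      rw [hap, hbp, ← mul_add, Real.mul_rpow (Real.rpow_nonneg hm.le p) hF0,
        ← Real.rpow_mul hm.le, show p*(2/p) = 2 by rw [mul_comm, div_mul_cancel₀ _ hp0.ne'],
        aux_rpow_two hm.le]
    have hG := aux_G hp1 hp2 ht0 ht1
    have hmul := mul_le_mul_of_nonneg_left hG (sq_nonneg m)
    have hsplit : (2:ℝ)^(2/p-2) = 2^(2/p)/4 := by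
      rw [Real.rpow_sub (by norm_num : (0:ℝ) < 2), aux_rpow_two (by norm_num : (0:ℝ) ≤ 2)]
      norm_num
    have e3 : m^2 * (2:ℝ)^(2/p) = 2^(2/p-2)*(a+b)^2 := by
      rw [hsplit, hmdef]; ring
    have hsq : (m*t)^2 = ((a-b)/2)^2 := by rw [hmt]
    have e4 : m^2 * ((5/72)*(p-1)*t^2) = (5/288)*(p-1)*(a-b)^2 := by
      linear_combination ((5/72)*(p-1)) * hsq
    rw [hRHS]
    nlinarith [hmul, e3, e4]

private lemma aux_star {p : ℝ} (hp1 : 1 < p) (hp2 : p < 2) :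
    ∃ c : ℝ, 0 < c ∧ ∀ a b : ℝ,
      2 ^ (2/p - 2) * (a+b)^2 + c * (a-b)^2 ≤ (|a| ^ p + |b| ^ p) ^ (2/p) := by
  have hp0 : (0:ℝ) < p := by linarith
  have hKpos : (0:ℝ) < 2^(2/p-2) := Real.rpow_pos_of_pos (by norm_num) _
  have hKlt : (2:ℝ)^(2/p-2) < 1 := by
    apply Real.rpow_lt_one_of_one_lt_of_neg (by norm_num)
    rw [sub_neg, div_lt_iff₀ hp0]
    linarith
  refine ⟨min (min (1 - 2^(2/p-2)) (2^(2/p-2))) ((5/288)*(p-1)), ?_, ?_⟩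
  · apply lt_min (lt_min (by linarith) hKpos)
    nlinarith
  intro a b
  have hc1 : min (min (1 - 2^(2/p-2)) ((2:ℝ)^(2/p-2))) ((5/288)*(p-1)) ≤ 1 - 2^(2/p-2) :=
    (min_le_left _ _).trans (min_le_left _ _)
  have hc2 : min (min (1 - 2^(2/p-2)) ((2:ℝ)^(2/p-2))) ((5/288)*(p-1)) ≤ 2^(2/p-2) :=
    (min_le_left _ _).trans (min_le_right _ _)
  have hc3 : min (min (1 - 2^(2/p-2)) ((2:ℝ)^(2/p-2))) ((5/288)*(p-1)) ≤ (5/288)*(p-1) :=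
    min_le_right _ _
  obtain ⟨c, hcdef⟩ : ∃ c : ℝ,
      c = min (min (1 - 2^(2/p-2)) ((2:ℝ)^(2/p-2))) ((5/288)*(p-1)) := ⟨_, rfl⟩
  rw [← hcdef] at hc1 hc2 hc3 ⊢
  have hsq : 0 ≤ (a-b)^2 := sq_nonneg _
  rcases le_or_gt 0 (a*b) with hab | hab
  · rcases mul_nonneg_iff.mp hab with ⟨ha, hb⟩ | ⟨ha, hb⟩
    · rw [abs_of_nonneg ha, abs_of_nonneg hb]
      rcases le_total b a with h | h
      · have key := aux_same hp1 hp2 hb h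
        nlinarith [mul_le_mul_of_nonneg_right hc3 hsq]
      · have key := aux_same hp1 hp2 ha h
        rw [add_comm (b ^ p) (a ^ p), show ((b+a)^2 : ℝ) = (a+b)^2 by ring,
          show ((b-a)^2 : ℝ) = (a-b)^2 by ring] at key
        nlinarith [mul_le_mul_of_nonneg_right hc3 hsq]
    · rw [abs_of_nonpos ha, abs_of_nonpos hb]
      rcases le_total a b with h | h
      · have key := aux_same hp1 hp2 (a := -a) (b := -b) (by linarith) (by linarith)
        rw [show ((-a + -b)^2 : ℝ) = (a+b)^2 by ring,
          show ((-a - -b)^2 : ℝ) = (a-b)^2 by ring] at key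
        nlinarith [mul_le_mul_of_nonneg_right hc3 hsq]
      · have key := aux_same hp1 hp2 (a := -b) (b := -a) (by linarith) (by linarith)
        rw [add_comm ((-b) ^ p) ((-a) ^ p), show ((-b + -a)^2 : ℝ) = (a+b)^2 by ring,
          show ((-b - -a)^2 : ℝ) = (a-b)^2 by ring] at key
        nlinarith [mul_le_mul_of_nonneg_right hc3 hsq]
  · have h1 : (a^2 + b^2)^(p/2) ≤ |a|^p + |b|^p := by
      have := aux_rpow_subadd (γ := p/2) (u := a^2) (v := b^2)
        (by positivity) (by linarith) (sq_nonneg a) (sq_nonneg b)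
      rwa [aux_sq_rpow, aux_sq_rpow] at this
    have hI : a^2 + b^2 ≤ (|a|^p + |b|^p)^(2/p) := by
      have he : ((a^2+b^2)^(p/2))^(2/p) = a^2 + b^2 := by
        rw [← Real.rpow_mul (by positivity), div_mul_div_comm, mul_comm,
          div_self (by positivity : (2*p:ℝ) ≠ 0), Real.rpow_one]
      calc a^2 + b^2 = ((a^2+b^2)^(p/2))^(2/p) := he.symm
        _ ≤ (|a|^p + |b|^p)^(2/p) :=
            Real.rpow_le_rpow (Real.rpow_nonneg (by positivity) _) h1 (by positivity)
    have t1 : 0 ≤ (1 - (2^(2/p-2) + c)) * (a^2+b^2) := by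
      apply mul_nonneg (by linarith) (by positivity)
    have t2 : 0 ≤ (2^(2/p-2) - c) * (-(2*(a*b))) := by
      apply mul_nonneg (by linarith) (by linarith)
    nlinarith [hI, t1, t2]

private lemma aux_root_le {p X Y : ℝ} (hp : 0 < p) (hX : 0 ≤ X) (hY : 0 ≤ Y)
    (h : X ^ (1/p) ≤ Y ^ (1/p)) : X ≤ Y := by
  have h2 := Real.rpow_le_rpow (Real.rpow_nonneg hX _) h hp.le
  rwa [← Real.rpow_mul hX, ← Real.rpow_mul hY, one_div, inv_mul_cancel₀ hp.ne',
    Real.rpow_one, Real.rpow_one] at h2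

private lemma aux_subadd {V : Type*} [Fintype V] {p : ℝ} (hp : 1 < p)
    (E : (V → ℝ) → ℝ) (hE0 : ∀ u, 0 ≤ E u)
    (hGC : ∀ (n₁ n₂ : ℕ) (q₁ q₂ : ℝ), 0 < q₁ → q₁ ≤ p → p ≤ q₂ →
      ∀ T : (Fin n₁ → ℝ) → (Fin n₂ → ℝ), T 0 = 0 →
        (∀ x y : Fin n₁ → ℝ,
          (∑ l : Fin n₂, |T x l - T y l| ^ q₂) ^ (1 / q₂)
            ≤ (∑ k : Fin n₁, |x k - y k| ^ q₁) ^ (1 / q₁)) →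
        ∀ u : Fin n₁ → V → ℝ,
          (∑ l : Fin n₂, E (fun z => T (fun k => u k z) l) ^ (q₂ / p)) ^ (1 / q₂)
            ≤ (∑ k : Fin n₁, E (u k) ^ (q₁ / p)) ^ (1 / q₁)) :
    ∀ f g : V → ℝ,
      E (fun z => max (f z) (g z)) + E (fun z => min (f z) (g z)) ≤ E f + E g := by
  intro f g
  have hp0 : (0:ℝ) < p := by linarith
  have H := hGC 2 2 p p hp0 le_rfl le_rfl
    (fun x => ![max (x 0) (x 1), min (x 0) (x 1)])
    (by funext i; fin_cases i <;> simp)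
    (by
      intro x y
      apply Real.rpow_le_rpow (by positivity) _ (by positivity)
      simp only [Fin.sum_univ_two, Matrix.cons_val_zero, Matrix.cons_val_one, Matrix.head_cons]
      exact aux_S3 hp.le (x 0) (x 1) (y 0) (y 1))
    ![f, g]
  simp only [Fin.sum_univ_two, Matrix.cons_val_zero, Matrix.cons_val_one, Matrix.head_cons,
    div_self hp0.ne', Real.rpow_one] at H
  exact aux_root_le hp0 (add_nonneg (hE0 _) (hE0 _)) (add_nonneg (hE0 _) (hE0 _)) H

private lemma aux_key_s13 {V : Type*} [Fintype V] {p : ℝ} (hp : 1 < p)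
    (E : (V → ℝ) → ℝ) (hE0 : ∀ u, 0 ≤ E u)
    (hhom : ∀ (a : ℝ) (u : V → ℝ), E (a • u) = |a| ^ p * E u)
    (hGC : ∀ (n₁ n₂ : ℕ) (q₁ q₂ : ℝ), 0 < q₁ → q₁ ≤ p → p ≤ q₂ →
      ∀ T : (Fin n₁ → ℝ) → (Fin n₂ → ℝ), T 0 = 0 →
        (∀ x y : Fin n₁ → ℝ,
          (∑ l : Fin n₂, |T x l - T y l| ^ q₂) ^ (1 / q₂)
            ≤ (∑ k : Fin n₁, |x k - y k| ^ q₁) ^ (1 / q₁)) →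
        ∀ u : Fin n₁ → V → ℝ,
          (∑ l : Fin n₂, E (fun z => T (fun k => u k z) l) ^ (q₂ / p)) ^ (1 / q₂)
            ≤ (∑ k : Fin n₁, E (u k) ^ (q₁ / p)) ^ (1 / q₁)) :
    ∀ f g : V → ℝ, E f = E g → 2 ^ p * E f ≤ E (f + g) → E (f - g) ≤ 0 := by
  intro f g hfg hmid
  have hp0 : (0:ℝ) < p := by linarith
  rcases le_or_gt 2 p with hp2 | hp2
  · -- case 2 ≤ p : q₁ = 2, q₂ = p
    obtain ⟨c, hcdef⟩ : ∃ c : ℝ, c = (2:ℝ) ^ (-(2:ℝ)⁻¹) := ⟨_, rfl⟩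
    have hcpos : 0 < c := hcdef ▸ Real.rpow_pos_of_pos (by norm_num) _
    have H := hGC 2 2 2 p (by norm_num) hp2 le_rfl
      (fun x => ![c * (x 0 + x 1), c * (x 0 - x 1)])
      (by funext i; fin_cases i <;> simp)
      (by
        intro x y
        simp only [Fin.sum_univ_two, Matrix.cons_val_zero, Matrix.cons_val_one, Matrix.head_cons]
        have e1 : c * (x 0 + x 1) - c * (y 0 + y 1) = c * ((x 0 - y 0) + (x 1 - y 1)) := by ring
        have e2 : c * (x 0 - x 1) - c * (y 0 - y 1) = c * ((x 0 - y 0) - (x 1 - y 1)) := by ring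
        rw [e1, e2]
        obtain ⟨a, ha⟩ : ∃ a : ℝ, a = x 0 - y 0 := ⟨_, rfl⟩
        obtain ⟨b, hb⟩ : ∃ b : ℝ, b = x 1 - y 1 := ⟨_, rfl⟩
        rw [← ha, ← hb]
        have hS1 := aux_S1 hp2 a b
        have habs : ∀ s : ℝ, |c * s| ^ p = c ^ p * |s| ^ p := by
          intro s
          rw [abs_mul, abs_of_pos hcpos, Real.mul_rpow hcpos.le (abs_nonneg s)]
        rw [habs, habs]
        have hstep : c ^ p * |a + b| ^ p + c ^ p * |a - b| ^ p ≤ (a^2 + b^2) ^ (p/2) := by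
          rw [hcdef]; exact hS1
        have := Real.rpow_le_rpow (by positivity) hstep (by positivity : (0:ℝ) ≤ 1/p)
        calc (c ^ p * |a + b| ^ p + c ^ p * |a - b| ^ p) ^ (1/p)
            ≤ ((a^2 + b^2) ^ (p/2)) ^ (1/p) := this
          _ = (|a| ^ (2:ℝ) + |b| ^ (2:ℝ)) ^ (1/(2:ℝ)) := by
              rw [← Real.rpow_mul (by positivity),
                show (p/2)*(1/p) = 1/2 by field_simp,
                aux_rpow_two (abs_nonneg a), aux_rpow_two (abs_nonneg b), sq_abs, sq_abs])
      ![f, g]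
    simp only [Fin.sum_univ_two, Matrix.cons_val_zero, Matrix.cons_val_one, Matrix.head_cons,
      div_self hp0.ne', Real.rpow_one] at H
    -- identify the E-arguments with smul forms
    have e0 : (fun z => c * (f z + g z)) = c • (f + g) := rfl
    have e1 : (fun z => c * (f z - g z)) = c • (f - g) := rfl
    rw [e0, e1, hhom, hhom, abs_of_pos hcpos] at H
    -- H : (c^p * E (f+g) + c^p * E (f-g)) ^ (1/p) ≤ (E f ^ (2/p) + E g ^ (2/p)) ^ (1/2)
    have hXnn : (0:ℝ) ≤ c^p * E (f+g) + c^p * E (f-g) :=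
      add_nonneg (mul_nonneg (Real.rpow_nonneg hcpos.le p) (hE0 _))
        (mul_nonneg (Real.rpow_nonneg hcpos.le p) (hE0 _))
    have hYnn : (0:ℝ) ≤ E f ^ ((2:ℝ)/p) + E g ^ ((2:ℝ)/p) :=
      add_nonneg (Real.rpow_nonneg (hE0 _) _) (Real.rpow_nonneg (hE0 _) _)
    have hroot := Real.rpow_le_rpow (Real.rpow_nonneg hXnn _) H hp0.le
    have hcol1 : ((c^p * E (f+g) + c^p * E (f-g)) ^ (1/p)) ^ p
        = c^p * E (f+g) + c^p * E (f-g) := by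
      rw [← Real.rpow_mul hXnn, one_div, inv_mul_cancel₀ hp0.ne', Real.rpow_one]
    have hcol2 : ((E f ^ ((2:ℝ)/p) + E g ^ ((2:ℝ)/p)) ^ ((1:ℝ)/2)) ^ p
        = (E f ^ ((2:ℝ)/p) + E g ^ ((2:ℝ)/p)) ^ (p/2) := by
      rw [← Real.rpow_mul hYnn, show (1/(2:ℝ))*p = p/2 by ring]
    rw [hcol1, hcol2, ← hfg] at hroot
    have hcomb : (E f ^ ((2:ℝ)/p) + E f ^ ((2:ℝ)/p)) ^ (p/2) = 2^(p/2) * E f := by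
      rw [show E f ^ ((2:ℝ)/p) + E f ^ ((2:ℝ)/p) = 2 * E f ^ ((2:ℝ)/p) by ring,
        Real.mul_rpow (by norm_num) (Real.rpow_nonneg (hE0 f) _),
        ← Real.rpow_mul (hE0 f),
        show ((2:ℝ)/p)*(p/2) = 1 by rw [div_mul_div_comm, mul_comm]; exact div_self (by positivity),
        Real.rpow_one]
    rw [hcomb] at hroot
    have hmul := mul_le_mul_of_nonneg_left hroot (by positivity : (0:ℝ) ≤ (2:ℝ)^(p/2))
    have hcp : (2:ℝ)^(p/2) * c^p = 1 := by
      rw [hcdef, ← Real.rpow_mul (by norm_num : (0:ℝ) ≤ 2),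
        ← Real.rpow_add (by norm_num : (0:ℝ) < 2), show p/2 + -(2:ℝ)⁻¹*p = 0 by ring,
        Real.rpow_zero]
    have hL : (2:ℝ)^(p/2) * (c^p * E (f+g) + c^p * E (f-g)) = E (f+g) + E (f-g) := by
      linear_combination (E (f+g) + E (f-g)) * hcp
    have h2p2 : (2:ℝ)^(p/2) * (2^(p/2) * E f) = 2^p * E f := by
      rw [← mul_assoc, ← Real.rpow_add (by norm_num : (0:ℝ) < 2), show p/2 + p/2 = p by ring]
    rw [hL, h2p2] at hmul
    linarith
  · -- case p < 2 : q₁ = p, q₂ = 2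
    obtain ⟨csq, hcsqpos, hstar⟩ := aux_star hp hp2
    obtain ⟨c₁, hc1def⟩ : ∃ c : ℝ, c = (2:ℝ) ^ (1/p - 1) := ⟨_, rfl⟩
    obtain ⟨c₂, hc2def⟩ : ∃ c : ℝ, c = Real.sqrt csq := ⟨_, rfl⟩
    have hc1pos : 0 < c₁ := hc1def ▸ Real.rpow_pos_of_pos (by norm_num) _
    have hc2pos : 0 < c₂ := hc2def ▸ Real.sqrt_pos.mpr hcsqpos
    have hc2sq : c₂^2 = csq := by rw [hc2def, Real.sq_sqrt hcsqpos.le]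
    have hc1sq : c₁^2 = 2 ^ ((2:ℝ)/p - 2) := by
      rw [hc1def, ← aux_rpow_two (Real.rpow_nonneg (by norm_num) _),
        ← Real.rpow_mul (by norm_num : (0:ℝ) ≤ 2), show (1/p-1)*(2:ℝ) = 2/p - 2 by ring]
    have H := hGC 2 2 p 2 hp0 le_rfl hp2.le
      (fun x => ![c₁ * (x 0 + x 1), c₂ * (x 0 - x 1)])
      (by funext i; fin_cases i <;> simp)
      (by
        intro x y
        simp only [Fin.sum_univ_two, Matrix.cons_val_zero, Matrix.cons_val_one, Matrix.head_cons]
        have e1 : c₁ * (x 0 + x 1) - c₁ * (y 0 + y 1) = c₁ * ((x 0 - y 0) + (x 1 - y 1)) := by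
          ring
        have e2 : c₂ * (x 0 - x 1) - c₂ * (y 0 - y 1) = c₂ * ((x 0 - y 0) - (x 1 - y 1)) := by
          ring
        rw [e1, e2]
        obtain ⟨a, ha⟩ : ∃ a : ℝ, a = x 0 - y 0 := ⟨_, rfl⟩
        obtain ⟨b, hb⟩ : ∃ b : ℝ, b = x 1 - y 1 := ⟨_, rfl⟩
        rw [← ha, ← hb]
        have habs : ∀ (c s : ℝ), 0 < c → |c * s| ^ (2:ℝ) = c^2 * s^2 := by
          intro c s hc
          rw [aux_rpow_two (abs_nonneg _), sq_abs, mul_pow]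
        rw [habs _ _ hc1pos, habs _ _ hc2pos, hc1sq, hc2sq]
        have hstep : 2 ^ ((2:ℝ)/p - 2) * (a+b)^2 + csq * (a-b)^2
            ≤ (|a| ^ p + |b| ^ p) ^ ((2:ℝ)/p) := hstar a b
        calc (2 ^ ((2:ℝ)/p - 2) * (a+b)^2 + csq * (a-b)^2) ^ (1/(2:ℝ))
            ≤ ((|a| ^ p + |b| ^ p) ^ ((2:ℝ)/p)) ^ (1/(2:ℝ)) := by
              apply Real.rpow_le_rpow _ hstep (by norm_num)
              have : (0:ℝ) ≤ 2 ^ ((2:ℝ)/p - 2) := Real.rpow_nonneg (by norm_num) _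
              nlinarith [sq_nonneg (a+b), sq_nonneg (a-b), hcsqpos]
          _ = (|a| ^ p + |b| ^ p) ^ (1/p) := by
              rw [← Real.rpow_mul (add_nonneg (Real.rpow_nonneg (abs_nonneg a) _)
                (Real.rpow_nonneg (abs_nonneg b) _)),
                show ((2:ℝ)/p)*(1/2) = 1/p by ring])
      ![f, g]
    simp only [Fin.sum_univ_two, Matrix.cons_val_zero, Matrix.cons_val_one, Matrix.head_cons,
      div_self hp0.ne', Real.rpow_one] at H
    have e0 : (fun z => c₁ * (f z + g z)) = c₁ • (f + g) := rfl
    have e1 : (fun z => c₂ * (f z - g z)) = c₂ • (f - g) := rfl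
    rw [e0, e1, hhom, hhom, abs_of_pos hc1pos, abs_of_pos hc2pos] at H
    -- H : ((c₁^p E(f+g))^(2/p) + (c₂^p E(f-g))^(2/p))^(1/2) ≤ (E f + E g)^(1/p)
    have hA : (c₁ ^ p * E (f+g)) ^ ((2:ℝ)/p) = 2 ^ ((2:ℝ)/p - 2) * E (f+g) ^ ((2:ℝ)/p) := by
      rw [Real.mul_rpow (Real.rpow_nonneg hc1pos.le _) (hE0 _), hc1def,
        ← Real.rpow_mul (by norm_num : (0:ℝ) ≤ 2), ← Real.rpow_mul (by norm_num : (0:ℝ) ≤ 2),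
        show (1/p-1)*p*((2:ℝ)/p) = 2/p - 2 by field_simp [hp0.ne']]
    have hB : (c₂ ^ p * E (f-g)) ^ ((2:ℝ)/p) = csq * E (f-g) ^ ((2:ℝ)/p) := by
      rw [Real.mul_rpow (Real.rpow_nonneg hc2pos.le _) (hE0 _),
        ← Real.rpow_mul hc2pos.le, show p*((2:ℝ)/p) = 2 by rw [mul_comm, div_mul_cancel₀ _ hp0.ne'],
        aux_rpow_two hc2pos.le, hc2sq]
    rw [hA, hB, ← hfg] at H
    have hXnn : (0:ℝ) ≤ 2^((2:ℝ)/p-2) * E (f+g) ^ ((2:ℝ)/p) + csq * E (f-g) ^ ((2:ℝ)/p) :=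
      add_nonneg (mul_nonneg (Real.rpow_nonneg (by norm_num) _) (Real.rpow_nonneg (hE0 _) _))
        (mul_nonneg hcsqpos.le (Real.rpow_nonneg (hE0 _) _))
    have hsq := Real.rpow_le_rpow (Real.rpow_nonneg hXnn _) H (by norm_num : (0:ℝ) ≤ 2)
    rw [← Real.rpow_mul hXnn, show (1/(2:ℝ))*2 = 1 by norm_num, Real.rpow_one] at hsq
    rw [show E f + E f = 2 * E f by ring,
      ← Real.rpow_mul (by nlinarith [hE0 f] : (0:ℝ) ≤ 2 * E f),
      show (1/p)*(2:ℝ) = 2/p by ring,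
      Real.mul_rpow (by norm_num) (hE0 f)] at hsq
    -- hsq : 2^{2/p-2} E(f+g)^{2/p} + csq E(f-g)^{2/p} ≤ 2^{2/p} (E f)^{2/p}
    have hmono : (2^p * E f) ^ ((2:ℝ)/p) ≤ E (f+g) ^ ((2:ℝ)/p) :=
      Real.rpow_le_rpow (mul_nonneg (Real.rpow_nonneg (by norm_num) _) (hE0 f)) hmid
        (by positivity)
    have hexp : ((2:ℝ)^p * E f) ^ ((2:ℝ)/p) = 4 * E f ^ ((2:ℝ)/p) := by
      rw [Real.mul_rpow (Real.rpow_nonneg (by norm_num) _) (hE0 f),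
        ← Real.rpow_mul (by norm_num : (0:ℝ) ≤ 2),
        show p*((2:ℝ)/p) = 2 by rw [mul_comm, div_mul_cancel₀ _ hp0.ne'],
        aux_rpow_two (by norm_num : (0:ℝ) ≤ 2)]
      norm_num
    rw [hexp] at hmono
    have hfour : (2:ℝ)^((2:ℝ)/p-2) * 4 = 2^((2:ℝ)/p) := by
      rw [Real.rpow_sub (by norm_num : (0:ℝ) < 2), aux_rpow_two (by norm_num : (0:ℝ) ≤ 2)]
      norm_num
    have hK : (0:ℝ) ≤ 2^((2:ℝ)/p-2) := Real.rpow_nonneg (by norm_num) _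
    have hmul := mul_le_mul_of_nonneg_left hmono hK
    have hBA : 2^((2:ℝ)/p) * E f ^ ((2:ℝ)/p) = 2^((2:ℝ)/p-2) * (4 * E f ^ ((2:ℝ)/p)) := by
      rw [← hfour]; ring
    have hfinal : csq * E (f-g) ^ ((2:ℝ)/p) ≤ 0 := by linarith [hsq, hmul, hBA.le, hBA.ge]
    by_contra hcon
    push_neg at hcon
    have := Real.rpow_pos_of_pos hcon ((2:ℝ)/p)
    nlinarith [hfinal, hcsqpos, this]

private lemma aux_exists {V : Type*} [Fintype V] {p : ℝ} (hp : 1 < p)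
    (E : (V → ℝ) → ℝ) (hE0 : ∀ u, 0 ≤ E u)
    (hhom : ∀ (a : ℝ) (u : V → ℝ), E (a • u) = |a| ^ p * E u)
    (htri : ∀ u v : V → ℝ, E (u + v) ^ (1 / p) ≤ E u ^ (1 / p) + E v ^ (1 / p))
    (hnull : ∀ u : V → ℝ, E u = 0 ↔ ∃ c : ℝ, u = fun _ => c) :
    ∀ B : Set V, B.Nonempty → ∀ u : V → ℝ,
      ∃ h : V → ℝ, (∀ x ∈ B, h x = u x) ∧
        ∀ w : V → ℝ, (∀ x ∈ B, w x = u x) → E h ≤ E w := by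
  classical
  have hp0 : (0:ℝ) < p := by linarith
  have hip0 : (0:ℝ) < 1/p := by positivity
  have hEcollapse : ∀ w : V → ℝ, (E w ^ (1/p)) ^ p = E w := fun w => by
    rw [← Real.rpow_mul (hE0 w), one_div, inv_mul_cancel₀ hp0.ne', Real.rpow_one]
  have hNnn : ∀ w : V → ℝ, 0 ≤ E w ^ (1/p) := fun w => Real.rpow_nonneg (hE0 w) _
  have hconst : ∀ c : ℝ, E (fun _ => c) = 0 := fun c => (hnull _).mpr ⟨c, rfl⟩
  have hE00 : E 0 = 0 := hconst 0
  have hNconst : ∀ c : ℝ, E (fun _ => c) ^ (1/p) = 0 := fun c => by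
    rw [hconst c, Real.zero_rpow hip0.ne']
  have hNsmul : ∀ (a : ℝ) (w : V → ℝ), E (a • w) ^ (1/p) = |a| * E w ^ (1/p) := by
    intro a w
    rw [hhom, Real.mul_rpow (Real.rpow_nonneg (abs_nonneg a) _) (hE0 w),
      ← Real.rpow_mul (abs_nonneg a), mul_one_div, div_self hp0.ne', Real.rpow_one]
  have hEconst_add : ∀ (w : V → ℝ) (c : ℝ), E (w + fun _ => c) = E w := by
    intro w c
    have h1 : E (w + fun _ => c) ^ (1/p) ≤ E w ^ (1/p) := by
      have := htri w (fun _ => c)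
      rwa [hNconst c, add_zero] at this
    have h2 : E w ^ (1/p) ≤ E (w + fun _ => c) ^ (1/p) := by
      have h := htri (w + fun _ => c) (fun _ => -c)
      have he : (w + fun _ => c) + (fun _ => -c) = w := by funext x; simp
      rwa [he, hNconst (-c), add_zero] at h
    have hN : E (w + fun _ => c) ^ (1/p) = E w ^ (1/p) := le_antisymm h1 h2
    rw [← hEcollapse (w + fun _ => c), ← hEcollapse w, hN]
  -- continuity of N := E ^ (1/p) and of E
  have hNsum : ∀ (s : Finset V) (f : V → (V → ℝ)),
      E (∑ i ∈ s, f i) ^ (1/p) ≤ ∑ i ∈ s, E (f i) ^ (1/p) := by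
    intro s f
    induction s using Finset.cons_induction with
    | empty => rw [Finset.sum_empty, Finset.sum_empty, hE00, Real.zero_rpow hip0.ne']
    | cons a s ha ih =>
      rw [Finset.sum_cons, Finset.sum_cons]
      exact (htri _ _).trans (by linarith)
  obtain ⟨C, hCdef⟩ : ∃ C : ℝ, C = ∑ i : V, E (fun j => if i = j then (1:ℝ) else 0) ^ (1/p) :=
    ⟨_, rfl⟩
  have hC0 : 0 ≤ C := hCdef ▸ Finset.sum_nonneg fun i _ => hNnn _
  have hCbound : ∀ w : V → ℝ, E w ^ (1/p) ≤ C * ‖w‖ := by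
    intro w
    calc E w ^ (1/p) = E (∑ i : V, w i • fun j => if i = j then (1:ℝ) else 0) ^ (1/p) := by
          rw [← pi_eq_sum_univ w]
      _ ≤ ∑ i : V, E (w i • fun j => if i = j then (1:ℝ) else 0) ^ (1/p) := hNsum _ _
      _ ≤ ∑ i : V, ‖w‖ * E (fun j => if i = j then (1:ℝ) else 0) ^ (1/p) := by
          apply Finset.sum_le_sum
          intro i _
          rw [hNsmul]
          apply mul_le_mul_of_nonneg_right _ (hNnn _)
          rw [← Real.norm_eq_abs]
          exact norm_le_pi_norm w i
      _ = C * ‖w‖ := by rw [hCdef, ← Finset.mul_sum, mul_comm]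
  have hNcont : Continuous fun w : V → ℝ => E w ^ (1/p) := by
    apply (LipschitzWith.of_dist_le_mul (K := C.toNNReal)
      (f := fun w : V → ℝ => E w ^ (1/p)) ?_).continuous
    intro w v
    rw [Real.dist_eq, Real.coe_toNNReal C hC0, dist_eq_norm]
    have hwv : E w ^ (1/p) - E v ^ (1/p) ≤ E (w - v) ^ (1/p) := by
      have h := htri v (w - v)
      rw [show v + (w - v) = w by abel] at h
      linarith
    have hvw : E v ^ (1/p) - E w ^ (1/p) ≤ E (v - w) ^ (1/p) := by
      have h := htri w (v - w)
      rw [show w + (v - w) = v by abel] at h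
      linarith
    have hn : E (v - w) ^ (1/p) ≤ C * ‖w - v‖ := by
      have := hCbound (v - w)
      rwa [show ‖v - w‖ = ‖w - v‖ from norm_sub_rev v w] at this
    rw [abs_le]
    constructor
    · have := hCbound (w - v); linarith
    · have := hCbound (w - v); linarith
  have hEcont : Continuous E := by
    have h2 : Continuous fun w : V → ℝ => (E w ^ (1/p)) ^ p :=
      hNcont.rpow_const fun w => Or.inr hp0.le
    have heq : E = fun w : V → ℝ => (E w ^ (1/p)) ^ p := funext fun w => (hEcollapse w).symm
    rw [heq]
    exact h2
  intro B hB u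
  obtain ⟨x0, hx0⟩ := hB
  haveI : Nonempty V := ⟨x0⟩
  -- coercivity
  obtain ⟨μ, hμpos, hμ⟩ : ∃ μ : ℝ, 0 < μ ∧ ∀ w : V → ℝ,
      μ * ‖w‖ ≤ E w ^ (1/p) + |w x0| := by
    have hGcont : Continuous fun w : V → ℝ => E w ^ (1/p) + |w x0| :=
      hNcont.add ((continuous_apply x0).abs)
    have hsne : (Metric.sphere (0 : V → ℝ) 1).Nonempty :=
      NormedSpace.sphere_nonempty.mpr zero_le_one
    obtain ⟨w₀, hw₀S, hw₀min⟩ :=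
      (isCompact_sphere (0 : V → ℝ) 1).exists_isMinOn hsne hGcont.continuousOn
    have hw₀norm : ‖w₀‖ = 1 := by simpa using hw₀S
    refine ⟨E w₀ ^ (1/p) + |w₀ x0|, ?_, ?_⟩
    · rcases lt_or_eq_of_le (add_nonneg (hNnn w₀) (abs_nonneg _)) with h | h
      · exact h
      · exfalso
        have hN0 : E w₀ ^ (1/p) = 0 := by
          have := hNnn w₀
          have := abs_nonneg (w₀ x0)
          linarith
        have hx00 : w₀ x0 = 0 := by
          have := hNnn w₀
          have := abs_nonneg (w₀ x0)
          have : |w₀ x0| = 0 := by linarith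
          exact abs_eq_zero.mp this
        have hE0' : E w₀ = 0 := by
          rw [← hEcollapse w₀, hN0, Real.zero_rpow hp0.ne']
        obtain ⟨c, hc⟩ := (hnull w₀).mp hE0'
        have : c = 0 := by rw [hc] at hx00; exact hx00
        rw [this] at hc
        have : w₀ = 0 := hc
        rw [this] at hw₀norm
        simp at hw₀norm
    · intro w
      rcases eq_or_ne w 0 with rfl | hw
      · rw [norm_zero, mul_zero]
        exact add_nonneg (hNnn 0) (abs_nonneg _)
      · have hwnorm : (0:ℝ) < ‖w‖ := norm_pos_iff.mpr hw
        have hmem : (‖w‖⁻¹ • w) ∈ Metric.sphere (0 : V → ℝ) 1 := by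
          simp [norm_smul, abs_of_pos (inv_pos.mpr hwnorm), inv_mul_cancel₀ hwnorm.ne']
        have hmin := isMinOn_iff.mp hw₀min _ hmem
        have hsc : E (‖w‖⁻¹ • w) ^ (1/p) + |(‖w‖⁻¹ • w) x0|
            = ‖w‖⁻¹ * (E w ^ (1/p) + |w x0|) := by
          rw [hNsmul, abs_of_pos (inv_pos.mpr hwnorm)]
          have : |(‖w‖⁻¹ • w) x0| = ‖w‖⁻¹ * |w x0| := by
            simp [abs_mul, abs_of_pos (inv_pos.mpr hwnorm)]
          rw [this]
          ring
        rw [hsc] at hmin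
        have hfin := mul_le_mul_of_nonneg_left hmin hwnorm.le
        rw [← mul_assoc, mul_inv_cancel₀ hwnorm.ne', one_mul] at hfin
        linarith [hfin]
  -- minimize over the closed bounded set K
  obtain ⟨K, hKdef⟩ : ∃ K : Set (V → ℝ),
      K = {w : V → ℝ | (∀ x ∈ B, w x = u x) ∧ E w ≤ E u} := ⟨_, rfl⟩
  have hKne : K.Nonempty := ⟨u, by rw [hKdef]; exact ⟨fun x _ => rfl, le_rfl⟩⟩
  have hKclosed : IsClosed K := by
    rw [hKdef]
    have : {w : V → ℝ | (∀ x ∈ B, w x = u x) ∧ E w ≤ E u}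
        = (⋂ x ∈ B, {w : V → ℝ | w x = u x}) ∩ E ⁻¹' (Set.Iic (E u)) := by
      ext w; simp
    rw [this]
    apply IsClosed.inter
    · exact isClosed_biInter fun x _ => isClosed_eq (continuous_apply x) continuous_const
    · exact (isClosed_Iic).preimage hEcont
  have hKbdd : Bornology.IsBounded K := by
    apply (Metric.isBounded_closedBall
      (x := (0 : V → ℝ)) (r := μ⁻¹ * E u ^ (1/p) + ‖(fun _ => u x0 : V → ℝ)‖)).subset
    intro w hw
    rw [hKdef] at hw
    obtain ⟨hwB, hwE⟩ := hw
    rw [Metric.mem_closedBall, dist_zero_right]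
    have hNle : E w ^ (1/p) ≤ E u ^ (1/p) := Real.rpow_le_rpow (hE0 w) hwE hip0.le
    have hsub : E (w - fun _ => u x0) = E w := by
      have := hEconst_add (w - fun _ => u x0) (u x0)
      rw [show ((w - fun _ => u x0) + fun _ => u x0) = w by funext x; simp] at this
      exact this.symm
    have hx0eq : (w - fun _ => u x0 : V → ℝ) x0 = 0 := by
      rw [Pi.sub_apply, hwB x0 hx0]
      simp
    have hμw := hμ (w - fun _ => u x0)
    rw [hsub, hx0eq, abs_zero, add_zero] at hμw
    have h1 : ‖w - fun _ => u x0‖ ≤ μ⁻¹ * E u ^ (1/p) := by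
      rw [← mul_le_mul_iff_right₀ hμpos, ← mul_assoc, mul_inv_cancel₀ hμpos.ne', one_mul]
      exact hμw.trans hNle
    calc ‖w‖ = ‖(w - fun _ => u x0) + (fun _ => u x0 : V → ℝ)‖ := by
          congr 1; funext x; simp
      _ ≤ ‖w - fun _ => u x0‖ + ‖(fun _ => u x0 : V → ℝ)‖ := norm_add_le _ _
      _ ≤ μ⁻¹ * E u ^ (1/p) + ‖(fun _ => u x0 : V → ℝ)‖ := by linarith
  obtain ⟨h, hhK, hhmin⟩ := (Metric.isCompact_of_isClosed_isBounded hKclosed hKbdd).exists_isMinOn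
    hKne hEcont.continuousOn
  rw [hKdef] at hhK
  refine ⟨h, hhK.1, ?_⟩
  intro w hwB
  rcases le_or_gt (E w) (E u) with hcase | hcase
  · exact isMinOn_iff.mp hhmin w (by rw [hKdef]; exact ⟨hwB, hcase⟩)
  · exact (isMinOn_iff.mp hhmin u (by rw [hKdef]; exact ⟨fun x _ => rfl, le_rfl⟩)).trans hcase.le


/-- For a `p`-resistance form `E` on a finite set `V`: existence and uniqueness of the
`E`-minimizing (harmonic) extension of boundary data on a nonempty `B ⊆ V`; the weak
comparison principle (`u ≤ v` on `B` implies `h_B[u] ≤ h_B[v]` on `V`); and the maximum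
principle `min_B u ≤ h_B[u] ≤ max_B u`. -/
theorem stmt_13 {V : Type*} [Fintype V] (p : ℝ) (hp : 1 < p)
    (E : (V → ℝ) → ℝ)
    (hE0 : ∀ u, 0 ≤ E u)
    (hhom : ∀ (a : ℝ) (u : V → ℝ), E (a • u) = |a| ^ p * E u)
    (htri : ∀ u v : V → ℝ, E (u + v) ^ (1 / p) ≤ E u ^ (1 / p) + E v ^ (1 / p))
    (hnull : ∀ u : V → ℝ, E u = 0 ↔ ∃ c : ℝ, u = fun _ => c)
    (hGC : ∀ (n₁ n₂ : ℕ) (q₁ q₂ : ℝ), 0 < q₁ → q₁ ≤ p → p ≤ q₂ →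
      ∀ T : (Fin n₁ → ℝ) → (Fin n₂ → ℝ), T 0 = 0 →
        (∀ x y : Fin n₁ → ℝ,
          (∑ l : Fin n₂, |T x l - T y l| ^ q₂) ^ (1 / q₂)
            ≤ (∑ k : Fin n₁, |x k - y k| ^ q₁) ^ (1 / q₁)) →
        ∀ u : Fin n₁ → V → ℝ,
          (∑ l : Fin n₂, E (fun z => T (fun k => u k z) l) ^ (q₂ / p)) ^ (1 / q₂)
            ≤ (∑ k : Fin n₁, E (u k) ^ (q₁ / p)) ^ (1 / q₁))
    (hGCtop : ∀ (n₁ n₂ : ℕ) (q₁ : ℝ), 0 < q₁ → q₁ ≤ p →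
      ∀ T : (Fin n₁ → ℝ) → (Fin n₂ → ℝ), T 0 = 0 →
        (∀ (x y : Fin n₁ → ℝ) (l : Fin n₂),
          |T x l - T y l| ≤ (∑ k : Fin n₁, |x k - y k| ^ q₁) ^ (1 / q₁)) →
        ∀ (u : Fin n₁ → V → ℝ) (l : Fin n₂),
          E (fun z => T (fun k => u k z) l) ^ (1 / p)
            ≤ (∑ k : Fin n₁, E (u k) ^ (q₁ / p)) ^ (1 / q₁)) :
    (∀ B : Set V, B.Nonempty → ∀ u : V → ℝ,
        ∃! h : V → ℝ, (∀ x ∈ B, h x = u x) ∧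
          ∀ w : V → ℝ, (∀ x ∈ B, w x = u x) → E h ≤ E w) ∧
    (∀ B : Set V, B.Nonempty → ∀ u v h k : V → ℝ,
        (∀ x ∈ B, u x ≤ v x) →
        ((∀ x ∈ B, h x = u x) ∧ ∀ w : V → ℝ, (∀ x ∈ B, w x = u x) → E h ≤ E w) →
        ((∀ x ∈ B, k x = v x) ∧ ∀ w : V → ℝ, (∀ x ∈ B, w x = v x) → E k ≤ E w) →
        ∀ x : V, h x ≤ k x) ∧
    (∀ B : Set V, B.Nonempty → ∀ u h : V → ℝ,
        ((∀ x ∈ B, h x = u x) ∧ ∀ w : V → ℝ, (∀ x ∈ B, w x = u x) → E h ≤ E w) →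
        ∀ x : V, sInf (u '' B) ≤ h x ∧ h x ≤ sSup (u '' B)) := by
  have hp0 : (0:ℝ) < p := by linarith
  have hEconst : ∀ c : ℝ, E (fun _ => c) = 0 := fun c => (hnull _).mpr ⟨c, rfl⟩
  have part1 : ∀ B : Set V, B.Nonempty → ∀ u : V → ℝ,
      ∃! h : V → ℝ, (∀ x ∈ B, h x = u x) ∧
        ∀ w : V → ℝ, (∀ x ∈ B, w x = u x) → E h ≤ E w := by
    intro B hB u
    obtain ⟨h, hhB, hhmin⟩ := aux_exists hp E hE0 hhom htri hnull B hB u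
    refine ⟨h, ⟨hhB, hhmin⟩, ?_⟩
    rintro k ⟨hkB, hkmin⟩
    have hEkh : E k = E h := le_antisymm (hkmin h hhB) (hhmin k hkB)
    have hmidB : ∀ x ∈ B, ((1/2 : ℝ) • (k + h)) x = u x := by
      intro x hx
      show (1/2 : ℝ) * (k x + h x) = u x
      rw [hkB x hx, hhB x hx]
      ring
    have hEmid : E k ≤ E ((1/2 : ℝ) • (k + h)) := hkmin _ hmidB
    have hsum : k + h = (2:ℝ) • ((1/2 : ℝ) • (k + h)) := by
      rw [smul_smul, show (2:ℝ)*(1/2) = 1 by norm_num, one_smul]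
    have h2p : 2 ^ p * E k ≤ E (k + h) := by
      rw [hsum, hhom, abs_two]
      exact mul_le_mul_of_nonneg_left hEmid (Real.rpow_nonneg (by norm_num) p)
    have hdiff := aux_key_s13 hp E hE0 hhom hGC k h hEkh h2p
    have hEdiff : E (k - h) = 0 := le_antisymm hdiff (hE0 _)
    obtain ⟨c, hc⟩ := (hnull _).mp hEdiff
    obtain ⟨x0, hx0⟩ := hB
    have hc0 : c = 0 := by
      have hcx := congrFun hc x0
      rw [Pi.sub_apply, hkB x0 hx0, hhB x0 hx0, sub_self] at hcx
      exact hcx.symm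
    have hkh : k - h = 0 := by
      rw [hc, hc0]
      rfl
    exact sub_eq_zero.mp hkh
  have part2 : ∀ B : Set V, B.Nonempty → ∀ u v h k : V → ℝ,
      (∀ x ∈ B, u x ≤ v x) →
      ((∀ x ∈ B, h x = u x) ∧ ∀ w : V → ℝ, (∀ x ∈ B, w x = u x) → E h ≤ E w) →
      ((∀ x ∈ B, k x = v x) ∧ ∀ w : V → ℝ, (∀ x ∈ B, w x = v x) → E k ≤ E w) →
      ∀ x : V, h x ≤ k x := by
    rintro B hB u v h k huv ⟨hhB, hhmin⟩ ⟨hkB, hkmin⟩ x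
    have hminB : ∀ y ∈ B, (fun z => min (h z) (k z)) y = u y := by
      intro y hy
      show min (h y) (k y) = u y
      rw [hhB y hy, hkB y hy]
      exact min_eq_left (huv y hy)
    have hmaxB : ∀ y ∈ B, (fun z => max (h z) (k z)) y = v y := by
      intro y hy
      show max (h y) (k y) = v y
      rw [hhB y hy, hkB y hy]
      exact max_eq_right (huv y hy)
    have hsub := aux_subadd hp E hE0 hGC h k
    have h1 : E h ≤ E (fun z => min (h z) (k z)) := hhmin _ hminB
    have h2 : E k ≤ E (fun z => max (h z) (k z)) := hkmin _ hmaxB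
    have hminmin : ∀ w : V → ℝ, (∀ y ∈ B, w y = u y) → E (fun z => min (h z) (k z)) ≤ E w := by
      intro w hw
      exact (by linarith : E (fun z => min (h z) (k z)) ≤ E h).trans (hhmin w hw)
    obtain ⟨h₀, hh₀, huniq⟩ := part1 B hB u
    have e1 : (fun z => min (h z) (k z)) = h₀ := huniq _ ⟨hminB, hminmin⟩
    have e2 : h = h₀ := huniq _ ⟨hhB, hhmin⟩
    have e3 : min (h x) (k x) = h x := by
      have := congrFun (e1.trans e2.symm) x
      exact this
    exact min_eq_left_iff.mp e3
  refine ⟨part1, part2, ?_⟩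
  intro B hB u h hh x
  have hfin : (u '' B).Finite := B.toFinite.image u
  constructor
  · apply part2 B hB (fun _ => sInf (u '' B)) u (fun _ => sInf (u '' B)) h ?_ ?_ hh x
    · intro y hy
      exact csInf_le hfin.bddBelow ⟨y, hy, rfl⟩
    · refine ⟨fun y _ => rfl, fun w _ => ?_⟩
      rw [hEconst]
      exact hE0 w
  · apply part2 B hB u (fun _ => sSup (u '' B)) h (fun _ => sSup (u '' B)) ?_ hh ?_ x
    · intro y hy
      exact le_csSup hfin.bddAbove ⟨y, hy, rfl⟩
    · refine ⟨fun y _ => rfl, fun w _ => ?_⟩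
      rw [hEconst]
      exact hE0 w
end
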